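/- arXiv:1608.06808 — 15 statements merged into one kernel-verified Lean document; each statement's English description precedes it below -/
import Mathlib

section
/- Let f:[0,R)→ℝ be continuously differentiable with f(0)=0, f'(0)=-1, and f' strictly increasing, and let ν = sup{t ∈ [0,R) : f'(t) < 0}. Define the Newton iteration map n_f(t) = t - f(t)/f'(t) on [0,ν). Then n_f(t) < 0 for all t ∈ (0,ν). -/
open Set

theorem stmt1 {R : ℝ} (hR : 0 < R) (f f' : ℝ → ℝ)
    (hderiv : ∀ t ∈ Ico (0:ℝ) R, HasDerivWithinAt f (f' t) (Ico 0 R) t)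
    (hcont : ContinuousOn f' (Ico 0 R))
    (hf0 : f 0 = 0) (hf'0 : f' 0 = -1)
    (hmono : StrictMonoOn f' (Ico 0 R))
    (ν : ℝ) (hν : ν = sSup {t | t ∈ Ico 0 R ∧ f' t < 0}) :
    ∀ t ∈ Ioo 0 ν, t - f t / f' t < 0 := by
  intro t ht
  obtain ⟨ht0, htν⟩ := ht
  have hSne : ({t | t ∈ Ico 0 R ∧ f' t < 0}).Nonempty :=
    ⟨0, ⟨le_refl 0, hR⟩, by rw [hf'0]; norm_num⟩
  -- find s ∈ S with t < s
  obtain ⟨s, ⟨hsmem, hs'⟩, hts⟩ := exists_lt_of_lt_csSup hSne (hν ▸ htν)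
  have htR : t < R := lt_of_lt_of_le hts hsmem.2.le
  have htmem : t ∈ Ico (0:ℝ) R := ⟨ht0.le, htR⟩
  have hf't : f' t < 0 := lt_trans (hmono htmem hsmem hts) hs'
  -- mean value theorem on [0, t]
  have hfc : ContinuousOn f (Ico 0 R) := fun x hx => (hderiv x hx).continuousWithinAt
  have hsub : Icc (0:ℝ) t ⊆ Ico 0 R := Icc_subset_Ico_right htR |>.trans
    (by intro x hx; exact ⟨hx.1, hx.2⟩)
  obtain ⟨c, hc, hceq⟩ := exists_hasDerivAt_eq_slope f f' ht0
    (hfc.mono (Icc_subset_Ico_right htR))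
    (fun x hx => by
      have hxmem : x ∈ Ico (0:ℝ) R := ⟨hx.1.le, hx.2.trans htR⟩
      exact (hderiv x hxmem).hasDerivAt (Ico_mem_nhds hx.1 (hx.2.trans htR)))
  · have hcmem : c ∈ Ico (0:ℝ) R := ⟨hc.1.le, hc.2.trans htR⟩
    have hlt : f' c < f' t := hmono hcmem htmem hc.2
    have hslope : f' c = f t / t := by rw [hceq, hf0]; ring_nf
    have hkey : f t < t * f' t := by
      have := hslope ▸ hlt
      calc f t = (f t / t) * t := by field_simp
        _ < f' t * t := by exact mul_lt_mul_of_pos_right this ht0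
        _ = t * f' t := mul_comm _ _
    have hnum : 0 < t * f' t - f t := by linarith
    have hne : f' t ≠ 0 := ne_of_lt hf't
    have : t - f t / f' t = (t * f' t - f t) / f' t := by
      field_simp
    rw [this]
    exact div_neg_of_pos_of_neg hnum hf't
end

section
/- Let f:[0,R)→ℝ be continuously differentiable with f(0)=0, f'(0)=-1, f' strictly increasing, ν = sup{t∈[0,R): f'(t)<0}, and n_f(t)=t-f(t)/f'(t). Fix λ ∈ [0,1). Then the scalar ρ = sup{δ ∈ (0,ν) : (1+λ)|n_f(t)|/t + λ < 1 for all t ∈ (0,δ)} is positive, and for every t ∈ (0,ρ) one has 0 < (1+λ)|n_f(t)| + tλ < t. -/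
open Set Filter

/-- For `t ∈ (0, R)` and `f'` strictly monotone with derivative data, `f t < t * f' t`. -/
lemma aux_ft_lt {R : ℝ} (hR : 0 < R) (f f' : ℝ → ℝ)
    (hderiv : ∀ t ∈ Ico (0:ℝ) R, HasDerivWithinAt f (f' t) (Ico 0 R) t)
    (hf0 : f 0 = 0)
    (hmono : StrictMonoOn f' (Ico 0 R))
    {t : ℝ} (ht0 : 0 < t) (htR : t < R) :
    f t < t * f' t := by
  set g : ℝ → ℝ := fun s => f s - s * f' t with hg
  have hsub : Icc (0:ℝ) t ⊆ Ico 0 R := fun x hx => ⟨hx.1, lt_of_le_of_lt hx.2 htR⟩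
  have hfc : ContinuousOn f (Ico 0 R) := fun x hx =>
    (hderiv x hx).continuousWithinAt
  have hgc : ContinuousOn g (Icc 0 t) := by
    apply ContinuousOn.sub (hfc.mono hsub)
    exact (continuous_mul_right (f' t)).continuousOn
  have hanti : StrictAntiOn g (Icc 0 t) := by
    apply strictAntiOn_of_deriv_neg (convex_Icc 0 t) hgc
    intro x hx
    rw [interior_Icc] at hx
    have hxIco : x ∈ Ico (0:ℝ) R := ⟨hx.1.le, lt_trans hx.2 htR⟩
    have hfx : HasDerivAt f (f' x) x :=
      (hderiv x hxIco).hasDerivAt (Ico_mem_nhds hx.1 hxIco.2)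
    have hgx : HasDerivAt g (f' x - 1 * f' t) x :=
      hfx.sub ((hasDerivAt_id x).mul_const (f' t))
    rw [hgx.deriv]
    have : f' x < f' t := hmono hxIco ⟨ht0.le, htR⟩ hx.2
    linarith
  have := hanti (left_mem_Icc.mpr ht0.le) (right_mem_Icc.mpr ht0.le) ht0
  simp only [hg, hf0] at this
  linarith

theorem stmt3 {R : ℝ} (hR : 0 < R) (f f' : ℝ → ℝ)
    (hderiv : ∀ t ∈ Ico (0:ℝ) R, HasDerivWithinAt f (f' t) (Ico 0 R) t)
    (hcont : ContinuousOn f' (Ico 0 R))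
    (hf0 : f 0 = 0) (hf'0 : f' 0 = -1)
    (hmono : StrictMonoOn f' (Ico 0 R))
    (ν : ℝ) (hν : ν = sSup {t | t ∈ Ico 0 R ∧ f' t < 0})
    (lam : ℝ) (hlam : lam ∈ Ico (0:ℝ) 1)
    (ρ : ℝ)
    (hρ : ρ = sSup {δ | δ ∈ Ioo 0 ν ∧
      ∀ t ∈ Ioo 0 δ, (1 + lam) * |t - f t / f' t| / t + lam < 1}) :
    0 < ρ ∧ ∀ t ∈ Ioo 0 ρ,
      0 < (1 + lam) * |t - f t / f' t| + t * lam ∧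
      (1 + lam) * |t - f t / f' t| + t * lam < t := by
  obtain ⟨hlam0, hlam1⟩ := hlam
  set S : Set ℝ := {t | t ∈ Ico 0 R ∧ f' t < 0} with hSdef
  have hSne : S.Nonempty := ⟨0, ⟨le_refl 0, hR⟩, by rw [hf'0]; norm_num⟩
  have hSbdd : BddAbove S := ⟨R, fun x hx => hx.1.2.le⟩
  have hνR : ν ≤ R := by
    rw [hν]; exact csSup_le hSne fun x hx => hx.1.2.le
  -- points below ν are in (0, R) with negative derivative
  have hkey : ∀ t : ℝ, 0 ≤ t → t < ν → t < R ∧ f' t < 0 := by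
    intro t ht htν
    rw [hν] at htν
    obtain ⟨s, hs, hts⟩ := exists_lt_of_lt_csSup hSne htν
    have htR : t < R := lt_trans hts hs.1.2
    refine ⟨htR, ?_⟩
    rcases eq_or_lt_of_le ht with h | h
    · rw [← h, hf'0]; norm_num
    · exact lt_trans (hmono ⟨ht, htR⟩ hs.1 hts) hs.2
  -- f' is continuous at 0 with value -1
  have hcont0 : Tendsto f' (nhdsWithin 0 (Ico 0 R)) (nhds (-1)) := by
    have := (hcont 0 ⟨le_refl 0, hR⟩)
    rwa [ContinuousWithinAt, hf'0] at this
  -- ν is positive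
  have hνpos : 0 < ν := by
    obtain ⟨δ₀, hδ₀, h0⟩ := Metric.tendsto_nhdsWithin_nhds.mp hcont0 (1/2) (by norm_num)
    set p := min (δ₀/2) (R/2) with hp
    have hp0 : 0 < p := lt_min (by linarith) (by linarith)
    have hpR : p < R := lt_of_le_of_lt (min_le_right _ _) (by linarith)
    have hpd : dist p 0 < δ₀ := by
      rw [Real.dist_eq, sub_zero, abs_of_pos hp0]
      exact lt_of_le_of_lt (min_le_left _ _) (by linarith)
    have := h0 ⟨hp0.le, hpR⟩ hpd
    rw [Real.dist_eq] at this
    have hfp : f' p < 0 := by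
      rcases abs_lt.mp this with ⟨h1, h2⟩; linarith
    have : p ∈ S := ⟨⟨hp0.le, hpR⟩, hfp⟩
    calc (0:ℝ) < p := hp0
      _ ≤ ν := hν ▸ le_csSup hSbdd this
  set T : Set ℝ := {δ | δ ∈ Ioo 0 ν ∧
      ∀ t ∈ Ioo 0 δ, (1 + lam) * |t - f t / f' t| / t + lam < 1} with hTdef
  have hTbdd : BddAbove T := ⟨ν, fun x hx => hx.1.2.le⟩
  -- the key estimate: find δ ∈ T
  set ε : ℝ := (1 - lam) / 8 with hε
  have hεpos : 0 < ε := by rw [hε]; linarith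
  have hεsmall : ε ≤ 1/8 := by rw [hε]; linarith
  obtain ⟨δ₀, hδ₀, h0⟩ := Metric.tendsto_nhdsWithin_nhds.mp hcont0 ε hεpos
  have hslope : Tendsto (slope f 0) (nhdsWithin 0 (Ico 0 R \ {0})) (nhds (-1)) := by
    have := hasDerivWithinAt_iff_tendsto_slope.mp (hderiv 0 ⟨le_refl 0, hR⟩)
    rwa [hf'0] at this
  obtain ⟨δ₁, hδ₁, h1⟩ := Metric.tendsto_nhdsWithin_nhds.mp hslope ε hεpos
  set δ : ℝ := min (min δ₀ δ₁) ν / 2 with hδ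
  have hδpos : 0 < δ := by
    apply div_pos _ (by norm_num)
    exact lt_min (lt_min hδ₀ hδ₁) hνpos
  have hδν : δ < ν := by
    have : min (min δ₀ δ₁) ν ≤ ν := min_le_right _ _
    rw [hδ]; linarith
  have hδmem : δ ∈ T := by
    refine ⟨⟨hδpos, hδν⟩, ?_⟩
    intro t ⟨ht0, htδ⟩
    have htν : t < ν := lt_trans htδ hδν
    obtain ⟨htR, htf'⟩ := hkey t ht0.le htν
    have htδ₀ : t < δ₀ := by
      have : min (min δ₀ δ₁) ν ≤ min δ₀ δ₁ := min_le_left _ _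
      have h2 : min δ₀ δ₁ ≤ δ₀ := min_le_left _ _
      rw [hδ] at htδ; linarith [lt_of_lt_of_le htδ (by linarith : min (min δ₀ δ₁) ν / 2 ≤ δ₀)]
    have htδ₁ : t < δ₁ := by
      have : min (min δ₀ δ₁) ν ≤ min δ₀ δ₁ := min_le_left _ _
      have h2 : min δ₀ δ₁ ≤ δ₁ := min_le_right _ _
      rw [hδ] at htδ; linarith
    have htd : dist t 0 < δ₀ := by rw [Real.dist_eq, sub_zero, abs_of_pos ht0]; exact htδ₀
    have htd' : dist t 0 < δ₁ := by rw [Real.dist_eq, sub_zero, abs_of_pos ht0]; exact htδ₁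
    have hu : |f' t + 1| < ε := by
      have := h0 ⟨ht0.le, htR⟩ htd
      rwa [Real.dist_eq, sub_neg_eq_add] at this
    have hv : |f t / t + 1| < ε := by
      have := h1 ⟨⟨ht0.le, htR⟩, ne_of_gt ht0⟩ htd'
      rw [Real.dist_eq] at this
      simp only [slope_def_field, hf0, sub_zero, sub_neg_eq_add] at this
      exact this
    -- main estimate
    have hf'ne : f' t ≠ 0 := ne_of_lt htf'
    have habs : |t * f' t - f t| < 2 * ε * t := by
      have hvt : |f t + t| < ε * t := by
        have heq : f t + t = (f t / t + 1) * t := by field_simp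
        rw [heq, abs_mul, abs_of_pos ht0]
        exact mul_lt_mul_of_pos_right hv ht0
      have hut : |t * (f' t + 1)| < ε * t := by
        rw [abs_mul, abs_of_pos ht0, mul_comm t]
        exact mul_lt_mul_of_pos_right hu ht0
      have heq : t * f' t - f t = t * (f' t + 1) - (f t + t) := by ring
      calc |t * f' t - f t| = |t * (f' t + 1) - (f t + t)| := by rw [heq]
        _ ≤ |t * (f' t + 1)| + |f t + t| := abs_sub _ _
        _ < ε * t + ε * t := add_lt_add hut hvt
        _ = 2 * ε * t := by ring
    have hule : 1 - ε < -(f' t) := by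
      rcases abs_lt.mp hu with ⟨ha, hb⟩; linarith
    have hAeq : |t - f t / f' t| = |t * f' t - f t| / (-(f' t)) := by
      have : t - f t / f' t = (t * f' t - f t) / f' t := by field_simp
      rw [this, abs_div, abs_of_neg htf']
    rw [hAeq]
    have hpos : (0:ℝ) < -f' t * t := mul_pos (by linarith) ht0
    rw [show (1 + lam) * (|t * f' t - f t| / -f' t) / t =
        ((1 + lam) * |t * f' t - f t|) / (-f' t * t) by ring]
    rw [div_add' _ _ _ (ne_of_gt hpos), div_lt_one hpos]
    have hB := abs_nonneg (t * f' t - f t)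
    nlinarith [mul_lt_mul_of_pos_left habs (by linarith : (0:ℝ) < 1 + lam),
      mul_pos ht0 (by linarith : (0:ℝ) < 1 - ε)]
  have hρpos : 0 < ρ := by
    calc (0:ℝ) < δ := hδpos
      _ ≤ ρ := hρ ▸ le_csSup hTbdd hδmem
  refine ⟨hρpos, ?_⟩
  intro t ⟨ht0, htρ⟩
  rw [hρ] at htρ
  obtain ⟨d, hd, htd⟩ := exists_lt_of_lt_csSup ⟨δ, hδmem⟩ htρ
  have hineq := hd.2 t ⟨ht0, htd⟩
  have htν : t < ν := lt_trans htd hd.1.2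
  obtain ⟨htR, htf'⟩ := hkey t ht0.le htν
  -- second inequality
  have h2 : (1 + lam) * |t - f t / f' t| + t * lam < t := by
    have := (div_lt_iff₀ ht0).mp (by linarith : (1 + lam) * |t - f t / f' t| / t < 1 - lam)
    nlinarith
  -- first: n_f t ≠ 0
  have hflt : f t < t * f' t := aux_ft_lt hR f f' hderiv hf0 hmono ht0 htR
  have hne : t - f t / f' t < 0 := by
    have hf'ne : f' t ≠ 0 := ne_of_lt htf'
    have h : t - f t / f' t = (t * f' t - f t) / f' t := by field_simp
    rw [h]
    apply div_neg_of_pos_of_neg (by linarith) htf'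
  have h1 : 0 < (1 + lam) * |t - f t / f' t| + t * lam := by
    have : 0 < |t - f t / f' t| := abs_pos.mpr (ne_of_lt hne)
    nlinarith
  exact ⟨h1, h2⟩
end

section
/- Let f:[0,R)→ℝ be continuously differentiable with f(0)=0, f'(0)=-1, f' strictly increasing. Let λ ∈ [0,1), ρ > 0 be as defined via the Newton map n_f, and let {θ_k} ⊂ [0, λ²/2]. Given t₀ ∈ (0,ρ), define t_{k+1} = (1+√(2θ_k))|n_f(t_k)| + √(2θ_k) t_k. Then {t_k} is well defined (i.e., t_k ∈ (0,ρ) for all k), strictly decreasing, and converges to 0. -/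
open Set Filter

theorem stmt4 {R : ℝ} (hR : 0 < R) (f f' : ℝ → ℝ)
    (hderiv : ∀ t ∈ Ico (0:ℝ) R, HasDerivWithinAt f (f' t) (Ico 0 R) t)
    (hcont : ContinuousOn f' (Ico 0 R))
    (hf0 : f 0 = 0) (hf'0 : f' 0 = -1)
    (hmono : StrictMonoOn f' (Ico 0 R))
    (ν : ℝ) (hν : ν = sSup {t | t ∈ Ico 0 R ∧ f' t < 0})
    (lam : ℝ) (hlam : lam ∈ Ico (0:ℝ) 1)
    (ρ : ℝ)
    (hρ : ρ = sSup {δ | δ ∈ Ioo 0 ν ∧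
      ∀ t ∈ Ioo 0 δ, (1 + lam) * |t - f t / f' t| / t + lam < 1})
    (θ : ℕ → ℝ) (hθ : ∀ k, θ k ∈ Icc 0 (lam ^ 2 / 2))
    (t : ℕ → ℝ) (ht0 : t 0 ∈ Ioo 0 ρ)
    (hrec : ∀ k, t (k + 1) =
      (1 + Real.sqrt (2 * θ k)) * |t k - f (t k) / f' (t k)| + Real.sqrt (2 * θ k) * t k) :
    (∀ k, t k ∈ Ioo 0 ρ) ∧ StrictAnti t ∧ Tendsto t atTop (nhds 0) := by
  obtain ⟨hlam0, hlam1⟩ := hlam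
  -- points below ρ satisfy the key inequality, and are below ν
  have hρmem : ∀ x, 0 < x → x < ρ →
      x < ν ∧ (1 + lam) * |x - f x / f' x| / x + lam < 1 := by
    intro x hx hxρ
    have hex : ∃ δ ∈ {δ | δ ∈ Ioo 0 ν ∧
        ∀ t ∈ Ioo 0 δ, (1 + lam) * |t - f t / f' t| / t + lam < 1}, x < δ := by
      by_contra h
      push_neg at h
      have := Real.sSup_le (fun y hy => h y hy) hx.le
      rw [← hρ] at this
      linarith
    obtain ⟨δ, ⟨hδν, hδineq⟩, hxδ⟩ := hex
    exact ⟨lt_trans hxδ hδν.2, hδineq x ⟨hx, hxδ⟩⟩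
  -- points below ν are below R with negative derivative
  have hνmem : ∀ x, 0 < x → x < ν → x < R ∧ f' x < 0 := by
    intro x hx hxν
    have hex : ∃ s ∈ {t | t ∈ Ico 0 R ∧ f' t < 0}, x < s := by
      by_contra h
      push_neg at h
      have := Real.sSup_le (fun y hy => h y hy) hx.le
      rw [← hν] at this
      linarith
    obtain ⟨s, ⟨hsR, hs'⟩, hxs⟩ := hex
    have hxR : x < R := lt_trans hxs hsR.2
    have : f' x < f' s := hmono ⟨hx.le, hxR⟩ hsR hxs
    exact ⟨hxR, lt_trans this hs'⟩
  have hfc : ContinuousOn f (Ico 0 R) := fun y hy => (hderiv y hy).continuousWithinAt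
  -- strict convexity inequality via MVT
  have hconv : ∀ x, 0 < x → x < R → f x < x * f' x := by
    intro x hx hxR
    have hsub : Icc (0:ℝ) x ⊆ Ico 0 R := fun y hy => ⟨hy.1, lt_of_le_of_lt hy.2 hxR⟩
    have hcf : ContinuousOn f (Icc 0 x) := hfc.mono hsub
    have hd : ∀ y ∈ Ioo (0:ℝ) x, HasDerivAt f (f' y) y := by
      intro y hy
      have hyR : y < R := lt_trans hy.2 hxR
      exact (hderiv y ⟨hy.1.le, hyR⟩).hasDerivAt (Ico_mem_nhds hy.1 hyR)
    obtain ⟨c, hc, hc'⟩ := exists_hasDerivAt_eq_slope f f' hx hcf hd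
    rw [hf0] at hc'
    have hcx : f' c < f' x :=
      hmono ⟨hc.1.le, lt_trans hc.2 hxR⟩ ⟨hx.le, hxR⟩ hc.2
    have hfx : f x = f' c * x := by
      field_simp at hc'
      rw [hc', sub_zero, sub_zero, div_mul_cancel₀ _ hx.ne']
    rw [hfx]
    nlinarith
  -- single step of the iteration
  have hstep : ∀ k, t k ∈ Ioo 0 ρ → 0 < t (k + 1) ∧
      t (k + 1) ≤ (1 + lam) * |t k - f (t k) / f' (t k)| + lam * t k ∧
      (1 + lam) * |t k - f (t k) / f' (t k)| + lam * t k < t k := by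
    intro k hk
    obtain ⟨hx, hxρ⟩ := hk
    set x := t k with hxdef
    obtain ⟨hxν, hineq⟩ := hρmem x hx hxρ
    obtain ⟨hxR, hf'x⟩ := hνmem x hx hxν
    have hfx : f x < x * f' x := hconv x hx hxR
    have hgt : x < f x / f' x := (lt_div_iff_of_neg hf'x).mpr hfx
    have habs : |x - f x / f' x| = f x / f' x - x := by
      rw [abs_of_neg (by linarith)]; ring
    have hnpos : 0 < |x - f x / f' x| := by rw [habs]; linarith
    set n := |x - f x / f' x| with hndef
    -- from hineq : (1+lam) * n / x + lam < 1
    have h1 : (1 + lam) * n < (1 - lam) * x := by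
      have h2 : (1 + lam) * n / x < 1 - lam := by linarith
      calc (1 + lam) * n = (1 + lam) * n / x * x := by field_simp
        _ < (1 - lam) * x := by
          exact mul_lt_mul_of_pos_right h2 hx
    set s := Real.sqrt (2 * θ k) with hsdef
    have hs0 : 0 ≤ s := Real.sqrt_nonneg _
    have hslam : s ≤ lam := by
      have h2θ : 2 * θ k ≤ lam ^ 2 := by
        have := (hθ k).2; linarith
      calc s ≤ Real.sqrt (lam ^ 2) := Real.sqrt_le_sqrt h2θ
        _ = lam := by rw [Real.sqrt_sq hlam0]
    have hrk := hrec k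
    refine ⟨?_, ?_, by linarith⟩
    · rw [hrk]
      have : 0 < (1 + s) * n := mul_pos (by linarith) hnpos
      nlinarith
    · rw [hrk]
      have h3 : (1 + s) * n ≤ (1 + lam) * n :=
        mul_le_mul_of_nonneg_right (by linarith) hnpos.le
      have h4 : s * x ≤ lam * x := mul_le_mul_of_nonneg_right hslam hx.le
      linarith
  -- the invariant
  have hall : ∀ k, t k ∈ Ioo 0 ρ := by
    intro k
    induction k with
    | zero => exact ht0
    | succ m ih =>
      obtain ⟨h1, h2, h3⟩ := hstep m ih
      exact ⟨h1, lt_trans (lt_of_le_of_lt h2 h3) ih.2⟩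
  have hdec : ∀ k, t (k + 1) < t k := by
    intro k
    obtain ⟨_, h2, h3⟩ := hstep k (hall k)
    exact lt_of_le_of_lt h2 h3
  have hanti : StrictAnti t := strictAnti_nat_of_succ_lt hdec
  refine ⟨hall, hanti, ?_⟩
  -- convergence
  have hbdd : BddBelow (Set.range t) := ⟨0, fun y ⟨k, hk⟩ => hk ▸ (hall k).1.le⟩
  have hlim : Tendsto t atTop (nhds (⨅ k, t k)) :=
    tendsto_atTop_ciInf hanti.antitone hbdd
  set L := ⨅ k, t k with hLdef
  have hL0 : 0 ≤ L := le_ciInf fun k => (hall k).1.le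
  rcases hL0.lt_or_eq with hLpos | hLzero
  · -- L > 0 leads to contradiction
    exfalso
    have hLle : ∀ k, L ≤ t k := fun k => ciInf_le hbdd k
    have hLρ : L < ρ := lt_of_le_of_lt (hLle 1) (lt_trans (hdec 0) (ht0).2)
    obtain ⟨hLν, hLineq⟩ := hρmem L hLpos hLρ
    obtain ⟨hLR, hf'L⟩ := hνmem L hLpos hLν
    set g : ℝ → ℝ := fun x => (1 + lam) * |x - f x / f' x| + lam * x with hgdef
    have hgL : g L < L := by
      have hfL : f L < L * f' L := hconv L hLpos hLR
      have hgt : L < f L / f' L := (lt_div_iff_of_neg hf'L).mpr hfL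
      have habs : |L - f L / f' L| = f L / f' L - L := by
        rw [abs_of_neg (by linarith)]; ring
      have h2 : (1 + lam) * |L - f L / f' L| / L < 1 - lam := by linarith
      have h1 : (1 + lam) * |L - f L / f' L| < (1 - lam) * L := by
        calc (1 + lam) * |L - f L / f' L|
            = (1 + lam) * |L - f L / f' L| / L * L := by field_simp
          _ < (1 - lam) * L := mul_lt_mul_of_pos_right h2 hLpos
      simp only [hgdef]
      linarith
    -- continuity of g at L
    have hfcL : ContinuousAt f L :=
      ((hderiv L ⟨hLpos.le, hLR⟩).hasDerivAt (Ico_mem_nhds hLpos hLR)).continuousAt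
    have hf'cL : ContinuousAt f' L :=
      (hcont L ⟨hLpos.le, hLR⟩).continuousAt (Ico_mem_nhds hLpos hLR)
    have hgc : ContinuousAt g L := by
      have h1 : ContinuousAt (fun x => x - f x / f' x) L :=
        continuousAt_id.sub (hfcL.div hf'cL hf'L.ne)
      exact (continuousAt_const.mul h1.abs).add (continuousAt_const.mul continuousAt_id)
    have hlim1 : Tendsto (fun k => t (k + 1)) atTop (nhds L) :=
      hlim.comp (tendsto_add_atTop_nat 1)
    have hlim2 : Tendsto (fun k => g (t k)) atTop (nhds (g L)) :=
      hgc.tendsto.comp hlim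
    have hle : ∀ k, t (k + 1) ≤ g (t k) := fun k => (hstep k (hall k)).2.1
    have : L ≤ g L := le_of_tendsto_of_tendsto' hlim1 hlim2 hle
    linarith
  · rw [← hLzero] at hlim
    exact hlim
end

section
/- Under the hypotheses of the scalar sequence construction (f majorant-type with f(0)=0, f'(0)=-1, f' strictly increasing; {θ_k} ⊂ [0,λ²/2]; t₀ ∈ (0,ρ); t_{k+1} = (1+√(2θ_k))|n_f(t_k)| + √(2θ_k)t_k), one has limsup_{k→∞} t_{k+1}/t_k = √(2 θ̃), where θ̃ = limsup_{k→∞} θ_k. -/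
open Set Filter Topology

theorem stmt5 {R : ℝ} (hR : 0 < R) (f f' : ℝ → ℝ)
    (hderiv : ∀ t ∈ Ico (0:ℝ) R, HasDerivWithinAt f (f' t) (Ico 0 R) t)
    (hcont : ContinuousOn f' (Ico 0 R))
    (hf0 : f 0 = 0) (hf'0 : f' 0 = -1)
    (hmono : StrictMonoOn f' (Ico 0 R))
    (ν : ℝ) (hν : ν = sSup {t | t ∈ Ico 0 R ∧ f' t < 0})
    (lam : ℝ) (hlam : lam ∈ Ico (0:ℝ) 1)
    (ρ : ℝ)
    (hρ : ρ = sSup {δ | δ ∈ Ioo 0 ν ∧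
      ∀ t ∈ Ioo 0 δ, (1 + lam) * |t - f t / f' t| / t + lam < 1})
    (θ : ℕ → ℝ) (hθ : ∀ k, θ k ∈ Icc 0 (lam ^ 2 / 2))
    (t : ℕ → ℝ) (ht0 : t 0 ∈ Ioo 0 ρ)
    (hrec : ∀ k, t (k + 1) =
      (1 + Real.sqrt (2 * θ k)) * |t k - f (t k) / f' (t k)| + Real.sqrt (2 * θ k) * t k) :
    limsup (fun k => t (k + 1) / t k) atTop = Real.sqrt (2 * limsup θ atTop) := by
  obtain ⟨ht0pos, ht0ρ⟩ := ht0
  obtain ⟨hlam0, hlam1⟩ := hlam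
  -- bounds on the square roots
  have hsq : ∀ k, 0 ≤ Real.sqrt (2 * θ k) ∧ Real.sqrt (2 * θ k) ≤ lam := by
    intro k
    refine ⟨Real.sqrt_nonneg _, ?_⟩
    have h := Real.sqrt_le_sqrt (show 2 * θ k ≤ lam ^ 2 by have := (hθ k).2; linarith)
    rwa [Real.sqrt_sq hlam0] at h
  -- points below ν are in the domain and have negative derivative
  have hν_mem : ∀ x, 0 ≤ x → x < ν → x ∈ Ico (0:ℝ) R ∧ f' x < 0 := by
    intro x hx0 hxν
    have hA : (0:ℝ) ∈ {s | s ∈ Ico (0:ℝ) R ∧ f' s < 0} :=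
      ⟨⟨le_refl _, hR⟩, by rw [hf'0]; norm_num⟩
    rw [hν] at hxν
    obtain ⟨s, hs, hxs⟩ := exists_lt_of_lt_csSup ⟨0, hA⟩ hxν
    have hxR : x ∈ Ico (0:ℝ) R := ⟨hx0, hxs.trans hs.1.2⟩
    exact ⟨hxR, (hmono hxR hs.1 hxs).trans hs.2⟩
  -- mean value theorem
  have hMVT : ∀ x, 0 < x → x < R → ∃ c ∈ Ioo (0:ℝ) x, f x = f' c * x := by
    intro x hx0 hxR
    have hsub : Icc (0:ℝ) x ⊆ Ico 0 R := fun y hy => ⟨hy.1, lt_of_le_of_lt hy.2 hxR⟩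
    have hcf : ContinuousOn f (Icc 0 x) := fun y hy =>
      ((hderiv y (hsub hy)).continuousWithinAt).mono hsub
    have hd : ∀ y ∈ Ioo (0:ℝ) x, HasDerivAt f (f' y) y := fun y hy =>
      (hderiv y ⟨hy.1.le, hy.2.trans hxR⟩).hasDerivAt (Ico_mem_nhds hy.1 (hy.2.trans hxR))
    obtain ⟨c, hc, hc'⟩ := exists_hasDerivAt_eq_slope f f' hx0 hcf hd
    refine ⟨c, hc, ?_⟩
    rw [hf0] at hc'
    field_simp at hc'
    simp only [sub_zero] at hc'
    rw [hc', div_mul_cancel₀ _ hx0.ne']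
  -- the Newton step is strictly positive for 0 < x < ν
  have hnlt : ∀ x, 0 < x → x < ν → x < f x / f' x := by
    intro x hx0 hxν
    obtain ⟨hxR, hf'x⟩ := hν_mem x hx0.le hxν
    obtain ⟨c, hc, hfx⟩ := hMVT x hx0 hxR.2
    have hcR : c ∈ Ico (0:ℝ) R := ⟨hc.1.le, hc.2.trans hxR.2⟩
    have h1 : f' c < f' x := hmono hcR hxR hc.2
    rw [lt_div_iff_of_neg hf'x, hfx]
    nlinarith
  -- key property from the definition of ρ
  have hρν : ∀ x, 0 < x → x < ρ →
      x < ν ∧ (1 + lam) * |x - f x / f' x| / x + lam < 1 := by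
    intro x hx0 hxρ
    have hSne : {δ | δ ∈ Ioo 0 ν ∧
        ∀ s ∈ Ioo 0 δ, (1 + lam) * |s - f s / f' s| / s + lam < 1}.Nonempty := by
      by_contra h
      rw [not_nonempty_iff_eq_empty] at h
      rw [h, Real.sSup_empty] at hρ
      linarith
    rw [hρ] at hxρ
    obtain ⟨δ, hδ, hxδ⟩ := exists_lt_of_lt_csSup hSne hxρ
    exact ⟨hxδ.trans hδ.1.2, hδ.2 x ⟨hx0, hxδ⟩⟩
  -- the ratio function
  set g : ℝ → ℝ := fun x => (1 + lam) * |x - f x / f' x| / x + lam with hg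
  -- one step of the recursion
  have hstep : ∀ k, 0 < t k → t k < ρ →
      0 < t (k + 1) ∧ t (k + 1) ≤ g (t k) * t k ∧ t (k + 1) < t k := by
    intro k hpos hlt
    obtain ⟨hν', hkey⟩ := hρν _ hpos hlt
    have hn := hnlt _ hpos hν'
    obtain ⟨hs0, hsl⟩ := hsq k
    have habs : 0 < |t k - f (t k) / f' (t k)| := abs_pos.2 (by linarith)
    have h1 : 0 < t (k + 1) := by rw [hrec k]; nlinarith
    have h2 : t (k + 1) ≤ g (t k) * t k := by
      rw [hrec k, hg]
      have : ((1 + lam) * |t k - f (t k) / f' (t k)| / t k + lam) * t k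
          = (1 + lam) * |t k - f (t k) / f' (t k)| + lam * t k := by
        field_simp
      rw [this]
      nlinarith
    have h3 : g (t k) * t k < t k := mul_lt_of_lt_one_left hpos hkey
    exact ⟨h1, h2, h2.trans_lt h3⟩
  -- invariants
  have hinv : ∀ k, 0 < t k ∧ t k < ρ := by
    intro k
    induction k with
    | zero => exact ⟨ht0pos, ht0ρ⟩
    | succ k ih =>
      obtain ⟨h1, h2⟩ := ih
      obtain ⟨h3, _, h4⟩ := hstep k h1 h2
      exact ⟨h3, h4.trans h2⟩
  have hdec : ∀ k, t (k + 1) < t k := fun k => (hstep k (hinv k).1 (hinv k).2).2.2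
  have hanti : Antitone t := antitone_nat_of_succ_le fun k => (hdec k).le
  have hbdd : BddBelow (range t) := ⟨0, by rintro _ ⟨k, rfl⟩; exact (hinv k).1.le⟩
  have ht0ν : t 0 < ν := (hρν _ ht0pos ht0ρ).1
  have htmemIco : ∀ k, t k ∈ Ico (0:ℝ) R := fun k =>
    (hν_mem _ (hinv k).1.le ((hρν _ (hinv k).1 (hinv k).2).1)).1
  have htlim : Tendsto t atTop (𝓝 (⨅ k, t k)) := tendsto_atTop_ciInf hanti hbdd
  set L : ℝ := ⨅ k, t k with hLdef
  have hL0 : 0 ≤ L := le_ciInf fun k => (hinv k).1.le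
  have hLk : ∀ k, L ≤ t k := fun k => ciInf_le hbdd k
  -- L = 0 via a compactness argument
  have hLzero : L = 0 := by
    by_contra hne
    have hL : 0 < L := lt_of_le_of_ne hL0 (Ne.symm hne)
    have hKsub : Icc L (t 0) ⊆ Ico (0:ℝ) R := fun x hx =>
      (hν_mem x (hL.le.trans hx.1) (lt_of_le_of_lt hx.2 ht0ν)).1
    have hcf : ContinuousOn f (Icc L (t 0)) := fun x hx =>
      ((hderiv x (hKsub hx)).continuousWithinAt).mono hKsub
    have hf'ne : ∀ x ∈ Icc L (t 0), f' x ≠ 0 := fun x hx =>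
      ne_of_lt (hν_mem x (hL.le.trans hx.1) (lt_of_le_of_lt hx.2 ht0ν)).2
    have hgK : ContinuousOn g (Icc L (t 0)) := by
      apply ContinuousOn.add _ continuousOn_const
      apply ContinuousOn.div
      · exact continuousOn_const.mul
          ((continuousOn_id.sub (hcf.div (hcont.mono hKsub) hf'ne)).abs)
      · exact continuousOn_id
      · intro x hx; exact ne_of_gt (lt_of_lt_of_le hL hx.1)
    obtain ⟨m, hm, hmax⟩ := isCompact_Icc.exists_isMaxOn ⟨t 0, hLk 0, le_refl _⟩ hgK
    have hm0 : 0 < m := lt_of_lt_of_le hL hm.1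
    have hmρ : m < ρ := lt_of_le_of_lt hm.2 ht0ρ
    have hc1 : g m < 1 := (hρν m hm0 hmρ).2
    have hc0 : 0 ≤ g m := by
      rw [hg]
      have := abs_nonneg (m - f m / f' m)
      positivity
    have hck : ∀ k, t k ≤ g m ^ k * t 0 := by
      intro k
      induction k with
      | zero => simp
      | succ k ih =>
        have h1 : t (k + 1) ≤ g (t k) * t k := (hstep k (hinv k).1 (hinv k).2).2.1
        have h2 : g (t k) ≤ g m := hmax ⟨hLk k, hanti (Nat.zero_le k)⟩
        calc t (k + 1) ≤ g (t k) * t k := h1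
          _ ≤ g m * t k := mul_le_mul_of_nonneg_right h2 (hinv k).1.le
          _ ≤ g m * (g m ^ k * t 0) := mul_le_mul_of_nonneg_left ih hc0
          _ = g m ^ (k + 1) * t 0 := by ring
    have hpow : Tendsto (fun k => g m ^ k * t 0) atTop (𝓝 (0 * t 0)) :=
      (tendsto_pow_atTop_nhds_zero_of_lt_one hc0 hc1).mul_const _
    rw [zero_mul] at hpow
    have : L ≤ 0 := ge_of_tendsto hpow (Eventually.of_forall fun k => (hLk k).trans (hck k))
    linarith
  rw [hLzero] at htlim
  -- limits of f(t k)/t k and f'(t k)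
  have htne : ∀ k, t k ≠ 0 := fun k => ne_of_gt (hinv k).1
  have hf'ne : ∀ k, f' (t k) ≠ 0 := fun k =>
    ne_of_lt (hν_mem _ (hinv k).1.le ((hρν _ (hinv k).1 (hinv k).2).1)).2
  have hslope : Tendsto (fun k => f (t k) / t k) atTop (𝓝 (-1)) := by
    have h0 : HasDerivWithinAt f (f' 0) (Ico 0 R) 0 := hderiv 0 ⟨le_refl _, hR⟩
    rw [hasDerivWithinAt_iff_tendsto_slope] at h0
    have htin : Tendsto t atTop (𝓝[Ico (0:ℝ) R \ {0}] 0) :=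
      tendsto_nhdsWithin_of_tendsto_nhds_of_eventually_within t htlim
        (Eventually.of_forall fun k => ⟨htmemIco k, htne k⟩)
    have := h0.comp htin
    rw [hf'0] at this
    refine this.congr fun k => ?_
    simp [slope_def_field, hf0, div_eq_div_iff (sub_ne_zero.mpr (htne k)) (htne k)]
  have hf'lim : Tendsto (fun k => f' (t k)) atTop (𝓝 (-1)) := by
    have h0 : Tendsto f' (𝓝[Ico (0:ℝ) R] 0) (𝓝 (f' 0)) := hcont 0 ⟨le_refl _, hR⟩
    have htin : Tendsto t atTop (𝓝[Ico (0:ℝ) R] 0) :=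
      tendsto_nhdsWithin_of_tendsto_nhds_of_eventually_within t htlim
        (Eventually.of_forall fun k => htmemIco k)
    have := h0.comp htin
    rwa [hf'0] at this
  -- the normalized Newton step tends to 0
  have hw : Tendsto (fun k => |t k - f (t k) / f' (t k)| / t k) atTop (𝓝 0) := by
    have hdiv : Tendsto (fun k => f (t k) / t k / f' (t k)) atTop (𝓝 ((-1) / (-1))) :=
      hslope.div hf'lim (by norm_num)
    norm_num at hdiv
    have hsub : Tendsto (fun k => f (t k) / t k / f' (t k) - 1) atTop (𝓝 (1 - 1)) :=
      hdiv.sub tendsto_const_nhds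
    norm_num at hsub
    refine hsub.congr fun k => ?_
    have hn := hnlt _ (hinv k).1 ((hρν _ (hinv k).1 (hinv k).2).1)
    rw [abs_of_neg (by linarith : t k - f (t k) / f' (t k) < 0), neg_sub, sub_div,
      div_self (htne k)]
    ring
  -- the correction term tends to 0
  have ha : Tendsto (fun k => (1 + Real.sqrt (2 * θ k)) *
      (|t k - f (t k) / f' (t k)| / t k)) atTop (𝓝 0) := by
    have hub : ∀ k, (1 + Real.sqrt (2 * θ k)) * (|t k - f (t k) / f' (t k)| / t k)
        ≤ 2 * (|t k - f (t k) / f' (t k)| / t k) := by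
      intro k
      obtain ⟨hs0, hsl⟩ := hsq k
      have hwpos : 0 ≤ |t k - f (t k) / f' (t k)| / t k :=
        div_nonneg (abs_nonneg _) (hinv k).1.le
      nlinarith
    have hlb : ∀ k, 0 ≤ (1 + Real.sqrt (2 * θ k)) * (|t k - f (t k) / f' (t k)| / t k) := by
      intro k
      obtain ⟨hs0, _⟩ := hsq k
      have hwpos : 0 ≤ |t k - f (t k) / f' (t k)| / t k :=
        div_nonneg (abs_nonneg _) (hinv k).1.le
      nlinarith
    have h2w : Tendsto (fun k => 2 * (|t k - f (t k) / f' (t k)| / t k)) atTop (𝓝 0) := by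
      have := hw.const_mul 2
      simpa using this
    exact tendsto_of_tendsto_of_tendsto_of_le_of_le tendsto_const_nhds h2w hlb hub
  -- rewrite the ratio
  set a : ℕ → ℝ := fun k => (1 + Real.sqrt (2 * θ k)) * (|t k - f (t k) / f' (t k)| / t k)
    with hadef
  set s : ℕ → ℝ := fun k => Real.sqrt (2 * θ k) with hsdef
  have hratio : (fun k => t (k + 1) / t k) = a + s := by
    funext k
    show t (k + 1) / t k = a k + s k
    simp only [hadef, hsdef]
    rw [hrec k, add_div, mul_div_assoc, mul_div_cancel_right₀ _ (htne k)]
  -- boundedness facts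
  have hs_bdd_le : IsBoundedUnder (· ≤ ·) atTop s :=
    isBoundedUnder_of ⟨lam, fun k => (hsq k).2⟩
  have hs_bdd_ge : IsBoundedUnder (· ≥ ·) atTop s :=
    isBoundedUnder_of ⟨0, fun k => (hsq k).1⟩
  have hs_cobdd : IsCoboundedUnder (· ≤ ·) atTop s := hs_bdd_ge.isCoboundedUnder_le
  have ha_limsup : limsup a atTop = 0 := ha.limsup_eq
  have ha_liminf : liminf a atTop = 0 := ha.liminf_eq
  have hθ_bdd_le : IsBoundedUnder (· ≤ ·) atTop θ :=
    isBoundedUnder_of ⟨lam ^ 2 / 2, fun k => (hθ k).2⟩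
  have hθ_cobdd : IsCoboundedUnder (· ≤ ·) atTop θ :=
    (isBoundedUnder_of ⟨0, fun k => (hθ k).1⟩ :
      IsBoundedUnder (· ≥ ·) atTop θ).isCoboundedUnder_le
  -- limsup (a + s) = limsup s
  have hmain : limsup (a + s) atTop = limsup s atTop := by
    apply le_antisymm
    · have h := limsup_add_le (f := atTop) (u := a) (v := s)
        ha.isBoundedUnder_ge ha.isBoundedUnder_le hs_cobdd hs_bdd_le
      rwa [ha_limsup, zero_add] at h
    · have h := le_limsup_add (f := atTop) (u := s) (v := a)
        hs_bdd_le hs_cobdd ha.isBoundedUnder_le ha.isBoundedUnder_ge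
      rw [ha_liminf, add_zero] at h
      have : s + a = a + s := by funext k; exact add_comm _ _
      rwa [this] at h
  -- limsup s = sqrt (2 * limsup θ)
  have hsqrt : Real.sqrt (2 * limsup θ atTop) = limsup s atTop := by
    have hmono' : Monotone (fun x : ℝ => Real.sqrt (2 * x)) := fun x y h =>
      Real.sqrt_le_sqrt (by linarith)
    have hcont' : ContinuousAt (fun x : ℝ => Real.sqrt (2 * x)) (limsup θ atTop) :=
      (Real.continuous_sqrt.comp (continuous_const.mul continuous_id)).continuousAt
    exact hmono'.map_limsup_of_continuousAt θ hcont' hθ_bdd_le hθ_cobdd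
  rw [hratio, hmain, hsqrt]
end

section
/- Let C ⊂ ℝⁿ be a nonempty convex compact set. For y ∈ ℝⁿ, x ∈ C and tolerance ε ≥ 0, suppose z ∈ C satisfies the CondG termination condition ⟨z - y, u - z⟩ ≥ -ε for all u ∈ C. If z̃ ∈ C satisfies ⟨z̃ - ỹ, u - z̃⟩ ≥ 0 for all u ∈ C (i.e., z̃ is the exact projection output for ỹ), then ‖z - z̃‖ ≤ ‖y - ỹ‖ + √(2ε). -/
open Set

theorem stmt6 {n : ℕ} (C : Set (EuclideanSpace ℝ (Fin n)))
    (hCne : C.Nonempty) (hCconv : Convex ℝ C) (hCcomp : IsCompact C)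
    (y ytil : EuclideanSpace ℝ (Fin n))
    (z ztil : EuclideanSpace ℝ (Fin n)) (hz : z ∈ C) (hztil : ztil ∈ C)
    (ε : ℝ) (hε : 0 ≤ ε)
    (hzopt : ∀ u ∈ C, (inner ℝ (z - y) (u - z) : ℝ) ≥ -ε)
    (hztilopt : ∀ u ∈ C, (inner ℝ (ztil - ytil) (u - ztil) : ℝ) ≥ 0) :
    ‖z - ztil‖ ≤ ‖y - ytil‖ + Real.sqrt (2 * ε) := by
  have h1 := hzopt ztil hztil
  have h2 := hztilopt z hz
  have e1 : (inner ℝ (z - y) (ztil - z) : ℝ) + (inner ℝ (ztil - ytil) (z - ztil) : ℝ)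
      = (inner ℝ (y - ytil) (z - ztil) : ℝ) - ‖z - ztil‖ ^ 2 := by
    simp only [inner_sub_left, inner_sub_right, real_inner_self_eq_norm_sq,
      ← real_inner_self_eq_norm_sq]
    rw [real_inner_comm z ztil]
    ring_nf
  have key : ‖z - ztil‖ ^ 2 ≤ (inner ℝ (y - ytil) (z - ztil) : ℝ) + ε := by linarith
  have cs : (inner ℝ (y - ytil) (z - ztil) : ℝ) ≤ ‖y - ytil‖ * ‖z - ztil‖ :=
    real_inner_le_norm _ _
  set a := ‖z - ztil‖ with ha
  set b := ‖y - ytil‖ with hb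
  have ha0 : 0 ≤ a := norm_nonneg _
  have hb0 : 0 ≤ b := norm_nonneg _
  have hs : Real.sqrt (2 * ε) ^ 2 = 2 * ε := Real.sq_sqrt (by linarith)
  have hs0 : 0 ≤ Real.sqrt (2 * ε) := Real.sqrt_nonneg _
  by_contra hcon
  push_neg at hcon
  nlinarith [sq_nonneg (a - b - Real.sqrt (2 * ε))]
end

section
/- Let F: Ω → ℝⁿ be continuously differentiable with F(x*) = 0 and F'(x*) invertible, and let f:[0,R)→ℝ be a majorant function for F on B(x*,κ), i.e., f(0)=0, f'(0)=-1, f' strictly increasing, and ‖F'(x*)^{-1}[F'(x) - F'(x* + τ(x-x*))]‖ ≤ f'(‖x-x*‖) - f'(τ‖x-x*‖) for all τ∈[0,1] and x ∈ B(x*,κ). Then for every x ∈ B(x*, min{κ,ν}), F'(x) is invertible and ‖F'(x)^{-1} F'(x*)‖ ≤ 1/|f'(‖x-x*‖)|. -/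
open Set Metric

theorem stmt8 {n : ℕ} {Ω : Set (EuclideanSpace ℝ (Fin n))} (hΩ : IsOpen Ω)
    (F : EuclideanSpace ℝ (Fin n) → EuclideanSpace ℝ (Fin n))
    (F' : EuclideanSpace ℝ (Fin n) → EuclideanSpace ℝ (Fin n) →L[ℝ] EuclideanSpace ℝ (Fin n))
    (hF' : ∀ x ∈ Ω, HasFDerivAt F (F' x) x)
    (hF'cont : ContinuousOn F' Ω)
    (xs : EuclideanSpace ℝ (Fin n)) (hxs : xs ∈ Ω) (hFxs : F xs = 0)
    (A : EuclideanSpace ℝ (Fin n) →L[ℝ] EuclideanSpace ℝ (Fin n))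
    (hA1 : A.comp (F' xs) = ContinuousLinearMap.id ℝ _)
    (hA2 : (F' xs).comp A = ContinuousLinearMap.id ℝ _)
    {R : ℝ} (hR : 0 < R) (f f' : ℝ → ℝ)
    (hderiv : ∀ t ∈ Ico (0:ℝ) R, HasDerivWithinAt f (f' t) (Ico 0 R) t)
    (hcont : ContinuousOn f' (Ico 0 R))
    (hf0 : f 0 = 0) (hf'0 : f' 0 = -1)
    (hmono : StrictMonoOn f' (Ico 0 R))
    (κ ν : ℝ)
    (hκ : κ = sSup {t | t ∈ Ico 0 R ∧ ball xs t ⊆ Ω})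
    (hν : ν = sSup {t | t ∈ Ico 0 R ∧ f' t < 0})
    (hmaj : ∀ τ ∈ Icc (0:ℝ) 1, ∀ x ∈ ball xs κ,
      ‖A.comp (F' x - F' (xs + τ • (x - xs)))‖ ≤ f' ‖x - xs‖ - f' (τ * ‖x - xs‖)) :
    ∀ x ∈ ball xs (min κ ν),
      ∃ B : EuclideanSpace ℝ (Fin n) →L[ℝ] EuclideanSpace ℝ (Fin n),
        B.comp (F' x) = ContinuousLinearMap.id ℝ _ ∧
        (F' x).comp B = ContinuousLinearMap.id ℝ _ ∧
        ‖B.comp (F' xs)‖ ≤ 1 / |f' ‖x - xs‖| := by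
  intro x hx
  have hxdist : dist x xs = ‖x - xs‖ := dist_eq_norm x xs
  set r : ℝ := ‖x - xs‖ with hrdef
  have hr0 : (0:ℝ) ≤ r := norm_nonneg _
  have hxκ : x ∈ ball xs κ := by
    rw [mem_ball, hxdist]
    exact lt_of_lt_of_le (hxdist ▸ mem_ball.mp hx) (min_le_left _ _)
  have hrν : r < ν := lt_of_lt_of_le (hxdist ▸ mem_ball.mp hx) (min_le_right _ _)
  -- f' r < 0
  obtain ⟨s, ⟨hsIco, hs0⟩, hrs⟩ :=
    exists_lt_of_lt_csSup (s := {t | t ∈ Ico (0:ℝ) R ∧ f' t < 0})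
      ⟨0, ⟨le_refl 0, hR⟩, by rw [hf'0]; norm_num⟩ (hν ▸ hrν)
  have hrIco : r ∈ Ico (0:ℝ) R := ⟨hr0, hrs.trans hsIco.2⟩
  have hf'r : f' r < 0 := (hmono hrIco hsIco hrs).trans hs0
  -- majorant bound with τ = 0
  have hm := hmaj 0 ⟨le_refl 0, zero_le_one⟩ x hxκ
  simp only [zero_smul, add_zero, zero_mul, hf'0, sub_neg_eq_add] at hm
  -- hm : ‖A.comp (F' x - F' xs)‖ ≤ f' r + 1
  set u : EuclideanSpace ℝ (Fin n) →L[ℝ] EuclideanSpace ℝ (Fin n) := A.comp (F' x) with hu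
  set t : EuclideanSpace ℝ (Fin n) →L[ℝ] EuclideanSpace ℝ (Fin n) := 1 - u with htdef
  have hone : (1 : EuclideanSpace ℝ (Fin n) →L[ℝ] EuclideanSpace ℝ (Fin n)) = A.comp (F' xs) :=
    hA1.symm
  have htnorm : ‖t‖ ≤ f' r + 1 := by
    have : t = -(A.comp (F' x - F' xs)) := by
      rw [htdef, hone, hu, ContinuousLinearMap.comp_sub, neg_sub]
    rw [this, norm_neg]
    exact hm
  have ht1 : ‖t‖ < 1 := lt_of_le_of_lt htnorm (by linarith)
  set v : (EuclideanSpace ℝ (Fin n) →L[ℝ] EuclideanSpace ℝ (Fin n))ˣ := Units.oneSub t ht1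
    with hvdef
  have hval : (v : EuclideanSpace ℝ (Fin n) →L[ℝ] EuclideanSpace ℝ (Fin n)) = u := by
    rw [hvdef, Units.val_oneSub, htdef, sub_sub_cancel]
  set w : EuclideanSpace ℝ (Fin n) →L[ℝ] EuclideanSpace ℝ (Fin n) := ↑v⁻¹ with hwdef
  refine ⟨w.comp A, ?_, ?_, ?_⟩
  · -- left inverse
    have : w * u = 1 := by rw [← hval, Units.inv_mul]
    calc (w.comp A).comp (F' x) = w.comp (A.comp (F' x)) :=
          (ContinuousLinearMap.comp_assoc _ _ _).symm
    _ = w * u := rfl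
    _ = 1 := this
    _ = ContinuousLinearMap.id ℝ _ := rfl
  · -- right inverse
    have hFx : F' x = (F' xs) * u := by
      show F' x = (F' xs).comp (A.comp (F' x))
      rw [← ContinuousLinearMap.comp_assoc, hA2, ContinuousLinearMap.id_comp]
    show (F' x) * (w * A) = ContinuousLinearMap.id ℝ _
    rw [hFx, mul_assoc, ← mul_assoc (u), ← hval, Units.mul_inv, one_mul]
    exact hA2
  · -- norm bound
    have hBxs : (w.comp A).comp (F' xs) = w := by
      rw [ContinuousLinearMap.comp_assoc, hA1]
      rfl
    rw [hBxs, abs_of_neg hf'r]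
    have hb0 : (0:ℝ) ≤ 1 / (-f' r) := div_nonneg zero_le_one (by linarith)
    refine ContinuousLinearMap.opNorm_le_bound _ hb0 fun y => ?_
    have key : w y = y + t (w y) := by
      have h1 : (1 - t) * w = 1 := by
        rw [← Units.val_oneSub t ht1, ← hvdef, Units.mul_inv]
      have h2 : w - t * w = 1 := by rw [sub_mul, one_mul] at h1; exact h1
      have := congrArg (fun (w : EuclideanSpace ℝ (Fin n) →L[ℝ] EuclideanSpace ℝ (Fin n)) => w y) h2
      simp only [ContinuousLinearMap.sub_apply, ContinuousLinearMap.mul_apply,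
        ContinuousLinearMap.one_apply] at this
      exact sub_eq_iff_eq_add.mp this
    have hle : ‖w y‖ ≤ ‖y‖ + (f' r + 1) * ‖w y‖ := by
      calc ‖w y‖ = ‖y + t (w y)‖ := by rw [← key]
      _ ≤ ‖y‖ + ‖t (w y)‖ := norm_add_le _ _
      _ ≤ ‖y‖ + ‖t‖ * ‖w y‖ := by
          gcongr; exact t.le_opNorm _
      _ ≤ ‖y‖ + (f' r + 1) * ‖w y‖ := by gcongr
    have hpos : (0:ℝ) < -f' r := by linarith
    rw [div_mul_eq_mul_div, one_mul, le_div_iff₀ hpos]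
    nlinarith [norm_nonneg (w y), norm_nonneg y]
end

section
/- Under the majorant condition (f is a majorant function for F on B(x*,κ)), for every x ∈ B(x*, min{κ,ν}) one has ‖F'(x)^{-1} F(x)‖ ≤ f(‖x-x*‖)/f'(‖x-x*‖). -/
open Set Metric

set_option maxHeartbeats 1000000 in
set_option synthInstance.maxHeartbeats 400000 in
theorem stmt9 {n : ℕ} {Ω : Set (EuclideanSpace ℝ (Fin n))} (hΩ : IsOpen Ω)
    (F : EuclideanSpace ℝ (Fin n) → EuclideanSpace ℝ (Fin n))
    (F' : EuclideanSpace ℝ (Fin n) → EuclideanSpace ℝ (Fin n) →L[ℝ] EuclideanSpace ℝ (Fin n))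
    (hF' : ∀ x ∈ Ω, HasFDerivAt F (F' x) x)
    (hF'cont : ContinuousOn F' Ω)
    (xs : EuclideanSpace ℝ (Fin n)) (hxs : xs ∈ Ω) (hFxs : F xs = 0)
    (A : EuclideanSpace ℝ (Fin n) →L[ℝ] EuclideanSpace ℝ (Fin n))
    (hA1 : A.comp (F' xs) = ContinuousLinearMap.id ℝ _)
    (hA2 : (F' xs).comp A = ContinuousLinearMap.id ℝ _)
    {R : ℝ} (hR : 0 < R) (f f' : ℝ → ℝ)
    (hderiv : ∀ t ∈ Ico (0:ℝ) R, HasDerivWithinAt f (f' t) (Ico 0 R) t)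
    (hcont : ContinuousOn f' (Ico 0 R))
    (hf0 : f 0 = 0) (hf'0 : f' 0 = -1)
    (hmono : StrictMonoOn f' (Ico 0 R))
    (κ ν : ℝ)
    (hκ : κ = sSup {t | t ∈ Ico 0 R ∧ ball xs t ⊆ Ω})
    (hν : ν = sSup {t | t ∈ Ico 0 R ∧ f' t < 0})
    (hmaj : ∀ τ ∈ Icc (0:ℝ) 1, ∀ x ∈ ball xs κ,
      ‖A.comp (F' x - F' (xs + τ • (x - xs)))‖ ≤ f' ‖x - xs‖ - f' (τ * ‖x - xs‖)) :
    ∀ x ∈ ball xs (min κ ν),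
      ∃ B : EuclideanSpace ℝ (Fin n) →L[ℝ] EuclideanSpace ℝ (Fin n),
        B.comp (F' x) = ContinuousLinearMap.id ℝ _ ∧
        (F' x).comp B = ContinuousLinearMap.id ℝ _ ∧
        ‖B (F x)‖ ≤ f ‖x - xs‖ / f' ‖x - xs‖ := by
  intro x hx
  have hdist : dist x xs = ‖x - xs‖ := dist_eq_norm _ _
  set u := x - xs with hu
  set t := ‖x - xs‖ with ht0
  have htnn : 0 ≤ t := norm_nonneg _
  have hxmem : dist x xs < min κ ν := mem_ball.mp hx
  have htκ : t < κ := lt_of_le_of_lt (le_of_eq hdist.symm) (lt_of_lt_of_le hxmem (min_le_left _ _))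
  have htν : t < ν := lt_of_le_of_lt (le_of_eq hdist.symm) (lt_of_lt_of_le hxmem (min_le_right _ _))
  -- basic facts about ν
  have hS'ne : ({s | s ∈ Ico 0 R ∧ f' s < 0}).Nonempty :=
    ⟨0, ⟨le_refl 0, hR⟩, by rw [hf'0]; norm_num⟩
  obtain ⟨s, hs, hts⟩ := exists_lt_of_lt_csSup hS'ne (hν ▸ htν)
  have htR : t < R := lt_trans hts hs.1.2
  have htmem : t ∈ Ico (0:ℝ) R := ⟨htnn, htR⟩
  have hf't : f' t < 0 := lt_trans (hmono htmem hs.1 hts) hs.2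
  -- the ball of radius κ is inside Ω
  have hSne : Set.Nonempty {t | t ∈ Ico 0 R ∧ ball xs t ⊆ Ω} :=
    ⟨0, ⟨le_refl 0, hR⟩, by simp⟩
  have hballΩ : ball xs κ ⊆ Ω := by
    intro y hy
    have hy' : dist y xs < κ := mem_ball.mp hy
    obtain ⟨s', hs'S, hys'⟩ := exists_lt_of_lt_csSup hSne (hκ ▸ hy')
    exact hs'S.2 (mem_ball.mpr hys')
  have hxκ : x ∈ ball xs κ := mem_ball.mpr (hdist ▸ htκ)
  have hxτκ : ∀ τ ∈ Icc (0:ℝ) 1, xs + τ • u ∈ ball xs κ := by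
    intro τ hτ
    rw [mem_ball, dist_eq_norm]
    have h1 : xs + τ • u - xs = τ • u := by abel
    rw [h1, norm_smul, Real.norm_eq_abs, abs_of_nonneg hτ.1]
    calc τ * t ≤ 1 * t := mul_le_mul_of_nonneg_right hτ.2 htnn
    _ = t := one_mul t
    _ < κ := htκ
  have hxτΩ : ∀ τ ∈ Icc (0:ℝ) 1, xs + τ • u ∈ Ω := fun τ hτ => hballΩ (hxτκ τ hτ)
  -- the auxiliary function g and its derivative
  set w := A ((F' x) u) with hw
  set g : ℝ → EuclideanSpace ℝ (Fin n) := fun τ => A (F (xs + τ • u)) - τ • w with hg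
  set g' : ℝ → EuclideanSpace ℝ (Fin n) := fun τ => A ((F' (xs + τ • u)) u) - w with hg'
  have hgderiv : ∀ τ ∈ Icc (0:ℝ) 1, HasDerivAt g (g' τ) τ := by
    intro τ hτ
    have hp : HasDerivAt (fun τ' : ℝ => xs + τ' • u) u τ := by
      have := ((hasDerivAt_id τ).smul_const u).const_add xs
      simpa using this
    have h2 : HasDerivAt (fun τ' : ℝ => F (xs + τ' • u)) ((F' (xs + τ • u)) u) τ :=
      (hF' _ (hxτΩ τ hτ)).comp_hasDerivAt τ hp
    have h3 : HasDerivAt (fun τ' : ℝ => A (F (xs + τ' • u))) (A ((F' (xs + τ • u)) u)) τ :=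
      A.hasFDerivAt.comp_hasDerivAt τ h2
    have h4 : HasDerivAt (fun τ' : ℝ => τ' • w) w τ := by
      have := (hasDerivAt_id τ).smul_const w
      simpa using this
    exact h3.sub h4
  -- boundary function
  set Bf : ℝ → ℝ := fun τ => τ * (t * f' t) - f (τ * t) with hBf
  set Bf' : ℝ → ℝ := fun τ => t * f' t - f' (τ * t) * t with hBf'
  have hmaps : MapsTo (fun τ' : ℝ => τ' * t) (Icc 0 1) (Ico 0 R) := by
    intro τ' hτ'
    constructor
    · exact mul_nonneg hτ'.1 htnn
    · calc τ' * t ≤ 1 * t := mul_le_mul_of_nonneg_right hτ'.2 htnn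
      _ = t := one_mul t
      _ < R := htR
  have hτtmem : ∀ τ ∈ Icc (0:ℝ) 1, τ * t ∈ Ico (0:ℝ) R := fun τ hτ => hmaps hτ
  have hBfderiv : ∀ τ ∈ Icc (0:ℝ) 1, HasDerivWithinAt Bf (Bf' τ) (Icc 0 1) τ := by
    intro τ hτ
    have h1 : HasDerivWithinAt (fun τ' : ℝ => τ' * (t * f' t)) (t * f' t) (Icc 0 1) τ := by
      have := (hasDerivAt_id τ).mul_const (t * f' t)
      simpa using this.hasDerivWithinAt
    have h2 : HasDerivWithinAt (fun τ' : ℝ => f (τ' * t)) (f' (τ * t) * t) (Icc 0 1) τ := by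
      have hinner : HasDerivWithinAt (fun τ' : ℝ => τ' * t) t (Icc 0 1) τ := by
        have := (hasDerivAt_id τ).mul_const t
        simpa using this.hasDerivWithinAt
      exact (hderiv (τ * t) (hτtmem τ hτ)).comp τ hinner hmaps
    exact h1.sub h2
  have hBfderiv' : ∀ τ ∈ Ico (0:ℝ) 1, HasDerivWithinAt Bf (Bf' τ) (Ici τ) τ := by
    intro τ hτ
    exact (hBfderiv τ ⟨hτ.1, le_of_lt hτ.2⟩).mono_of_mem_nhdsWithin (Icc_mem_nhdsGE_of_mem hτ)
  -- continuity
  have hgcont : ContinuousOn g (Icc 0 1) :=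
    fun τ hτ => (hgderiv τ hτ).continuousAt.continuousWithinAt
  have hBfcont : ContinuousOn Bf (Icc 0 1) :=
    fun τ hτ => (hBfderiv τ hτ).continuousWithinAt
  -- the bound on g'
  have hbound : ∀ τ ∈ Ico (0:ℝ) 1, ‖g' τ‖ ≤ Bf' τ := by
    intro τ hτ
    have hτ1 : τ ∈ Icc (0:ℝ) 1 := ⟨hτ.1, le_of_lt hτ.2⟩
    have hm := hmaj τ hτ1 x hxκ
    have hkey : (A.comp (F' x - F' (xs + τ • (x - xs)))) u = w - A ((F' (xs + τ • u)) u) := by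
      simp only [ContinuousLinearMap.comp_apply, ContinuousLinearMap.sub_apply, map_sub, hw, hu]
      abel
    calc ‖g' τ‖ = ‖w - A ((F' (xs + τ • u)) u)‖ := norm_sub_rev _ _
    _ = ‖(A.comp (F' x - F' (xs + τ • (x - xs)))) u‖ := by rw [hkey]
    _ ≤ ‖A.comp (F' x - F' (xs + τ • (x - xs)))‖ * ‖u‖ := ContinuousLinearMap.le_opNorm _ _
    _ ≤ (f' t - f' (τ * t)) * t := by
        apply mul_le_mul_of_nonneg_right _ htnn
        simpa [← ht0, ← hu] using hm
    _ = Bf' τ := by simp only [hBf']; ring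
  -- initial condition
  have hga : ‖g 0‖ ≤ Bf 0 := by
    simp [hg, hBf, hFxs, hf0]
  -- fencing theorem
  have hG := image_norm_le_of_norm_deriv_right_le_deriv_boundary' hgcont
    (fun τ hτ => (hgderiv τ ⟨hτ.1, le_of_lt hτ.2⟩).hasDerivWithinAt) hga hBfcont hBfderiv' hbound
    (right_mem_Icc.mpr zero_le_one)
  have hG1 : ‖A (F x) - w‖ ≤ t * f' t - f t := by
    have h1 : xs + u = x := by rw [hu]; abel
    simpa [hg, hBf, h1] using hG
  -- the operator M = A ∘ F'(x) is invertible
  set M := A.comp (F' x) with hM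
  have hMdist : ‖(1 : EuclideanSpace ℝ (Fin n) →L[ℝ] EuclideanSpace ℝ (Fin n)) - M‖ ≤ f' t + 1 := by
    have hm := hmaj 0 ⟨le_refl 0, zero_le_one⟩ x hxκ
    have he : A.comp (F' x - F' (xs + (0:ℝ) • (x - xs))) = M - 1 := by
      rw [ContinuousLinearMap.comp_sub, zero_smul, add_zero, hA1, hM,
        ContinuousLinearMap.one_def]
    rw [norm_sub_rev]
    rw [he] at hm
    simpa [← ht0, hf'0] using hm
  have hδ1 : f' t + 1 < 1 := by linarith
  have hlt : ‖(1 : EuclideanSpace ℝ (Fin n) →L[ℝ] EuclideanSpace ℝ (Fin n)) - M‖ < 1 :=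
    lt_of_le_of_lt hMdist hδ1
  set U : (EuclideanSpace ℝ (Fin n) →L[ℝ] EuclideanSpace ℝ (Fin n))ˣ :=
    Units.oneSub (1 - M) hlt with hU
  have hUval : (U : EuclideanSpace ℝ (Fin n) →L[ℝ] EuclideanSpace ℝ (Fin n)) = M := by
    rw [hU, Units.val_oneSub, sub_sub_cancel]
  set N : EuclideanSpace ℝ (Fin n) →L[ℝ] EuclideanSpace ℝ (Fin n) := ↑U⁻¹ with hN
  have hMN : M * N = 1 := by rw [← hUval, hN]; exact U.mul_inv
  have hNM : N * M = 1 := by rw [← hUval, hN]; exact U.inv_mul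
  have hMNv : ∀ v, M (N v) = v := by
    intro v
    have := DFunLike.congr_fun hMN v
    simpa [ContinuousLinearMap.mul_apply] using this
  have hNMv : ∀ v, N (M v) = v := by
    intro v
    have := DFunLike.congr_fun hNM v
    simpa [ContinuousLinearMap.mul_apply] using this
  -- norm bound for N
  have hNb : ∀ y, ‖N y‖ ≤ ‖y‖ / (-f' t) := by
    intro y
    have hid : N y = y + ((1 - M) (N y)) := by
      simp [ContinuousLinearMap.sub_apply, ContinuousLinearMap.one_apply, hMNv y]
    have h1 : ‖N y‖ ≤ ‖y‖ + (f' t + 1) * ‖N y‖ := by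
      calc ‖N y‖ = ‖y + ((1 - M) (N y))‖ := by rw [← hid]
      _ ≤ ‖y‖ + ‖(1 - M) (N y)‖ := norm_add_le _ _
      _ ≤ ‖y‖ + (f' t + 1) * ‖N y‖ := by
          apply add_le_add_right
          calc ‖(1 - M) (N y)‖ ≤ ‖(1 : EuclideanSpace ℝ (Fin n) →L[ℝ] EuclideanSpace ℝ (Fin n))
              - M‖ * ‖N y‖ := ContinuousLinearMap.le_opNorm _ _
          _ ≤ (f' t + 1) * ‖N y‖ := mul_le_mul_of_nonneg_right hMdist (norm_nonneg _)
    rw [le_div_iff₀ (by linarith : (0:ℝ) < -f' t)]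
    nlinarith [norm_nonneg (N y), norm_nonneg y]
  refine ⟨N.comp A, ?_, ?_, ?_⟩
  · refine ContinuousLinearMap.ext fun v => ?_
    show N (A ((F' x) v)) = v
    simpa [hM, ContinuousLinearMap.comp_apply] using hNMv v
  · refine ContinuousLinearMap.ext fun v => ?_
    have hA2v : ∀ z, (F' xs) (A z) = z := by
      intro z
      have := DFunLike.congr_fun hA2 z
      simpa [ContinuousLinearMap.comp_apply] using this
    have e1 : A ((F' x) (N (A v))) = A v := by
      have := hMNv (A v)
      simpa [hM, ContinuousLinearMap.comp_apply] using this
    calc ((F' x).comp (N.comp A)) v = (F' x) (N (A v)) := rfl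
    _ = (F' xs) (A ((F' x) (N (A v)))) := (hA2v _).symm
    _ = (F' xs) (A v) := by rw [e1]
    _ = v := hA2v v
  · have hMu : M u = w := by simp [hM, hw, ContinuousLinearMap.comp_apply]
    have hdecomp : (N.comp A) (F x) = u + N (A (F x) - w) := by
      have h1 : A (F x) = M u + (A (F x) - w) := by rw [hMu]; abel
      calc (N.comp A) (F x) = N (A (F x)) := rfl
      _ = N (M u + (A (F x) - w)) := by rw [← h1]
      _ = N (M u) + N (A (F x) - w) := map_add _ _ _
      _ = u + N (A (F x) - w) := by rw [hNMv u]
    calc ‖(N.comp A) (F x)‖ = ‖u + N (A (F x) - w)‖ := by rw [hdecomp]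
    _ ≤ ‖u‖ + ‖N (A (F x) - w)‖ := norm_add_le _ _
    _ ≤ t + ‖A (F x) - w‖ / (-f' t) := by
        apply add_le_add (le_of_eq ht0.symm) (hNb _)
    _ ≤ t + (t * f' t - f t) / (-f' t) := by
        apply add_le_add_right
        exact div_le_div_of_nonneg_right hG1 (by linarith)
    _ = f t / f' t := by
        have hne : f' t ≠ 0 := ne_of_lt hf't
        rw [div_neg, sub_div, mul_div_cancel_right₀ _ hne]
        ring
end

section
/- Under the majorant condition, for every x ∈ B(x*, min{κ,ν}) one has ‖F'(x*)^{-1}[F(x*) - F(x) - F'(x)(x* - x)]‖ ≤ f'(‖x-x*‖)‖x-x*‖ - f(‖x-x*‖). -/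
set_option maxHeartbeats 1000000

open Set Metric intervalIntegral

theorem stmt10 {n : ℕ} {Ω : Set (EuclideanSpace ℝ (Fin n))} (hΩ : IsOpen Ω)
    (F : EuclideanSpace ℝ (Fin n) → EuclideanSpace ℝ (Fin n))
    (F' : EuclideanSpace ℝ (Fin n) → EuclideanSpace ℝ (Fin n) →L[ℝ] EuclideanSpace ℝ (Fin n))
    (hF' : ∀ x ∈ Ω, HasFDerivAt F (F' x) x)
    (hF'cont : ContinuousOn F' Ω)
    (xs : EuclideanSpace ℝ (Fin n)) (hxs : xs ∈ Ω) (hFxs : F xs = 0)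
    (A : EuclideanSpace ℝ (Fin n) →L[ℝ] EuclideanSpace ℝ (Fin n))
    (hA1 : A.comp (F' xs) = ContinuousLinearMap.id ℝ _)
    (hA2 : (F' xs).comp A = ContinuousLinearMap.id ℝ _)
    {R : ℝ} (hR : 0 < R) (f f' : ℝ → ℝ)
    (hderiv : ∀ t ∈ Ico (0:ℝ) R, HasDerivWithinAt f (f' t) (Ico 0 R) t)
    (hcont : ContinuousOn f' (Ico 0 R))
    (hf0 : f 0 = 0) (hf'0 : f' 0 = -1)
    (hmono : StrictMonoOn f' (Ico 0 R))
    (κ ν : ℝ)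
    (hκ : κ = sSup {t | t ∈ Ico 0 R ∧ ball xs t ⊆ Ω})
    (hν : ν = sSup {t | t ∈ Ico 0 R ∧ f' t < 0})
    (hmaj : ∀ τ ∈ Icc (0:ℝ) 1, ∀ x ∈ ball xs κ,
      ‖A.comp (F' x - F' (xs + τ • (x - xs)))‖ ≤ f' ‖x - xs‖ - f' (τ * ‖x - xs‖)) :
    ∀ x ∈ ball xs (min κ ν),
      ‖A (F xs - F x - F' x (xs - x))‖ ≤ f' ‖x - xs‖ * ‖x - xs‖ - f ‖x - xs‖ := by
  intro x hx
  rw [mem_ball, dist_eq_norm, lt_min_iff] at hx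
  obtain ⟨hxκ, hxν⟩ := hx
  set r := ‖x - xs‖ with hrdef
  have hr0 : 0 ≤ r := norm_nonneg _
  -- ν ≤ R
  have hνR : ν ≤ R := by
    rw [hν]
    apply csSup_le
    · exact ⟨0, ⟨le_refl 0, hR⟩, by rw [hf'0]; norm_num⟩
    · rintro t ⟨⟨_, ht⟩, _⟩; exact ht.le
  have hrR : r < R := lt_of_lt_of_le hxν hνR
  -- ball xs κ ⊆ Ω
  have hballΩ : ball xs κ ⊆ Ω := by
    intro y hy
    rw [mem_ball] at hy
    have hne : {t | t ∈ Ico (0:ℝ) R ∧ ball xs t ⊆ Ω}.Nonempty := by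
      refine ⟨0, ⟨le_refl 0, hR⟩, ?_⟩; simp
    obtain ⟨s, hs, hys⟩ := exists_lt_of_lt_csSup hne (hκ ▸ hy)
    exact hs.2 (mem_ball.2 hys)
  have hxmem : x ∈ ball xs κ := by rw [mem_ball, dist_eq_norm]; exact hxκ
  have hxΩ : x ∈ Ω := hballΩ hxmem
  -- handle r = 0
  rcases eq_or_lt_of_le hr0 with hr0' | hrpos
  · have hxeq : x = xs := by
      have h2 : x - xs = 0 := norm_eq_zero.mp hr0'.symm
      linear_combination (norm := module) h2
    subst hxeq
    simp [← hr0', hf0]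
  -- the path γ τ = xs + τ • (x - xs) stays in ball xs κ
  have hγmem : ∀ τ ∈ Icc (0:ℝ) 1, xs + τ • (x - xs) ∈ ball xs κ := by
    intro τ hτ
    rw [mem_ball, dist_eq_norm]
    have h1 : xs + τ • (x - xs) - xs = τ • (x - xs) := by abel
    rw [h1, norm_smul, Real.norm_eq_abs, abs_of_nonneg hτ.1, ← hrdef]
    calc τ * r ≤ 1 * r := by nlinarith [hτ.2]
    _ < κ := by rwa [one_mul]
  -- derivative of g τ = F (γ τ)
  have hg : ∀ τ ∈ uIcc (0:ℝ) 1, HasDerivAt (fun τ : ℝ => F (xs + τ • (x - xs)))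
      (F' (xs + τ • (x - xs)) (x - xs)) τ := by
    intro τ hτ
    rw [uIcc_of_le zero_le_one] at hτ
    have hline : HasDerivAt (fun τ : ℝ => xs + τ • (x - xs)) (x - xs) τ := by
      simpa using ((hasDerivAt_id τ).smul_const (x - xs)).const_add xs
    exact (hF' _ (hballΩ (hγmem τ hτ))).comp_hasDerivAt τ hline
  -- continuity of the integrand
  have hγcont : ContinuousOn (fun τ : ℝ => F' (xs + τ • (x - xs))) (Icc 0 1) := by
    apply hF'cont.comp (Continuous.continuousOn (continuous_const.add (continuous_id.smul continuous_const)))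
    intro τ hτ; exact hballΩ (hγmem τ hτ)
  have hcont1 : ContinuousOn (fun τ : ℝ => F' (xs + τ • (x - xs)) (x - xs)) (Icc 0 1) :=
    (ContinuousLinearMap.apply ℝ _ (x - xs)).continuous.comp_continuousOn hγcont
  have hint1 : IntervalIntegrable (fun τ : ℝ => F' (xs + τ • (x - xs)) (x - xs)) MeasureTheory.volume 0 1 :=
    (hcont1.mono (by rw [uIcc_of_le zero_le_one])).intervalIntegrable
  -- FTC for F along the path
  have hFTC : (∫ τ in (0:ℝ)..1, F' (xs + τ • (x - xs)) (x - xs)) = F x - F xs := by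
    rw [integral_eq_sub_of_hasDerivAt hg hint1]
    simp
  -- the integrand h τ
  set h : ℝ → EuclideanSpace ℝ (Fin n) :=
    fun τ => A (F' x (x - xs)) - A (F' (xs + τ • (x - xs)) (x - xs)) with hhdef
  have hcont2 : ContinuousOn h (Icc 0 1) := by
    rw [hhdef]
    exact continuousOn_const.sub (A.continuous.comp_continuousOn hcont1)
  have hinth : IntervalIntegrable h MeasureTheory.volume 0 1 :=
    (hcont2.mono (by rw [uIcc_of_le zero_le_one])).intervalIntegrable
  have key : A (F xs - F x - F' x (xs - x)) = ∫ τ in (0:ℝ)..1, h τ := by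
    have hint1' : IntervalIntegrable (fun τ : ℝ => A (F' (xs + τ • (x - xs)) (x - xs))) MeasureTheory.volume 0 1 :=
      (((A.continuous.comp_continuousOn hcont1).mono
        (by rw [uIcc_of_le zero_le_one]))).intervalIntegrable
    rw [hhdef, intervalIntegral.integral_sub intervalIntegrable_const hint1',
      intervalIntegral.integral_const, A.intervalIntegral_comp_comm hint1, hFTC]
    have hsx : xs - x = -(x - xs) := by abel
    rw [hsx]
    simp only [map_neg, map_sub, sub_zero, one_smul]
    abel
  rw [key]
  -- bound on h
  have hbound : ∀ τ ∈ Icc (0:ℝ) 1, ‖h τ‖ ≤ (f' r - f' (τ * r)) * r := by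
    intro τ hτ
    have heq : h τ = (A.comp (F' x - F' (xs + τ • (x - xs)))) (x - xs) := by
      simp [hhdef]
    rw [heq]
    calc ‖(A.comp (F' x - F' (xs + τ • (x - xs)))) (x - xs)‖
        ≤ ‖A.comp (F' x - F' (xs + τ • (x - xs)))‖ * ‖x - xs‖ :=
          ContinuousLinearMap.le_opNorm _ _
      _ ≤ (f' r - f' (τ * r)) * r := by
          rw [← hrdef]
          exact mul_le_mul_of_nonneg_right (hmaj τ hτ x hxmem) hr0
  have hintn : IntervalIntegrable (fun τ => ‖h τ‖) MeasureTheory.volume 0 1 := hinth.norm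
  have hτr : ∀ τ ∈ Icc (0:ℝ) 1, τ * r ∈ Ico (0:ℝ) R := by
    intro τ hτ
    constructor
    · exact mul_nonneg hτ.1 hr0
    · calc τ * r ≤ 1 * r := by nlinarith [hτ.2]
      _ < R := by rwa [one_mul]
  have hcontb : ContinuousOn (fun τ => (f' r - f' (τ * r)) * r) (Icc 0 1) := by
    apply ContinuousOn.mul _ continuousOn_const
    apply continuousOn_const.sub
    exact hcont.comp (continuous_mul_right r).continuousOn hτr
  have hintb : IntervalIntegrable (fun τ => (f' r - f' (τ * r)) * r) MeasureTheory.volume 0 1 :=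
    (hcontb.mono (by rw [uIcc_of_le zero_le_one])).intervalIntegrable
  have hmono' := intervalIntegral.integral_mono_on zero_le_one hintn hintb hbound
  -- FTC for f on [0, r]
  have hIccsub : Icc (0:ℝ) r ⊆ Ico 0 R := Icc_subset_Ico_right hrR
  have hfr : (∫ u in (0:ℝ)..r, f' u) = f r := by
    rw [intervalIntegral.integral_eq_sub_of_hasDeriv_right_of_le hr0
      (fun t ht => ((hderiv t (hIccsub ht)).continuousWithinAt).mono hIccsub)
      (fun t ht => ((hderiv t ⟨ht.1.le, ht.2.trans hrR⟩).hasDerivAt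
        (Ico_mem_nhds ht.1 (ht.2.trans hrR))).hasDerivWithinAt)
      ((hcont.mono (by rw [uIcc_of_le hr0]; exact hIccsub)).intervalIntegrable),
      hf0, sub_zero]
  -- compute the bounding integral
  have hintb2 : IntervalIntegrable (fun τ => f' (τ * r)) MeasureTheory.volume 0 1 := by
    apply ContinuousOn.intervalIntegrable
    rw [uIcc_of_le zero_le_one]
    exact hcont.comp (continuous_mul_right r).continuousOn hτr
  have hcalc : (∫ τ in (0:ℝ)..1, (f' r - f' (τ * r)) * r) = f' r * r - f r := by
    simp_rw [sub_mul]
    rw [intervalIntegral.integral_sub intervalIntegrable_const (hintb2.mul_const r),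
      intervalIntegral.integral_const, intervalIntegral.integral_mul_const,
      integral_comp_mul_right f' (ne_of_gt hrpos)]
    rw [← hfr]
    rw [zero_mul, one_mul, sub_zero, one_smul, smul_eq_mul]
    field_simp
  calc ‖∫ τ in (0:ℝ)..1, h τ‖ ≤ ∫ τ in (0:ℝ)..1, ‖h τ‖ :=
      intervalIntegral.norm_integral_le_integral_norm zero_le_one
    _ ≤ ∫ τ in (0:ℝ)..1, (f' r - f' (τ * r)) * r := hmono'
    _ = f' r * r - f r := hcalc
end

section
/- Under the majorant condition, for x ∈ B(x*, min{κ,ν}) the Newton iterate N_F(x) = x - F'(x)^{-1}F(x) satisfies ‖N_F(x) - x*‖ ≤ f(‖x-x*‖)/f'(‖x-x*‖) - ‖x-x*‖ = |n_f(‖x-x*‖)|, where n_f(t) = t - f(t)/f'(t). -/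
open Set Metric

set_option maxHeartbeats 1000000 in
lemma clm_pow_norm_le {E : Type*} [NormedAddCommGroup E] [NormedSpace ℝ E]
    (T : E →L[ℝ] E) (m : ℕ) : ‖T ^ m‖ ≤ ‖T‖ ^ m := by
  induction m with
  | zero => simpa [ContinuousLinearMap.one_def] using ContinuousLinearMap.norm_id_le
  | succ k ih =>
    rw [pow_succ, pow_succ]
    calc ‖T ^ k * T‖ ≤ ‖T ^ k‖ * ‖T‖ := norm_mul_le _ _
      _ ≤ ‖T‖ ^ k * ‖T‖ := mul_le_mul_of_nonneg_right ih (norm_nonneg _)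

set_option maxHeartbeats 1000000 in
lemma oneSub_inv_norm_le {E : Type*} [NormedAddCommGroup E] [NormedSpace ℝ E]
    [CompleteSpace E] (T : E →L[ℝ] E) (h : ‖T‖ < 1) :
    ‖(((Units.oneSub T h)⁻¹ : (E →L[ℝ] E)ˣ) : E →L[ℝ] E)‖ ≤ (1 - ‖T‖)⁻¹ := by
  have hval : (((Units.oneSub T h)⁻¹ : (E →L[ℝ] E)ˣ) : E →L[ℝ] E) = ∑' m : ℕ, T ^ m := rfl
  rw [hval]
  exact tsum_of_norm_bounded (hasSum_geometric_of_lt_one (norm_nonneg T) h)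
    (fun m => clm_pow_norm_le T m)

set_option maxHeartbeats 1000000 in
theorem stmt11 {n : ℕ} {Ω : Set (EuclideanSpace ℝ (Fin n))} (hΩ : IsOpen Ω)
    (F : EuclideanSpace ℝ (Fin n) → EuclideanSpace ℝ (Fin n))
    (F' : EuclideanSpace ℝ (Fin n) → EuclideanSpace ℝ (Fin n) →L[ℝ] EuclideanSpace ℝ (Fin n))
    (hF' : ∀ x ∈ Ω, HasFDerivAt F (F' x) x)
    (hF'cont : ContinuousOn F' Ω)
    (xs : EuclideanSpace ℝ (Fin n)) (hxs : xs ∈ Ω) (hFxs : F xs = 0)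
    (A : EuclideanSpace ℝ (Fin n) →L[ℝ] EuclideanSpace ℝ (Fin n))
    (hA1 : A.comp (F' xs) = ContinuousLinearMap.id ℝ _)
    (hA2 : (F' xs).comp A = ContinuousLinearMap.id ℝ _)
    {R : ℝ} (hR : 0 < R) (f f' : ℝ → ℝ)
    (hderiv : ∀ t ∈ Ico (0:ℝ) R, HasDerivWithinAt f (f' t) (Ico 0 R) t)
    (hcont : ContinuousOn f' (Ico 0 R))
    (hf0 : f 0 = 0) (hf'0 : f' 0 = -1)
    (hmono : StrictMonoOn f' (Ico 0 R))
    (κ ν : ℝ)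
    (hκ : κ = sSup {t | t ∈ Ico 0 R ∧ ball xs t ⊆ Ω})
    (hν : ν = sSup {t | t ∈ Ico 0 R ∧ f' t < 0})
    (hmaj : ∀ τ ∈ Icc (0:ℝ) 1, ∀ x ∈ ball xs κ,
      ‖A.comp (F' x - F' (xs + τ • (x - xs)))‖ ≤ f' ‖x - xs‖ - f' (τ * ‖x - xs‖)) :
    ∀ x ∈ ball xs (min κ ν),
      ∃ B : EuclideanSpace ℝ (Fin n) →L[ℝ] EuclideanSpace ℝ (Fin n),
        B.comp (F' x) = ContinuousLinearMap.id ℝ _ ∧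
        (F' x).comp B = ContinuousLinearMap.id ℝ _ ∧
        ‖(x - B (F x)) - xs‖ ≤ f ‖x - xs‖ / f' ‖x - xs‖ - ‖x - xs‖ ∧
        f ‖x - xs‖ / f' ‖x - xs‖ - ‖x - xs‖ =
          |‖x - xs‖ - f ‖x - xs‖ / f' ‖x - xs‖| := by
  intro x hx
  rw [mem_ball, dist_eq_norm] at hx
  set t : ℝ := ‖x - xs‖ with ht
  have ht0 : 0 ≤ t := norm_nonneg _
  have hxκ : t < κ := lt_of_lt_of_le hx (min_le_left _ _)
  have hxν : t < ν := lt_of_lt_of_le hx (min_le_right _ _)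
  have hνne : ({s | s ∈ Ico (0:ℝ) R ∧ f' s < 0}).Nonempty :=
    ⟨0, ⟨le_refl 0, hR⟩, by rw [hf'0]; norm_num⟩
  obtain ⟨s, ⟨hsIco, hfs⟩, hts⟩ := exists_lt_of_lt_csSup hνne (hν ▸ hxν)
  have htR : t < R := lt_trans hts hsIco.2
  have htIco : t ∈ Ico (0:ℝ) R := ⟨ht0, htR⟩
  have hf't : f' t < 0 := lt_trans (hmono htIco hsIco hts) hfs
  have hf'tne : f' t ≠ 0 := ne_of_lt hf't
  have hκne : ({s | s ∈ Ico (0:ℝ) R ∧ ball xs s ⊆ Ω}).Nonempty :=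
    ⟨0, ⟨le_refl 0, hR⟩, by simp⟩
  obtain ⟨r, ⟨hrIco, hrΩ⟩, htr⟩ := exists_lt_of_lt_csSup hκne (hκ ▸ hxκ)
  have hxball : x ∈ ball xs κ := by rw [mem_ball, dist_eq_norm]; exact hxκ
  have hxΩ : x ∈ Ω := hrΩ (by rw [mem_ball, dist_eq_norm]; exact htr)
  have hsegnorm : ∀ τ : ℝ, ‖xs + τ • (x - xs) - xs‖ = |τ| * t := by
    intro τ
    rw [add_sub_cancel_left, norm_smul, Real.norm_eq_abs]
  have hseg : ∀ τ ∈ Icc (0:ℝ) 1, xs + τ • (x - xs) ∈ Ω := by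
    intro τ hτ
    apply hrΩ
    rw [mem_ball, dist_eq_norm, hsegnorm, abs_of_nonneg hτ.1]
    calc τ * t ≤ 1 * t := mul_le_mul_of_nonneg_right hτ.2 ht0
      _ = t := one_mul t
      _ < r := htr
  by_cases hxx : x = xs
  · -- degenerate case
    have htz : t = 0 := by rw [ht, hxx, sub_self, norm_zero]
    refine ⟨A, by rw [hxx]; exact hA1, by rw [hxx]; exact hA2, ?_, ?_⟩
    · rw [htz, hf0, hf'0]
      have : x - A (F x) - xs = 0 := by rw [hxx, hFxs, map_zero, sub_zero, sub_self]
      rw [this, norm_zero]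
      norm_num
    · rw [htz, hf0, hf'0]
      norm_num
  -- main case
  have ht0' : 0 < t := by
    rw [ht, norm_pos_iff]
    exact sub_ne_zero.mpr hxx
  -- Banach perturbation
  set Eo := A.comp (F' xs - F' x) with hEodef
  have hcomp0 : ‖A.comp (F' x - F' xs)‖ ≤ f' t + 1 := by
    have h0 := hmaj 0 (by constructor <;> norm_num) x hxball
    simp only [zero_smul, add_zero, zero_mul, hf'0] at h0
    rw [← ht] at h0
    linarith
  have hEnorm : ‖Eo‖ ≤ f' t + 1 := by
    have : Eo = -(A.comp (F' x - F' xs)) := by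
      rw [hEodef, ← ContinuousLinearMap.comp_neg, neg_sub]
    rw [this, norm_neg]
    exact hcomp0
  have hE1 : ‖Eo‖ < 1 := lt_of_le_of_lt hEnorm (by linarith)
  have honesub : (1 : EuclideanSpace ℝ (Fin n) →L[ℝ] EuclideanSpace ℝ (Fin n)) - Eo
      = A.comp (F' x) := by
    rw [hEodef, ContinuousLinearMap.comp_sub, ContinuousLinearMap.one_def, ← hA1]
    abel
  set u : (EuclideanSpace ℝ (Fin n) →L[ℝ] EuclideanSpace ℝ (Fin n))ˣ :=
    Units.oneSub Eo hE1 with hudef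
  have huval : (u : EuclideanSpace ℝ (Fin n) →L[ℝ] EuclideanSpace ℝ (Fin n))
      = A.comp (F' x) := by
    have : (u : EuclideanSpace ℝ (Fin n) →L[ℝ] EuclideanSpace ℝ (Fin n)) = 1 - Eo := rfl
    rw [this, honesub]
  set a : (EuclideanSpace ℝ (Fin n) →L[ℝ] EuclideanSpace ℝ (Fin n))ˣ :=
    ⟨A, F' xs,
      by rw [ContinuousLinearMap.mul_def, ContinuousLinearMap.one_def]; exact hA1,
      by rw [ContinuousLinearMap.mul_def, ContinuousLinearMap.one_def]; exact hA2⟩ with hadef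
  set w : (EuclideanSpace ℝ (Fin n) →L[ℝ] EuclideanSpace ℝ (Fin n))ˣ := a⁻¹ * u with hwdef
  have hwval : (w : EuclideanSpace ℝ (Fin n) →L[ℝ] EuclideanSpace ℝ (Fin n)) = F' x := by
    rw [hwdef, Units.val_mul]
    have haiv : ((a⁻¹ : _ˣ) : EuclideanSpace ℝ (Fin n) →L[ℝ] EuclideanSpace ℝ (Fin n))
        = F' xs := rfl
    rw [haiv, huval, ContinuousLinearMap.mul_def, ← ContinuousLinearMap.comp_assoc, hA2,
      ContinuousLinearMap.id_comp]
  have hBeq : ((w⁻¹ : _ˣ) : EuclideanSpace ℝ (Fin n) →L[ℝ] EuclideanSpace ℝ (Fin n))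
      = ((u⁻¹ : _ˣ) : EuclideanSpace ℝ (Fin n) →L[ℝ] EuclideanSpace ℝ (Fin n)).comp A := by
    rw [hwdef, mul_inv_rev, inv_inv, Units.val_mul, ContinuousLinearMap.mul_def]
  -- continuity of f on Ico 0 R
  have hfc : ContinuousOn f (Ico 0 R) := fun s hs => (hderiv s hs).continuousWithinAt
  have hmul_maps : ∀ τ ∈ Icc (0:ℝ) 1, τ * t ∈ Ico (0:ℝ) R := by
    intro τ hτ
    refine ⟨mul_nonneg hτ.1 ht0, ?_⟩
    calc τ * t ≤ 1 * t := mul_le_mul_of_nonneg_right hτ.2 ht0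
      _ = t := one_mul t
      _ < R := htR
  -- interval integrability of τ ↦ f' (τ * t) * t
  have hint1 : IntervalIntegrable (fun τ => f' (τ * t) * t) MeasureTheory.volume 0 1 := by
    apply ContinuousOn.intervalIntegrable
    rw [uIcc_of_le zero_le_one]
    exact ((hcont.comp ((continuous_id.mul continuous_const).continuousOn) hmul_maps).mul
      continuousOn_const)
  -- scalar FTC
  have hfFTC : (∫ τ in (0:ℝ)..1, f' (τ * t) * t) = f t := by
    have := intervalIntegral.integral_eq_sub_of_hasDeriv_right_of_le (f := fun τ => f (τ * t))
      (f' := fun τ => f' (τ * t) * t) zero_le_one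
      (hfc.comp ((continuous_id.mul continuous_const).continuousOn) hmul_maps)
      (fun τ hτ => by
        have hmem : τ * t ∈ Ico (0:ℝ) R := hmul_maps τ ⟨hτ.1.le, hτ.2.le⟩
        have hnb : Ico (0:ℝ) R ∈ nhds (τ * t) :=
          Ico_mem_nhds (mul_pos hτ.1 ht0') hmem.2
        have hda : HasDerivAt f (f' (τ * t)) (τ * t) :=
          (hderiv _ hmem).hasDerivAt hnb
        exact (HasDerivAt.comp τ hda (hasDerivAt_mul_const t)).hasDerivWithinAt)
      hint1
    rw [this]
    simp [hf0]
  -- the key scalar inequality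
  have hfle : f t ≤ t * f' t := by
    rw [← hfFTC]
    have hle : (∫ τ in (0:ℝ)..1, f' (τ * t) * t) ≤ ∫ τ in (0:ℝ)..1, f' t * t := by
      apply intervalIntegral.integral_mono_on zero_le_one hint1 intervalIntegrable_const
      intro τ hτ
      have : f' (τ * t) ≤ f' t :=
        hmono.monotoneOn (hmul_maps τ hτ) htIco
          (by calc τ * t ≤ 1 * t := mul_le_mul_of_nonneg_right hτ.2 ht0
                _ = t := one_mul t)
      exact mul_le_mul_of_nonneg_right this ht0
    simpa [mul_comm] using hle
  -- scalar integral of the majorant bound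
  have hIbound : (∫ τ in (0:ℝ)..1, (f' t - f' (τ * t)) * t) = t * f' t - f t := by
    have heq : ∀ τ : ℝ, (f' t - f' (τ * t)) * t = f' t * t - f' (τ * t) * t :=
      fun τ => by ring
    simp only [heq]
    rw [intervalIntegral.integral_sub intervalIntegrable_const hint1, hfFTC,
      intervalIntegral.integral_const]
    simp [mul_comm]
  -- vector FTC
  have hpc : Continuous (fun τ : ℝ => xs + τ • (x - xs)) :=
    continuous_const.add (continuous_id.smul continuous_const)
  have hc3 : ContinuousOn (fun τ : ℝ => A ((F' (xs + τ • (x - xs))) (x - xs))) (Icc 0 1) :=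
    A.continuous.comp_continuousOn
      ((hF'cont.comp hpc.continuousOn hseg).clm_apply continuousOn_const)
  have hint2 : IntervalIntegrable (fun τ : ℝ => A ((F' (xs + τ • (x - xs))) (x - xs)))
      MeasureTheory.volume 0 1 := by
    apply ContinuousOn.intervalIntegrable
    rwa [uIcc_of_le zero_le_one]
  have hgFTC : (∫ τ in (0:ℝ)..1, A ((F' (xs + τ • (x - xs))) (x - xs))) = A (F x) := by
    have := intervalIntegral.integral_eq_sub_of_hasDerivAt
      (f := fun τ : ℝ => A (F (xs + τ • (x - xs))))
      (f' := fun τ : ℝ => A ((F' (xs + τ • (x - xs))) (x - xs)))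
      (fun τ hτ => by
        rw [uIcc_of_le zero_le_one] at hτ
        have hp : HasDerivAt (fun τ : ℝ => xs + τ • (x - xs)) (x - xs) τ := by
          simpa using ((hasDerivAt_id τ).smul_const (x - xs)).const_add xs
        have hFp : HasDerivAt (fun τ : ℝ => F (xs + τ • (x - xs)))
            ((F' (xs + τ • (x - xs))) (x - xs)) τ :=
          (hF' _ (hseg τ hτ)).comp_hasDerivAt τ hp
        exact A.hasFDerivAt.comp_hasDerivAt τ hFp)
      hint2
    rw [this]
    simp [hFxs]
  -- integral representation of the Newton residual
  have hkey : (A.comp (F' x)) (x - xs) - A (F x)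
      = ∫ τ in (0:ℝ)..1, (A.comp (F' x - F' (xs + τ • (x - xs)))) (x - xs) := by
    have heq : EqOn (fun τ : ℝ => (A.comp (F' x - F' (xs + τ • (x - xs)))) (x - xs))
        (fun τ : ℝ => (A.comp (F' x)) (x - xs) - A ((F' (xs + τ • (x - xs))) (x - xs)))
        (uIcc (0:ℝ) 1) := fun τ _ => by simp
    rw [intervalIntegral.integral_congr heq,
      intervalIntegral.integral_sub intervalIntegrable_const hint2, hgFTC,
      intervalIntegral.integral_const]
    simp
  -- norm bound on the integral
  have hae : ∀ᵐ τ ∂MeasureTheory.volume.restrict (Set.uIoc (0:ℝ) 1),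
      ‖(A.comp (F' x - F' (xs + τ • (x - xs)))) (x - xs)‖ ≤ (f' t - f' (τ * t)) * t := by
    rw [uIoc_of_le zero_le_one]
    refine (MeasureTheory.ae_restrict_iff' measurableSet_Ioc).mpr
      (Filter.Eventually.of_forall fun τ hτ => ?_)
    have hτ' : τ ∈ Icc (0:ℝ) 1 := ⟨hτ.1.le, hτ.2⟩
    calc ‖(A.comp (F' x - F' (xs + τ • (x - xs)))) (x - xs)‖
        ≤ ‖A.comp (F' x - F' (xs + τ • (x - xs)))‖ * t :=
          ContinuousLinearMap.le_opNorm _ _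
      _ ≤ (f' t - f' (τ * t)) * t :=
          mul_le_mul_of_nonneg_right (hmaj τ hτ' x hxball) ht0
  have hbint : IntervalIntegrable (fun τ => (f' t - f' (τ * t)) * t)
      MeasureTheory.volume 0 1 := by
    apply ContinuousOn.intervalIntegrable
    rw [uIcc_of_le zero_le_one]
    exact ((continuousOn_const.sub
      (hcont.comp ((continuous_id.mul continuous_const).continuousOn) hmul_maps)).mul
      continuousOn_const)
  have hnormint : ‖(A.comp (F' x)) (x - xs) - A (F x)‖ ≤ t * f' t - f t := by
    rw [hkey]
    calc ‖∫ τ in (0:ℝ)..1, (A.comp (F' x - F' (xs + τ • (x - xs)))) (x - xs)‖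
        ≤ |∫ τ in (0:ℝ)..1, (f' t - f' (τ * t)) * t| :=
          intervalIntegral.norm_integral_le_abs_of_norm_le hae hbint
      _ = |t * f' t - f t| := by rw [hIbound]
      _ = t * f' t - f t := abs_of_nonneg (by linarith)
  -- expressing the Newton step through u⁻¹
  have huinv : ∀ v, ((u⁻¹ : _ˣ) : EuclideanSpace ℝ (Fin n) →L[ℝ] EuclideanSpace ℝ (Fin n))
      ((u : EuclideanSpace ℝ (Fin n) →L[ℝ] EuclideanSpace ℝ (Fin n)) v) = v := by
    intro v
    rw [← ContinuousLinearMap.comp_apply, ← ContinuousLinearMap.mul_def, u.inv_mul,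
      ContinuousLinearMap.one_apply]
  have hNeq : x - ((w⁻¹ : _ˣ) : EuclideanSpace ℝ (Fin n) →L[ℝ] EuclideanSpace ℝ (Fin n)) (F x) - xs
      = ((u⁻¹ : _ˣ) : EuclideanSpace ℝ (Fin n) →L[ℝ] EuclideanSpace ℝ (Fin n))
        ((A.comp (F' x)) (x - xs) - A (F x)) := by
    rw [map_sub, ← huval, huinv, hBeq, ContinuousLinearMap.comp_apply]
    abel
  have hu_inv_norm : ‖((u⁻¹ : _ˣ) : EuclideanSpace ℝ (Fin n) →L[ℝ] EuclideanSpace ℝ (Fin n))‖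
      ≤ (-(f' t))⁻¹ := by
    refine le_trans (oneSub_inv_norm_le Eo hE1) ?_
    apply inv_anti₀ (by linarith)
    linarith
  refine ⟨((w⁻¹ : _ˣ) : EuclideanSpace ℝ (Fin n) →L[ℝ] EuclideanSpace ℝ (Fin n)), ?_, ?_, ?_, ?_⟩
  · have h := w.inv_mul
    rw [hwval, ContinuousLinearMap.mul_def, ContinuousLinearMap.one_def] at h
    exact h
  · have h := w.mul_inv
    rw [hwval, ContinuousLinearMap.mul_def, ContinuousLinearMap.one_def] at h
    exact h
  ·
    calc ‖x - ((w⁻¹ : _ˣ) : EuclideanSpace ℝ (Fin n) →L[ℝ]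
            EuclideanSpace ℝ (Fin n)) (F x) - xs‖
        = ‖((u⁻¹ : _ˣ) : EuclideanSpace ℝ (Fin n) →L[ℝ] EuclideanSpace ℝ (Fin n))
            ((A.comp (F' x)) (x - xs) - A (F x))‖ := by rw [hNeq]
      _ ≤ ‖((u⁻¹ : _ˣ) : EuclideanSpace ℝ (Fin n) →L[ℝ] EuclideanSpace ℝ (Fin n))‖
            * ‖(A.comp (F' x)) (x - xs) - A (F x)‖ := ContinuousLinearMap.le_opNorm _ _
      _ ≤ (-(f' t))⁻¹ * (t * f' t - f t) :=
            mul_le_mul hu_inv_norm hnormint (norm_nonneg _)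
              (inv_nonneg.mpr (by linarith))
      _ = f t / f' t - t := by
            field_simp [hf'tne]
            ring
  ·
    have hq : t ≤ f t / f' t := by
      rw [le_div_iff_of_neg hf't]
      exact hfle
    rw [abs_of_nonpos (by linarith), neg_sub]
end

section
/- Under assumption A1 (f is a majorant function for F on B(x*,κ)), let r = min{ρ,κ}, x ∈ C ∩ B(x*,r), θ ≥ 0, and let z = CondG(N_F(x), x, θ‖S_F(x)‖²) with S_F(x) = F'(x)^{-1}F(x). Then ‖z - x*‖ ≤ (1+√(2θ))|n_f(‖x-x*‖)| + √(2θ)‖x-x*‖. Consequently, if √(2θ) ≤ λ, then z ∈ C ∩ B(x*,r). -/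
open Set Metric

set_option maxHeartbeats 1000000 in
theorem stmt12 {n : ℕ} {Ω : Set (EuclideanSpace ℝ (Fin n))} (hΩ : IsOpen Ω)
    (F : EuclideanSpace ℝ (Fin n) → EuclideanSpace ℝ (Fin n))
    (F' : EuclideanSpace ℝ (Fin n) → EuclideanSpace ℝ (Fin n) →L[ℝ] EuclideanSpace ℝ (Fin n))
    (hF' : ∀ x ∈ Ω, HasFDerivAt F (F' x) x)
    (hF'cont : ContinuousOn F' Ω)
    (xs : EuclideanSpace ℝ (Fin n)) (hxs : xs ∈ Ω) (hFxs : F xs = 0)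
    (A : EuclideanSpace ℝ (Fin n) →L[ℝ] EuclideanSpace ℝ (Fin n))
    (hA1 : A.comp (F' xs) = ContinuousLinearMap.id ℝ _)
    (hA2 : (F' xs).comp A = ContinuousLinearMap.id ℝ _)
    {R : ℝ} (hR : 0 < R) (f f' : ℝ → ℝ)
    (hderiv : ∀ t ∈ Ico (0:ℝ) R, HasDerivWithinAt f (f' t) (Ico 0 R) t)
    (hcont : ContinuousOn f' (Ico 0 R))
    (hf0 : f 0 = 0) (hf'0 : f' 0 = -1)
    (hmono : StrictMonoOn f' (Ico 0 R))
    (κ ν : ℝ)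
    (hκ : κ = sSup {t | t ∈ Ico 0 R ∧ ball xs t ⊆ Ω})
    (hν : ν = sSup {t | t ∈ Ico 0 R ∧ f' t < 0})
    (hmaj : ∀ τ ∈ Icc (0:ℝ) 1, ∀ x ∈ ball xs κ,
      ‖A.comp (F' x - F' (xs + τ • (x - xs)))‖ ≤ f' ‖x - xs‖ - f' (τ * ‖x - xs‖))
    (C : Set (EuclideanSpace ℝ (Fin n))) (hCne : C.Nonempty) (hCconv : Convex ℝ C)
    (hCcomp : IsCompact C) (hCΩ : C ⊆ Ω) (hxsC : xs ∈ C)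
    (lam : ℝ) (hlam : lam ∈ Ico (0:ℝ) 1)
    (ρ : ℝ)
    (hρ : ρ = sSup {δ | δ ∈ Ioo 0 ν ∧
      ∀ t ∈ Ioo 0 δ, (1 + lam) * |t - f t / f' t| / t + lam < 1})
    (r : ℝ) (hr : r = min ρ κ)
    (x : EuclideanSpace ℝ (Fin n)) (hx : x ∈ C ∩ ball xs r)
    (B : EuclideanSpace ℝ (Fin n) →L[ℝ] EuclideanSpace ℝ (Fin n))
    (hB1 : B.comp (F' x) = ContinuousLinearMap.id ℝ _)
    (hB2 : (F' x).comp B = ContinuousLinearMap.id ℝ _)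
    (θ : ℝ) (hθ : 0 ≤ θ)
    (z : EuclideanSpace ℝ (Fin n)) (hzC : z ∈ C)
    (hzopt : ∀ u ∈ C, (inner ℝ (z - (x - B (F x))) (u - z) : ℝ) ≥ -(θ * ‖B (F x)‖ ^ 2)) :
    ‖z - xs‖ ≤ (1 + Real.sqrt (2 * θ)) * |‖x - xs‖ - f ‖x - xs‖ / f' ‖x - xs‖| +
        Real.sqrt (2 * θ) * ‖x - xs‖ ∧
      (Real.sqrt (2 * θ) ≤ lam → z ∈ C ∩ ball xs r) := by
  obtain ⟨hxC, hxball⟩ := hx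
  have hrρ : r ≤ ρ := by rw [hr]; exact min_le_left _ _
  have hrκ : r ≤ κ := by rw [hr]; exact min_le_right _ _
  have htr : ‖x - xs‖ < r := by rwa [mem_ball, dist_eq_norm] at hxball
  have hr0 : 0 < r := lt_of_le_of_lt (norm_nonneg _) htr
  have hρ0 : 0 < ρ := lt_of_lt_of_le hr0 hrρ
  have hνne : ({s | s ∈ Ico (0:ℝ) R ∧ f' s < 0}).Nonempty :=
    ⟨0, ⟨⟨le_refl 0, hR⟩, by rw [hf'0]; norm_num⟩⟩
  have hf'neg : ∀ s : ℝ, 0 ≤ s → s < ν → s < R ∧ f' s < 0 := by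
    intro s hs0 hsν
    obtain ⟨u, hu, hsu⟩ := exists_lt_of_lt_csSup hνne (hν ▸ hsν)
    have hsR : s < R := lt_of_lt_of_le hsu (le_of_lt hu.1.2)
    exact ⟨hsR, lt_trans (hmono ⟨hs0, hsR⟩ hu.1 hsu) hu.2⟩
  have hballΩ : ball xs r ⊆ Ω := by
    intro w hw
    have hwκ : dist w xs < κ := lt_of_lt_of_le (mem_ball.mp hw) hrκ
    obtain ⟨ε, hε0, hεΩ⟩ := Metric.isOpen_iff.mp hΩ xs hxs
    have hne : ({s | s ∈ Ico (0:ℝ) R ∧ ball xs s ⊆ Ω}).Nonempty := by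
      refine ⟨min ε R / 2, ⟨⟨by positivity, ?_⟩, ?_⟩⟩
      · have : min ε R ≤ R := min_le_right _ _
        linarith
      · intro y hy
        apply hεΩ
        have : dist y xs < min ε R / 2 := mem_ball.mp hy
        have h2 : min ε R / 2 ≤ ε := le_trans (by linarith [min_le_left ε R, lt_min hε0 hR] : min ε R / 2 ≤ min ε R) (min_le_left _ _)
        exact mem_ball.mpr (lt_of_lt_of_le this h2)
    obtain ⟨s, hs, hws⟩ := exists_lt_of_lt_csSup hne (hκ ▸ hwκ)
    exact hs.2 (mem_ball.mpr hws)
  rcases eq_or_lt_of_le (norm_nonneg (x - xs)) with h0 | htpos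
  · -- degenerate case x = xs
    have hxeq : x = xs := by
      have h1 : ‖x - xs‖ = 0 := h0.symm
      rwa [norm_eq_zero, sub_eq_zero] at h1
    have hFx : F x = 0 := by rw [hxeq, hFxs]
    have hBFx : B (F x) = 0 := by rw [hFx, map_zero]
    have hz : z = xs := by
      have h1 := hzopt xs hxsC
      rw [hBFx, hxeq] at h1
      simp only [norm_zero, sub_zero] at h1
      have h2 : (inner ℝ (z - xs) (xs - z) : ℝ) = - ‖z - xs‖^2 := by
        rw [show xs - z = -(z - xs) by abel, inner_neg_right, real_inner_self_eq_norm_sq]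
      have h3 : ‖z - xs‖^2 ≤ 0 := by
        have := h1
        nlinarith [h2, this, hθ]
      have : ‖z - xs‖ = 0 := by nlinarith [norm_nonneg (z - xs)]
      rwa [norm_eq_zero, sub_eq_zero] at this
    constructor
    · rw [hz, hxeq]
      simp [hf0, Real.sqrt_nonneg]
    · intro _
      exact ⟨hz ▸ hxsC, by rw [hz]; exact mem_ball_self hr0⟩
  · -- main case
    set t := ‖x - xs‖ with htdef
    have hρν : ρ ≤ ν := by
      have hρne : ({δ | δ ∈ Ioo 0 ν ∧
          ∀ s ∈ Ioo 0 δ, (1 + lam) * |s - f s / f' s| / s + lam < 1}).Nonempty := by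
        by_contra h
        rw [Set.not_nonempty_iff_eq_empty] at h
        rw [h, Real.sSup_empty] at hρ
        linarith
      rw [hρ]
      exact csSup_le hρne (fun δ hδ => hδ.1.2.le)
    have htν : t < ν := lt_of_lt_of_le htr (le_trans hrρ hρν)
    obtain ⟨htR, hf't⟩ := hf'neg t (le_of_lt htpos) htν
    have hxκ : x ∈ ball xs κ := by
      rw [mem_ball, dist_eq_norm]
      exact lt_of_lt_of_le htr hrκ
    -- pointwise inverse identities
    have hA1' : ∀ v, A ((F' xs) v) = v := fun v => by
      rw [← ContinuousLinearMap.comp_apply, hA1]; rfl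
    have hA2' : ∀ v, (F' xs) (A v) = v := fun v => by
      rw [← ContinuousLinearMap.comp_apply, hA2]; rfl
    have hB1' : ∀ v, B ((F' x) v) = v := fun v => by
      rw [← ContinuousLinearMap.comp_apply, hB1]; rfl
    have hB2' : ∀ v, (F' x) (B v) = v := fun v => by
      rw [← ContinuousLinearMap.comp_apply, hB2]; rfl
    -- segment
    set γ : ℝ → EuclideanSpace ℝ (Fin n) := fun τ => xs + τ • (x - xs) with hγdef
    have hγsub : ∀ τ, γ τ - xs = τ • (x - xs) := by intro τ; simp [hγdef]
    have hγmem : ∀ τ ∈ Icc (0:ℝ) 1, γ τ ∈ ball xs r := by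
      intro τ hτ
      rw [mem_ball, dist_eq_norm, hγsub, norm_smul]
      calc ‖τ‖ * ‖x - xs‖ ≤ 1 * ‖x - xs‖ := by
            apply mul_le_mul_of_nonneg_right _ (norm_nonneg _)
            rw [Real.norm_eq_abs, abs_of_nonneg hτ.1]; exact hτ.2
        _ = t := one_mul t
        _ < r := htr
    have hγcont : Continuous γ := by fun_prop
    have hFγ : ∀ τ ∈ Icc (0:ℝ) 1, HasDerivAt (fun s => F (γ s)) (F' (γ τ) (x - xs)) τ := by
      intro τ hτ
      have h1 : HasDerivAt γ (x - xs) τ := by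
        have h := ((hasDerivAt_id τ).smul_const (x - xs)).const_add xs
        rw [one_smul] at h
        exact h
      exact (hF' (γ τ) (hballΩ (hγmem τ hτ))).comp_hasDerivAt τ h1
    have hcontγ : ContinuousOn (fun τ => (F' (γ τ)) (x - xs)) (Icc (0:ℝ) 1) := by
      apply ContinuousOn.clm_apply
      · exact hF'cont.comp hγcont.continuousOn (fun τ hτ => hballΩ (hγmem τ hτ))
      · exact continuousOn_const
    have hintegrable : IntervalIntegrable (fun τ => (F' (γ τ)) (x - xs))
        MeasureTheory.volume 0 1 := by
      apply ContinuousOn.intervalIntegrable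
      rwa [uIcc_of_le zero_le_one]
    have hγ1 : γ 1 = x := by simp [hγdef]
    have hγ0 : γ 0 = xs := by simp [hγdef]
    have hFint : F x = ∫ τ in (0:ℝ)..1, F' (γ τ) (x - xs) := by
      have h := intervalIntegral.integral_eq_sub_of_hasDerivAt
        (f := fun s => F (γ s))
        (fun τ hτ => hFγ τ (by rwa [uIcc_of_le zero_le_one] at hτ)) hintegrable
      simp only [hγ1, hγ0, hFxs, sub_zero] at h
      exact h.symm
    -- w and Newton bound
    set w := (F' x) (x - xs) - F x with hwdef
    have hsubint : IntervalIntegrable (fun τ => (F' x) (x - xs) - (F' (γ τ)) (x - xs))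
        MeasureTheory.volume 0 1 := (intervalIntegrable_const).sub hintegrable
    have hwint : w = ∫ τ in (0:ℝ)..1, ((F' x) (x - xs) - (F' (γ τ)) (x - xs)) := by
      rw [intervalIntegral.integral_sub intervalIntegrable_const hintegrable,
        intervalIntegral.integral_const, ← hFint, hwdef]
      simp
    have hy : x - B (F x) - xs = B w := by
      rw [hwdef, map_sub, hB1']; abel
    have hAwint : A w = ∫ τ in (0:ℝ)..1, A ((F' x) (x - xs) - (F' (γ τ)) (x - xs)) := by
      rw [hwint]
      exact (ContinuousLinearMap.intervalIntegral_comp_comm A hsubint).symm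
    -- continuity facts for f ∘ (τ * t) etc.
    have hmul_mapsTo : MapsTo (fun τ : ℝ => τ * t) (Icc 0 1) (Ico 0 R) := by
      intro τ hτ
      have h1 : τ * t ≤ 1 * t := mul_le_mul_of_nonneg_right hτ.2 htpos.le
      exact ⟨mul_nonneg hτ.1 htpos.le, show τ * t < R by rw [one_mul] at h1; linarith⟩
    have hfcontOn : ContinuousOn f (Ico 0 R) :=
      fun s hs => (hderiv s hs).continuousWithinAt
    have hφcont : ContinuousOn (fun τ : ℝ => f (τ * t)) (Icc 0 1) :=
      hfcontOn.comp ((continuous_id.mul continuous_const).continuousOn) hmul_mapsTo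
    have hf'τcont : ContinuousOn (fun τ : ℝ => f' (τ * t) * t) (Icc 0 1) :=
      (hcont.comp ((continuous_id.mul continuous_const).continuousOn) hmul_mapsTo).mul
        continuousOn_const
    have hf'τint : IntervalIntegrable (fun τ : ℝ => f' (τ * t) * t)
        MeasureTheory.volume 0 1 := by
      apply ContinuousOn.intervalIntegrable
      rwa [uIcc_of_le zero_le_one]
    have hφderiv : ∀ τ ∈ Ioo (0:ℝ) 1,
        HasDerivWithinAt (fun τ : ℝ => f (τ * t)) (f' (τ * t) * t) (Ioi τ) τ := by
      intro τ hτ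
      have hs : τ * t ∈ Ioo 0 R := by
        constructor
        · exact mul_pos hτ.1 htpos
        · have : τ * t < t := by nlinarith [hτ.2, htpos]
          linarith
      have h1 : HasDerivAt f (f' (τ * t)) (τ * t) :=
        (hderiv _ ⟨hs.1.le, hs.2⟩).hasDerivAt (Ico_mem_nhds hs.1 hs.2)
      have h2 : HasDerivAt (fun τ : ℝ => τ * t) t τ := by
        simpa using (hasDerivAt_id τ).mul_const t
      exact (h1.comp τ h2).hasDerivWithinAt
    have hφint : ∫ τ in (0:ℝ)..1, f' (τ * t) * t = f t := by
      have h := intervalIntegral.integral_eq_sub_of_hasDeriv_right_of_le zero_le_one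
        hφcont hφderiv hf'τint
      simpa [hf0] using h
    -- bound on ‖A w‖
    have hAw : ‖A w‖ ≤ t * f' t - f t := by
      have hnormcont : ContinuousOn
          (fun τ => ‖A ((F' x) (x - xs) - (F' (γ τ)) (x - xs))‖) (Icc (0:ℝ) 1) := by
        apply ContinuousOn.norm
        exact (A.continuous.comp_continuousOn (continuousOn_const.sub hcontγ))
      have hnormint : IntervalIntegrable
          (fun τ => ‖A ((F' x) (x - xs) - (F' (γ τ)) (x - xs))‖)
          MeasureTheory.volume 0 1 := by
        apply ContinuousOn.intervalIntegrable
        rwa [uIcc_of_le zero_le_one]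
      have hgint : IntervalIntegrable (fun τ : ℝ => (f' t - f' (τ * t)) * t)
          MeasureTheory.volume 0 1 := by
        apply ContinuousOn.intervalIntegrable
        rw [uIcc_of_le zero_le_one]
        exact (continuousOn_const.sub
          (hcont.comp ((continuous_id.mul continuous_const).continuousOn) hmul_mapsTo)).mul
          continuousOn_const
      have hpointwise : ∀ τ ∈ Icc (0:ℝ) 1,
          ‖A ((F' x) (x - xs) - (F' (γ τ)) (x - xs))‖ ≤ (f' t - f' (τ * t)) * t := by
        intro τ hτ
        have hm := hmaj τ hτ x hxκ
        rw [← htdef] at hm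
        have heq : A ((F' x) (x - xs) - (F' (γ τ)) (x - xs))
            = (A.comp (F' x - F' (γ τ))) (x - xs) := by
          simp [ContinuousLinearMap.comp_apply, ContinuousLinearMap.sub_apply]
        rw [heq]
        calc ‖(A.comp (F' x - F' (γ τ))) (x - xs)‖
            ≤ ‖A.comp (F' x - F' (γ τ))‖ * ‖x - xs‖ := ContinuousLinearMap.le_opNorm _ _
          _ ≤ (f' t - f' (τ * t)) * t := by
              apply mul_le_mul_of_nonneg_right _ (norm_nonneg _)
              exact hm
      calc ‖A w‖ = ‖∫ τ in (0:ℝ)..1, A ((F' x) (x - xs) - (F' (γ τ)) (x - xs))‖ := by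
            rw [hAwint]
        _ ≤ ∫ τ in (0:ℝ)..1, ‖A ((F' x) (x - xs) - (F' (γ τ)) (x - xs))‖ :=
            intervalIntegral.norm_integral_le_integral_norm zero_le_one
        _ ≤ ∫ τ in (0:ℝ)..1, (f' t - f' (τ * t)) * t :=
            intervalIntegral.integral_mono_on zero_le_one hnormint hgint hpointwise
        _ = t * f' t - f t := by
            simp only [sub_mul]
            rw [intervalIntegral.integral_sub intervalIntegrable_const hf'τint,
              intervalIntegral.integral_const, hφint]
            simp; ring
    -- operator norm bound
    have hEop : ‖ContinuousLinearMap.id ℝ (EuclideanSpace ℝ (Fin n)) - A.comp (F' x)‖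
        ≤ 1 + f' t := by
      have h0 := hmaj 0 ⟨le_refl 0, zero_le_one⟩ x hxκ
      rw [← htdef] at h0
      simp only [zero_smul, add_zero, zero_mul, hf'0] at h0
      have heq : ContinuousLinearMap.id ℝ (EuclideanSpace ℝ (Fin n)) - A.comp (F' x)
          = -(A.comp (F' x - F' xs)) := by
        ext v
        simp [ContinuousLinearMap.comp_apply, ContinuousLinearMap.sub_apply, map_sub, hA1']
      rw [heq, norm_neg]
      linarith
    have hM : ‖B.comp (F' xs)‖ ≤ 1 / (-(f' t)) := by
      have hId : B.comp (F' xs) = ContinuousLinearMap.id ℝ (EuclideanSpace ℝ (Fin n))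
          + (ContinuousLinearMap.id ℝ (EuclideanSpace ℝ (Fin n)) - A.comp (F' x)).comp
            (B.comp (F' xs)) := by
        ext v
        simp [ContinuousLinearMap.comp_apply, ContinuousLinearMap.sub_apply,
          ContinuousLinearMap.add_apply, hB2', hA1']
      have h1 : ‖B.comp (F' xs)‖ ≤ 1
          + ‖ContinuousLinearMap.id ℝ (EuclideanSpace ℝ (Fin n)) - A.comp (F' x)‖
            * ‖B.comp (F' xs)‖ := by
        calc ‖B.comp (F' xs)‖
            = ‖ContinuousLinearMap.id ℝ (EuclideanSpace ℝ (Fin n))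
              + (ContinuousLinearMap.id ℝ (EuclideanSpace ℝ (Fin n)) - A.comp (F' x)).comp
                (B.comp (F' xs))‖ := by rw [← hId]
          _ ≤ ‖(ContinuousLinearMap.id ℝ (EuclideanSpace ℝ (Fin n)))‖
              + ‖(ContinuousLinearMap.id ℝ (EuclideanSpace ℝ (Fin n)) - A.comp (F' x)).comp
                (B.comp (F' xs))‖ := norm_add_le _ _
          _ ≤ 1 + ‖ContinuousLinearMap.id ℝ (EuclideanSpace ℝ (Fin n)) - A.comp (F' x)‖
              * ‖B.comp (F' xs)‖ :=
              add_le_add ContinuousLinearMap.norm_id_le (ContinuousLinearMap.opNorm_comp_le _ _)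
      rw [le_div_iff₀ (by linarith : (0:ℝ) < -(f' t))]
      nlinarith [norm_nonneg (B.comp (F' xs)),
        mul_le_mul_of_nonneg_right hEop (norm_nonneg (B.comp (F' xs))), h1]
    have hnum0 : 0 ≤ t * f' t - f t := le_trans (norm_nonneg (A w)) hAw
    have hNewton : ‖x - B (F x) - xs‖ ≤ (t * f' t - f t) / (-(f' t)) := by
      have hw2 : x - B (F x) - xs = (B.comp (F' xs)) (A w) := by
        rw [ContinuousLinearMap.comp_apply, hA2', hy]
      rw [hw2]
      calc ‖(B.comp (F' xs)) (A w)‖ ≤ ‖B.comp (F' xs)‖ * ‖A w‖ :=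
            ContinuousLinearMap.le_opNorm _ _
        _ ≤ (1 / (-(f' t))) * (t * f' t - f t) := by
            exact mul_le_mul hM hAw (norm_nonneg _) (div_nonneg zero_le_one (by linarith))
        _ = (t * f' t - f t) / (-(f' t)) := by ring
    have hne : f' t ≠ 0 := ne_of_lt hf't
    have hEabs : |t - f t / f' t| = (t * f' t - f t) / (-(f' t)) := by
      rw [abs_of_nonpos, neg_sub]
      · rw [eq_div_iff (by linarith : -(f' t) ≠ 0)]
        field_simp
        ring
      · rw [sub_nonpos, le_div_iff_of_neg hf't]
        linarith
    have hbE : ‖x - B (F x) - xs‖ ≤ |t - f t / f' t| := by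
      rw [hEabs]; exact hNewton
    -- inexact projection estimate
    have hS : ‖B (F x)‖ ≤ t + |t - f t / f' t| := by
      have hxy : B (F x) = (x - xs) - (x - B (F x) - xs) := by abel
      calc ‖B (F x)‖ = ‖(x - xs) - (x - B (F x) - xs)‖ := by rw [← hxy]
        _ ≤ ‖x - xs‖ + ‖x - B (F x) - xs‖ := norm_sub_le _ _
        _ ≤ t + |t - f t / f' t| := add_le_add le_rfl hbE
    have hquad : ‖z - xs‖^2 ≤ θ * ‖B (F x)‖^2 + ‖x - B (F x) - xs‖ * ‖z - xs‖ := by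
      have h1 := hzopt xs hxsC
      have hsum : (z - (x - B (F x))) + (x - B (F x) - xs) = z - xs := by abel
      have hsplit : (inner ℝ (z - xs) (z - xs) : ℝ)
          = inner ℝ (z - (x - B (F x))) (z - xs) + inner ℝ (x - B (F x) - xs) (z - xs) := by
        rw [← inner_add_left, hsum]
      have hcs := real_inner_le_norm (x - B (F x) - xs) (z - xs)
      have hneg : (inner ℝ (z - (x - B (F x))) (z - xs) : ℝ)
          = - inner ℝ (z - (x - B (F x))) (xs - z) := by
        rw [show z - xs = -(xs - z) by abel, inner_neg_right]
      have hsqeq : (inner ℝ (z - xs) (z - xs) : ℝ) = ‖z - xs‖^2 :=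
        real_inner_self_eq_norm_sq _
      linarith [hsplit, hcs, hneg, hsqeq, h1]
    have hc0 : (0:ℝ) ≤ θ * ‖B (F x)‖^2 := by positivity
    have hsqrtc := Real.sq_sqrt hc0
    have ha : ‖z - xs‖ ≤ ‖x - B (F x) - xs‖ + Real.sqrt (θ * ‖B (F x)‖^2) := by
      nlinarith [Real.sqrt_nonneg (θ * ‖B (F x)‖^2), norm_nonneg (z - xs),
        norm_nonneg (x - B (F x) - xs), hquad, hsqrtc]
    have hsq2 : Real.sqrt (θ * ‖B (F x)‖^2) ≤ Real.sqrt (2*θ) * ‖B (F x)‖ := by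
      rw [Real.sqrt_mul hθ, Real.sqrt_sq (norm_nonneg _)]
      exact mul_le_mul_of_nonneg_right (Real.sqrt_le_sqrt (by linarith)) (norm_nonneg _)
    have hs2nn := Real.sqrt_nonneg (2*θ)
    have hpart1 : ‖z - xs‖ ≤ (1 + Real.sqrt (2*θ)) * |t - f t / f' t|
        + Real.sqrt (2*θ) * t := by
      have h5 : Real.sqrt (2*θ) * ‖B (F x)‖ ≤ Real.sqrt (2*θ) * (t + |t - f t / f' t|) :=
        mul_le_mul_of_nonneg_left hS hs2nn
      calc ‖z - xs‖ ≤ ‖x - B (F x) - xs‖ + Real.sqrt (θ * ‖B (F x)‖^2) := ha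
        _ ≤ |t - f t / f' t| + Real.sqrt (2*θ) * (t + |t - f t / f' t|) :=
            add_le_add hbE (le_trans hsq2 h5)
        _ = (1 + Real.sqrt (2*θ)) * |t - f t / f' t| + Real.sqrt (2*θ) * t := by ring
    refine ⟨hpart1, ?_⟩
    intro hslam
    refine ⟨hzC, ?_⟩
    have hρne : ({δ | δ ∈ Ioo 0 ν ∧
        ∀ s ∈ Ioo 0 δ, (1 + lam) * |s - f s / f' s| / s + lam < 1}).Nonempty := by
      by_contra h
      rw [Set.not_nonempty_iff_eq_empty] at h
      rw [h, Real.sSup_empty] at hρ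
      linarith
    obtain ⟨δ, hδ, htδ⟩ := exists_lt_of_lt_csSup hρne (hρ ▸ lt_of_lt_of_le htr hrρ)
    have hprop := hδ.2 t ⟨htpos, htδ⟩
    have h6 : (1 + lam) * |t - f t / f' t| < (1 - lam) * t := by
      have := (div_lt_iff₀ htpos).mp
        (by linarith : (1 + lam) * |t - f t / f' t| / t < 1 - lam)
      linarith
    have hE0 : 0 ≤ |t - f t / f' t| := abs_nonneg _
    rw [mem_ball, dist_eq_norm]
    have h7 : (1 + Real.sqrt (2*θ)) * |t - f t / f' t| ≤ (1 + lam) * |t - f t / f' t| :=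
      mul_le_mul_of_nonneg_right (by linarith) hE0
    have h8 : Real.sqrt (2*θ) * t ≤ lam * t :=
      mul_le_mul_of_nonneg_right hslam htpos.le
    calc ‖z - xs‖ ≤ (1 + Real.sqrt (2*θ)) * |t - f t / f' t| + Real.sqrt (2*θ) * t := hpart1
      _ < r := by linarith [h6, h7, h8, htr]
end

section
/- (Main convergence theorem) Assume F has a majorant function f on B(x*,κ), λ ∈ [0,1), r = min{ρ,κ}, {θ_k} ⊂ [0,λ²/2], and x₀ ∈ C ∩ B(x*,r)\{x*}. Then the Newton-CondG sequence defined by x_{k+1} = CondG(N_F(x_k), x_k, θ_k‖S_F(x_k)‖²) is well defined, contained in B(x*,r) ∩ C, converges to x*, and satisfies limsup_{k→∞} ‖x_{k+1}-x*‖/‖x_k-x*‖ ≤ √(2 θ̃), where θ̃ = limsup θ_k. -/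
open Set Metric Filter Topology
set_option maxHeartbeats 1000000
set_option synthInstance.maxHeartbeats 200000

-- CondG / variational inequality estimate
lemma aux_vi {E : Type*} [NormedAddCommGroup E] [InnerProductSpace ℝ E] {z y c : E} {ε : ℝ}
    (hε : 0 ≤ ε) (h : (inner ℝ (z - y) (c - z) : ℝ) ≥ -ε) :
    ‖z - c‖ ≤ ‖y - c‖ + Real.sqrt ε := by
  have h1 : (inner ℝ (z - y) (z - c) : ℝ) ≤ ε := by
    have : (inner ℝ (z - y) (c - z) : ℝ) = - (inner ℝ (z - y) (z - c) : ℝ) := by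
      rw [← inner_neg_right]; congr 1; abel
    rw [this] at h; linarith
  have h2 : ‖z - c‖ ^ 2 = (inner ℝ (z - y) (z - c) : ℝ) + (inner ℝ (y - c) (z - c) : ℝ) := by
    rw [← inner_add_left, ← real_inner_self_eq_norm_sq]
    congr 1; abel
  have h3 : (inner ℝ (y - c) (z - c) : ℝ) ≤ ‖y - c‖ * ‖z - c‖ := real_inner_le_norm _ _
  set a := ‖z - c‖; set b := ‖y - c‖
  have ha : 0 ≤ a := norm_nonneg _
  have hb : 0 ≤ b := norm_nonneg _
  have hs : 0 ≤ Real.sqrt ε := Real.sqrt_nonneg _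
  have hse : Real.sqrt ε ^ 2 = ε := Real.sq_sqrt hε
  nlinarith [sq_nonneg (a - b - Real.sqrt ε), sq_nonneg (a - Real.sqrt ε)]

-- Banach-type lower bound
lemma aux_inv {E : Type*} [NormedAddCommGroup E] [NormedSpace ℝ E] (T A : E →L[ℝ] E) (w : E)
    {e : ℝ} (he : ‖ContinuousLinearMap.id ℝ E - A.comp T‖ ≤ e) :
    (1 - e) * ‖w‖ ≤ ‖A (T w)‖ := by
  have h1 : ‖w - A (T w)‖ ≤ e * ‖w‖ := by
    have := (ContinuousLinearMap.id ℝ E - A.comp T).le_opNorm w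
    simpa using this.trans (mul_le_mul_of_nonneg_right he (norm_nonneg w))
  have h2 : ‖w‖ ≤ ‖A (T w)‖ + ‖w - A (T w)‖ := by
    have := norm_add_le (A (T w)) (w - A (T w)); simpa using this
  nlinarith [norm_nonneg w]

theorem stmt13 {n : ℕ} {Ω : Set (EuclideanSpace ℝ (Fin n))} (hΩ : IsOpen Ω)
    (F : EuclideanSpace ℝ (Fin n) → EuclideanSpace ℝ (Fin n))
    (F' : EuclideanSpace ℝ (Fin n) → EuclideanSpace ℝ (Fin n) →L[ℝ] EuclideanSpace ℝ (Fin n))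
    (hF' : ∀ x ∈ Ω, HasFDerivAt F (F' x) x)
    (hF'cont : ContinuousOn F' Ω)
    (xs : EuclideanSpace ℝ (Fin n)) (hxs : xs ∈ Ω) (hFxs : F xs = 0)
    (A : EuclideanSpace ℝ (Fin n) →L[ℝ] EuclideanSpace ℝ (Fin n))
    (hA1 : A.comp (F' xs) = ContinuousLinearMap.id ℝ _)
    (hA2 : (F' xs).comp A = ContinuousLinearMap.id ℝ _)
    {R : ℝ} (hR : 0 < R) (f f' : ℝ → ℝ)
    (hderiv : ∀ t ∈ Ico (0:ℝ) R, HasDerivWithinAt f (f' t) (Ico 0 R) t)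
    (hcont : ContinuousOn f' (Ico 0 R))
    (hf0 : f 0 = 0) (hf'0 : f' 0 = -1)
    (hmono : StrictMonoOn f' (Ico 0 R))
    (κ ν : ℝ)
    (hκ : κ = sSup {t | t ∈ Ico 0 R ∧ ball xs t ⊆ Ω})
    (hν : ν = sSup {t | t ∈ Ico 0 R ∧ f' t < 0})
    (hmaj : ∀ τ ∈ Icc (0:ℝ) 1, ∀ x ∈ ball xs κ,
      ‖A.comp (F' x - F' (xs + τ • (x - xs)))‖ ≤ f' ‖x - xs‖ - f' (τ * ‖x - xs‖))
    (C : Set (EuclideanSpace ℝ (Fin n))) (hCne : C.Nonempty) (hCconv : Convex ℝ C)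
    (hCcomp : IsCompact C) (hCΩ : C ⊆ Ω) (hxsC : xs ∈ C)
    (lam : ℝ) (hlam : lam ∈ Ico (0:ℝ) 1)
    (ρ : ℝ)
    (hρ : ρ = sSup {δ | δ ∈ Ioo 0 ν ∧
      ∀ t ∈ Ioo 0 δ, (1 + lam) * |t - f t / f' t| / t + lam < 1})
    (r : ℝ) (hr : r = min ρ κ)
    (θ : ℕ → ℝ) (hθ : ∀ k, θ k ∈ Icc 0 (lam ^ 2 / 2))
    (G : EuclideanSpace ℝ (Fin n) → EuclideanSpace ℝ (Fin n) →L[ℝ] EuclideanSpace ℝ (Fin n))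
    (hG : ∀ y ∈ ball xs r, (G y).comp (F' y) = ContinuousLinearMap.id ℝ _ ∧
      (F' y).comp (G y) = ContinuousLinearMap.id ℝ _)
    (x : ℕ → EuclideanSpace ℝ (Fin n))
    (hx0 : x 0 ∈ C ∩ ball xs r ∧ x 0 ≠ xs)
    (hstep : ∀ k, x (k + 1) ∈ C ∧ ∀ u ∈ C,
      (inner ℝ (x (k + 1) - (x k - G (x k) (F (x k)))) (u - x (k + 1)) : ℝ) ≥
        -(θ k * ‖G (x k) (F (x k))‖ ^ 2)) :
    (∀ k, x k ∈ ball xs r ∩ C) ∧ Tendsto x atTop (nhds xs) ∧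
      limsup (fun k => ‖x (k + 1) - xs‖ / ‖x k - xs‖) atTop ≤
        Real.sqrt (2 * limsup θ atTop) := by
  have hrpos : 0 < r := lt_of_le_of_lt dist_nonneg (mem_ball.1 hx0.1.2)
  have hrρ : r ≤ ρ := hr ▸ min_le_left _ _
  have hrκ : r ≤ κ := hr ▸ min_le_right _ _
  have hSν : ({t | t ∈ Ico 0 R ∧ f' t < 0}).Nonempty :=
    ⟨0, ⟨le_refl _, hR⟩, by rw [hf'0]; norm_num⟩
  have hSκ : ({t | t ∈ Ico 0 R ∧ ball xs t ⊆ Ω}).Nonempty :=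
    ⟨0, ⟨le_refl _, hR⟩, by rw [ball_zero]; exact empty_subset _⟩
  have hSρ : ({δ | δ ∈ Ioo 0 ν ∧
      ∀ t ∈ Ioo 0 δ, (1 + lam) * |t - f t / f' t| / t + lam < 1}).Nonempty := by
    by_contra h
    rw [not_nonempty_iff_eq_empty] at h
    rw [h, Real.sSup_empty] at hρ
    linarith [hρ ▸ hrρ]
  have hνR : ν ≤ R := by
    rw [hν]; exact csSup_le hSν (fun s hs => hs.1.2.le)
  have hκR : κ ≤ R := by
    rw [hκ]; exact csSup_le hSκ (fun s hs => hs.1.2.le)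
  have hρν : ρ ≤ ν := by
    rw [hρ]; exact csSup_le hSρ (fun s hs => hs.1.2.le)
  have hrν : r ≤ ν := hrρ.trans hρν
  have hrR : r ≤ R := hrν.trans hνR
  have hballκ : ball xs κ ⊆ Ω := by
    intro y hy
    obtain ⟨s, hs, hys⟩ := exists_lt_of_lt_csSup hSκ (hκ ▸ (mem_ball.1 hy))
    exact hs.2 (mem_ball.2 hys)
  have hf'neg : ∀ t, 0 ≤ t → t < ν → f' t < 0 := by
    intro t ht0 htν
    obtain ⟨s, hs, hts⟩ := exists_lt_of_lt_csSup hSν (hν ▸ htν)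
    exact lt_trans (hmono ⟨ht0, hts.trans hs.1.2⟩ hs.1 hts) hs.2
  have hrate : ∀ t, 0 < t → t < ρ → (1 + lam) * |t - f t / f' t| / t + lam < 1 := by
    intro t h0 hρt
    obtain ⟨δ, hδ, hδt⟩ := exists_lt_of_lt_csSup hSρ (hρ ▸ hρt)
    exact hδ.2 t ⟨h0, hδt⟩
  have hfc : ContinuousOn f (Ico 0 R) := fun t ht => (hderiv t ht).continuousWithinAt
  have hderivAt : ∀ t ∈ Ioo (0:ℝ) R, HasDerivAt f (f' t) t := fun t ht =>
    (hderiv t ⟨ht.1.le, ht.2⟩).hasDerivAt (Ico_mem_nhds ht.1 ht.2)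
  have hfb : ∀ t, 0 ≤ t → t < ν → -t ≤ f t ∧ f t ≤ t * f' t := by
    intro t ht0 htν
    rcases eq_or_lt_of_le ht0 with h | h
    · simp [← h, hf0]
    have htR : t < R := htν.trans_le hνR
    have hsub : Icc (0:ℝ) t ⊆ Ico 0 R := fun s hs => ⟨hs.1, lt_of_le_of_lt hs.2 htR⟩
    have hconv : Convex ℝ (Icc (0:ℝ) t) := convex_Icc _ _
    have hcof : ContinuousOn f (Icc 0 t) := hfc.mono hsub
    have hdiff : DifferentiableOn ℝ f (interior (Icc (0:ℝ) t)) := by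
      rw [interior_Icc]
      exact fun s hs =>
        ((hderivAt s ⟨hs.1, hs.2.trans htR⟩).differentiableAt).differentiableWithinAt
    have hderiveq : ∀ s ∈ interior (Icc (0:ℝ) t), deriv f s = f' s := by
      rw [interior_Icc]
      exact fun s hs => (hderivAt s ⟨hs.1, hs.2.trans htR⟩).deriv
    constructor
    · have := hconv.mul_sub_le_image_sub_of_le_deriv hcof hdiff (C := -1)
        (fun s hs => by
          rw [hderiveq s hs]
          rw [interior_Icc] at hs
          rw [← hf'0]
          exact (hmono ⟨le_refl _, hR⟩ ⟨hs.1.le, hs.2.trans htR⟩ hs.1).le)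
        0 ⟨le_refl _, ht0⟩ t ⟨ht0, le_refl _⟩ ht0
      rw [hf0] at this; linarith
    · have := hconv.image_sub_le_mul_sub_of_deriv_le hcof hdiff (C := f' t)
        (fun s hs => by
          rw [hderiveq s hs]
          rw [interior_Icc] at hs
          exact (hmono ⟨hs.1.le, hs.2.trans htR⟩ ⟨ht0, htR⟩ hs.2).le)
        0 ⟨le_refl _, ht0⟩ t ⟨ht0, le_refl _⟩ ht0
      rw [hf0] at this; linarith
  -- Newton step estimate
  have hNewton : ∀ z ∈ ball xs r,
      (-(f' ‖z - xs‖)) * ‖(z - G z (F z)) - xs‖ ≤ ‖z - xs‖ * f' ‖z - xs‖ - f ‖z - xs‖ := by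
    intro z hz
    set t := ‖z - xs‖ with ht
    set v := z - xs with hv
    have ht0 : 0 ≤ t := norm_nonneg _
    have htr : t < r := mem_ball_iff_norm.1 hz
    have htR : t < R := htr.trans_le hrR
    have hzκ : z ∈ ball xs κ := ball_subset_ball hrκ hz
    have hmemΩ : ∀ τ ∈ Icc (0:ℝ) 1, xs + τ • v ∈ Ω := by
      intro τ hτ
      apply hballκ
      rw [mem_ball_iff_norm]
      have : ‖xs + τ • v - xs‖ = τ * t := by
        rw [add_sub_cancel_left, norm_smul, Real.norm_eq_abs, abs_of_nonneg hτ.1]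
      rw [this]
      calc τ * t ≤ 1 * t := mul_le_mul_of_nonneg_right hτ.2 ht0
      _ = t := one_mul t
      _ < κ := htr.trans_le hrκ
    set h : ℝ → EuclideanSpace ℝ (Fin n) :=
      fun τ => A (F (xs + τ • v)) - τ • (A ((F' z) v)) with hh
    set B : ℝ → ℝ := fun τ => f' t * t * τ - f (τ * t) with hB
    have hmapsTo : MapsTo (fun τ : ℝ => τ * t) (Icc 0 1) (Ico 0 R) := by
      intro τ hτ
      constructor
      · exact mul_nonneg hτ.1 ht0
      · calc τ * t ≤ 1 * t := mul_le_mul_of_nonneg_right hτ.2 ht0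
        _ = t := one_mul t
        _ < R := htR
    have hh' : ∀ τ ∈ Icc (0:ℝ) 1,
        HasDerivAt h (A ((F' (xs + τ • v)) v) - A ((F' z) v)) τ := by
      intro τ hτ
      have hc : HasDerivAt (fun τ : ℝ => xs + τ • v) v τ := by
        simpa using ((hasDerivAt_id τ).smul_const v).const_add xs
      have hFc : HasDerivAt (fun τ : ℝ => F (xs + τ • v)) ((F' (xs + τ • v)) v) τ := by
        have := (hF' _ (hmemΩ τ hτ)).comp_hasDerivAt τ hc
        exact this
      have hAFc : HasDerivAt (fun τ : ℝ => A (F (xs + τ • v))) (A ((F' (xs + τ • v)) v)) τ :=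
        (A.hasFDerivAt.comp_hasDerivAt τ hFc)
      have hlin : HasDerivAt (fun τ : ℝ => τ • (A ((F' z) v))) (A ((F' z) v)) τ := by
        simpa using (hasDerivAt_id τ).smul_const (A ((F' z) v))
      exact hAFc.sub hlin
    have hB' : ∀ τ ∈ Ico (0:ℝ) 1,
        HasDerivWithinAt B (f' t * t - f' (τ * t) * t) (Ici τ) τ := by
      intro τ hτ
      have hmul : HasDerivWithinAt (fun τ : ℝ => τ * t) t (Icc 0 1) τ := by
        simpa using ((hasDerivAt_id τ).mul_const t).hasDerivWithinAt (s := Icc 0 1)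
      have hcomp : HasDerivWithinAt (fun τ : ℝ => f (τ * t)) (f' (τ * t) * t) (Icc 0 1) τ :=
        (hderiv (τ * t) (hmapsTo ⟨hτ.1, hτ.2.le⟩)).comp τ hmul hmapsTo
      have hlin : HasDerivWithinAt (fun τ : ℝ => f' t * t * τ) (f' t * t) (Icc 0 1) τ := by
        simpa using ((hasDerivAt_id τ).const_mul (f' t * t)).hasDerivWithinAt (s := Icc 0 1)
      have hBw : HasDerivWithinAt B (f' t * t - f' (τ * t) * t) (Icc 0 1) τ := hlin.sub hcomp
      apply hBw.mono_of_mem_nhdsWithin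
      have hss : Ici τ ∩ Iio 1 ⊆ Icc 0 1 := fun s hs => ⟨hτ.1.trans hs.1, hs.2.le⟩
      exact mem_nhdsWithin.2 ⟨Iio 1, isOpen_Iio, hτ.2, fun s hs => hss ⟨hs.2, hs.1⟩⟩
    have key1 : ‖h 1‖ ≤ B 1 := by
      have hconth : ContinuousOn h (Icc 0 1) := fun τ hτ =>
        ((hh' τ hτ).continuousAt).continuousWithinAt
      have hcontB : ContinuousOn B (Icc 0 1) := by
        apply ContinuousOn.sub
        · exact (continuous_const.mul continuous_id).continuousOn
        · exact hfc.comp ((continuous_id.mul continuous_const)).continuousOn hmapsTo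
      have ha : ‖h 0‖ ≤ B 0 := by
        simp [hh, hB, hFxs, hf0]
      have bound : ∀ τ ∈ Ico (0:ℝ) 1,
          ‖A ((F' (xs + τ • v)) v) - A ((F' z) v)‖ ≤ f' t * t - f' (τ * t) * t := by
        intro τ hτ
        have hm := hmaj τ ⟨hτ.1, hτ.2.le⟩ z hzκ
        have heq : A ((F' (xs + τ • v)) v) - A ((F' z) v)
            = -((A.comp (F' z - F' (xs + τ • v))) v) := by
          simp [ContinuousLinearMap.comp_apply, ContinuousLinearMap.sub_apply, map_sub]
        rw [heq, norm_neg]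
        calc ‖(A.comp (F' z - F' (xs + τ • v))) v‖
            ≤ ‖A.comp (F' z - F' (xs + τ • v))‖ * ‖v‖ := ContinuousLinearMap.le_opNorm _ _
          _ ≤ (f' t - f' (τ * t)) * t :=
              mul_le_mul_of_nonneg_right hm (norm_nonneg v)
          _ = f' t * t - f' (τ * t) * t := by ring
      exact image_norm_le_of_norm_deriv_right_le_deriv_boundary' hconth
        (fun τ hτ => (hh' τ ⟨hτ.1, hτ.2.le⟩).hasDerivWithinAt) ha hcontB hB' bound
        (Set.mem_Icc.2 ⟨zero_le_one, le_refl 1⟩)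
    have key1' : ‖A (F z - (F' z) v)‖ ≤ t * f' t - f t := by
      have h1 : h 1 = A (F z - (F' z) v) := by
        have hxv : xs + v = z := by rw [hv]; abel
        simp only [hh, one_smul, map_sub, hxv]
      have B1 : B 1 = t * f' t - f t := by
        simp only [hB, mul_one, one_mul]; ring
      rw [← h1, ← B1]; exact key1
    have hE : ‖ContinuousLinearMap.id ℝ (EuclideanSpace ℝ (Fin n)) - A.comp (F' z)‖
        ≤ f' t + 1 := by
      have hm := hmaj 0 ⟨le_refl _, zero_le_one⟩ z hzκ
      simp only [zero_smul, add_zero, zero_mul, hf'0] at hm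
      have heq : ContinuousLinearMap.id ℝ (EuclideanSpace ℝ (Fin n)) - A.comp (F' z)
          = -(A.comp (F' z - F' xs)) := by
        rw [ContinuousLinearMap.comp_sub, hA1]; abel
      rw [heq, norm_neg]
      calc ‖A.comp (F' z - F' xs)‖ ≤ f' t - -1 := hm
      _ = f' t + 1 := by ring
    have key2 := aux_inv (F' z) A ((z - G z (F z)) - xs) hE
    have hFw : (F' z) ((z - G z (F z)) - xs) = (F' z) v - F z := by
      have hid : (F' z) (G z (F z)) = F z := by
        have := ContinuousLinearMap.ext_iff.1 (hG z hz).2 (F z)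
        simpa using this
      have hrw : (z - G z (F z)) - xs = v - G z (F z) := by rw [hv]; abel
      rw [hrw, map_sub, hid]
    have hnorm : ‖A ((F' z) ((z - G z (F z)) - xs))‖ ≤ t * f' t - f t := by
      rw [hFw]
      calc ‖A ((F' z) v - F z)‖ = ‖-(A (F z - (F' z) v))‖ := by
            rw [← map_neg]; congr 1; abel
      _ = ‖A (F z - (F' z) v)‖ := norm_neg _
      _ ≤ t * f' t - f t := key1'
    calc (-(f' t)) * ‖(z - G z (F z)) - xs‖
        = (1 - (f' t + 1)) * ‖(z - G z (F z)) - xs‖ := by ring_nf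
    _ ≤ ‖A ((F' z) ((z - G z (F z)) - xs))‖ := key2
    _ ≤ t * f' t - f t := hnorm
  -- variational inequality estimate
  have hVI : ∀ k, ‖x (k+1) - xs‖ ≤
      ‖(x k - G (x k) (F (x k))) - xs‖ + Real.sqrt (θ k) * ‖G (x k) (F (x k))‖ := by
    intro k
    have hε : 0 ≤ θ k * ‖G (x k) (F (x k))‖ ^ 2 := mul_nonneg (hθ k).1 (sq_nonneg _)
    have := aux_vi hε ((hstep k).2 xs hxsC)
    rwa [Real.sqrt_mul (hθ k).1, Real.sqrt_sq (norm_nonneg _)] at this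
  have hS : ∀ k, ‖G (x k) (F (x k))‖ ≤ ‖x k - xs‖ + ‖(x k - G (x k) (F (x k))) - xs‖ := by
    intro k
    have heq : (x k - xs) - ((x k - G (x k) (F (x k))) - xs) = G (x k) (F (x k)) := by
      rw [sub_sub_sub_cancel_right, sub_sub_cancel]
    calc ‖G (x k) (F (x k))‖
        = ‖(x k - xs) - ((x k - G (x k) (F (x k))) - xs)‖ := by rw [heq]
    _ ≤ ‖x k - xs‖ + ‖(x k - G (x k) (F (x k))) - xs‖ := norm_sub_le _ _
  -- per-step combined estimate
  have hmain : ∀ k, x k ∈ ball xs r →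
      (‖x (k+1) - xs‖ ≤ ((f' ‖x k - xs‖ + 1) / (-(f' ‖x k - xs‖))
          + Real.sqrt (θ k) * (1 + (f' ‖x k - xs‖ + 1) / (-(f' ‖x k - xs‖)))) * ‖x k - xs‖)
      ∧ ‖x (k+1) - xs‖ ≤
          (1 + lam) * |‖x k - xs‖ - f ‖x k - xs‖ / f' ‖x k - xs‖| + lam * ‖x k - xs‖ := by
    intro k hk
    set tk := ‖x k - xs‖ with htk
    set b := ‖(x k - G (x k) (F (x k))) - xs‖ with hbdef
    have htk0 : 0 ≤ tk := norm_nonneg _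
    have htkr : tk < r := mem_ball_iff_norm.1 hk
    have htkν : tk < ν := htkr.trans_le hrν
    have hf't : f' tk < 0 := hf'neg tk htk0 htkν
    have hnf't : 0 < -(f' tk) := by linarith
    have hNb := hNewton (x k) hk
    have hb0 : 0 ≤ b := norm_nonneg _
    have hbeta : b ≤ (tk * f' tk - f tk) / (-(f' tk)) := by
      rw [le_div_iff₀ hnf't]; linarith [hNb]
    have habs : (tk * f' tk - f tk) / (-(f' tk)) ≤ |tk - f tk / f' tk| := by
      have hne : f' tk ≠ 0 := ne_of_lt hf't
      have heq : tk - f tk / f' tk = (tk * f' tk - f tk) / f' tk := by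
        field_simp
      have h2 : |tk - f tk / f' tk| = |tk * f' tk - f tk| / (-(f' tk)) := by
        rw [heq, abs_div, abs_of_neg hf't]
      rw [h2]
      exact (div_le_div_iff_of_pos_right hnf't).2 (le_abs_self _)
    have hgam : (tk * f' tk - f tk) / (-(f' tk)) ≤ tk * ((f' tk + 1) / (-(f' tk))) := by
      rw [← mul_div_assoc]
      apply (div_le_div_iff_of_pos_right hnf't).2
      have := (hfb tk htk0 htkν).1
      nlinarith
    have hsq : Real.sqrt (θ k) ≤ lam := by
      have h1 : Real.sqrt (θ k) ≤ Real.sqrt (lam ^ 2 / 2) := Real.sqrt_le_sqrt (hθ k).2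
      have h2 : Real.sqrt (lam ^ 2 / 2) ≤ Real.sqrt (lam ^ 2) :=
        Real.sqrt_le_sqrt (by nlinarith [sq_nonneg lam])
      rw [Real.sqrt_sq hlam.1] at h2
      linarith
    have hs0 : 0 ≤ Real.sqrt (θ k) := Real.sqrt_nonneg _
    have hVI' : ‖x (k+1) - xs‖ ≤ b + Real.sqrt (θ k) * (tk + b) := by
      have h1 := hVI k
      have h2 := mul_le_mul_of_nonneg_left (hS k) hs0
      calc ‖x (k+1) - xs‖ ≤ b + Real.sqrt (θ k) * ‖G (x k) (F (x k))‖ := h1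
      _ ≤ b + Real.sqrt (θ k) * (tk + b) := by linarith
    have hexp : Real.sqrt (θ k) * (tk + b) = Real.sqrt (θ k) * tk + Real.sqrt (θ k) * b := by
      ring
    rw [hexp] at hVI'
    constructor
    · have hbg : b ≤ tk * ((f' tk + 1) / (-(f' tk))) := hbeta.trans hgam
      have h3 := mul_le_mul_of_nonneg_left hbg hs0
      have hgoal : ((f' tk + 1) / (-(f' tk))
            + Real.sqrt (θ k) * (1 + (f' tk + 1) / (-(f' tk)))) * tk
          = tk * ((f' tk + 1) / (-(f' tk))) + Real.sqrt (θ k) * tk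
            + Real.sqrt (θ k) * (tk * ((f' tk + 1) / (-(f' tk)))) := by ring
      rw [hgoal]
      linarith
    · have haa : b ≤ |tk - f tk / f' tk| := hbeta.trans habs
      have h4 : Real.sqrt (θ k) * tk + Real.sqrt (θ k) * b ≤
          lam * tk + lam * |tk - f tk / f' tk| := by
        have := mul_le_mul hsq (show tk + b ≤ tk + |tk - f tk / f' tk| by linarith)
          (by linarith) hlam.1
        nlinarith
      have hgoal : (1 + lam) * |tk - f tk / f' tk| + lam * tk
          = |tk - f tk / f' tk| + lam * |tk - f tk / f' tk| + lam * tk := by ring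
      rw [hgoal]
      linarith
  -- strict decrease / invariance
  have hdecstep : ∀ k, x k ∈ ball xs r →
      (0 < ‖x k - xs‖ → ‖x (k+1) - xs‖ < ‖x k - xs‖) ∧
      (‖x k - xs‖ = 0 → ‖x (k+1) - xs‖ = 0) := by
    intro k hk
    have h2 := (hmain k hk).2
    constructor
    · intro h0
      have htkr : ‖x k - xs‖ < r := mem_ball_iff_norm.1 hk
      have hc := hrate _ h0 (htkr.trans_le hrρ)
      have hlt : (1 + lam) * |‖x k - xs‖ - f ‖x k - xs‖ / f' ‖x k - xs‖|
          + lam * ‖x k - xs‖ < ‖x k - xs‖ := by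
        have := mul_lt_mul_of_pos_right hc h0
        rw [add_mul, div_mul_cancel₀ _ (ne_of_gt h0), one_mul] at this
        linarith
      linarith
    · intro h0
      rw [h0] at h2
      simp [hf0] at h2
      simp [h2]
  have hinv : ∀ k, x k ∈ ball xs r ∩ C := by
    intro k
    induction k with
    | zero => exact ⟨hx0.1.2, hx0.1.1⟩
    | succ k ih =>
      refine ⟨?_, (hstep k).1⟩
      rw [mem_ball_iff_norm]
      rcases eq_or_lt_of_le (norm_nonneg (x k - xs)) with h0 | h0
      · rw [(hdecstep k ih.1).2 h0.symm]; exact hrpos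
      · exact lt_trans ((hdecstep k ih.1).1 h0) (mem_ball_iff_norm.1 ih.1)
  have hdec : ∀ k, ‖x (k+1) - xs‖ ≤ ‖x k - xs‖ := by
    intro k
    rcases eq_or_lt_of_le (norm_nonneg (x k - xs)) with h0 | h0
    · rw [(hdecstep k (hinv k).1).2 h0.symm, ← h0]
    · exact ((hdecstep k (hinv k).1).1 h0).le
  -- convergence of the norms
  have hanti : Antitone (fun k => ‖x k - xs‖) := antitone_nat_of_succ_le hdec
  have hbdd : BddBelow (Set.range fun k => ‖x k - xs‖) := by
    refine ⟨0, ?_⟩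
    rintro y ⟨k, rfl⟩
    exact norm_nonneg _
  have htendL : Tendsto (fun k => ‖x k - xs‖) atTop (𝓝 (⨅ k, ‖x k - xs‖)) :=
    tendsto_atTop_ciInf hanti hbdd
  set L := ⨅ k, ‖x k - xs‖ with hLdef
  have hL0 : 0 ≤ L := le_ciInf fun k => norm_nonneg _
  have hLk : ∀ k, L ≤ ‖x k - xs‖ := fun k => ciInf_le hbdd k
  have ht0r : ‖x 0 - xs‖ < r := mem_ball_iff_norm.1 hx0.1.2
  have hLzero : L = 0 := by
    by_contra hL
    have hLpos : 0 < L := lt_of_le_of_ne hL0 (Ne.symm hL)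
    set c : ℝ → ℝ := fun s => (1 + lam) * |s - f s / f' s| / s + lam with hcdef
    have hsub : Icc L ‖x 0 - xs‖ ⊆ Ico 0 R := fun s hs =>
      ⟨hL0.trans hs.1, lt_of_le_of_lt hs.2 (ht0r.trans_le hrR)⟩
    have hf'ne : ∀ s ∈ Icc L ‖x 0 - xs‖, f' s ≠ 0 := fun s hs =>
      ne_of_lt (hf'neg s (hL0.trans hs.1) (lt_of_le_of_lt hs.2 (ht0r.trans_le hrν)))
    have hccont : ContinuousOn c (Icc L ‖x 0 - xs‖) := by
      apply ContinuousOn.add _ continuousOn_const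
      apply ContinuousOn.div
      · apply ContinuousOn.mul continuousOn_const
        apply ContinuousOn.abs
        exact ContinuousOn.sub continuousOn_id
          (ContinuousOn.div (hfc.mono hsub) (hcont.mono hsub) hf'ne)
      · exact continuousOn_id
      · exact fun s hs => ne_of_gt (hLpos.trans_le hs.1)
    have hmemk : ∀ k, ‖x k - xs‖ ∈ Icc L ‖x 0 - xs‖ := fun k =>
      ⟨hLk k, hanti (Nat.zero_le k)⟩
    have htendc : Tendsto (fun k => c ‖x k - xs‖) atTop (𝓝 (c L)) := by
      apply (hccont L ⟨le_refl _, hLk 0⟩).tendsto.comp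
      rw [tendsto_nhdsWithin_iff]
      exact ⟨htendL, Eventually.of_forall hmemk⟩
    have hle : ∀ k, ‖x (k+1) - xs‖ ≤ c ‖x k - xs‖ * ‖x k - xs‖ := by
      intro k
      have h0 : 0 < ‖x k - xs‖ := hLpos.trans_le (hLk k)
      have h2 := (hmain k (hinv k).1).2
      have heq : c ‖x k - xs‖ * ‖x k - xs‖ =
          (1 + lam) * |‖x k - xs‖ - f ‖x k - xs‖ / f' ‖x k - xs‖| + lam * ‖x k - xs‖ := by
        rw [hcdef]
        field_simp
      rw [heq]; exact h2
    have h1 : Tendsto (fun k => ‖x (k+1) - xs‖) atTop (𝓝 L) :=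
      htendL.comp (tendsto_add_atTop_nat 1)
    have h2 : Tendsto (fun k => c ‖x k - xs‖ * ‖x k - xs‖) atTop (𝓝 (c L * L)) :=
      htendc.mul htendL
    have hLle : L ≤ c L * L := le_of_tendsto_of_tendsto' h1 h2 hle
    have hcL : c L < 1 := hrate L hLpos (((hLk 0).trans_lt ht0r).trans_le hrρ)
    nlinarith
  have htend0 : Tendsto (fun k => ‖x k - xs‖) atTop (𝓝 0) := hLzero ▸ htendL
  have hxconv : Tendsto x atTop (𝓝 xs) := by
    rw [tendsto_iff_norm_sub_tendsto_zero]
    exact htend0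
  refine ⟨hinv, hxconv, ?_⟩
  set θt := limsup θ atTop with hθtdef
  have hθbd : IsBoundedUnder (· ≤ ·) atTop θ := isBoundedUnder_of ⟨lam^2/2, fun k => (hθ k).2⟩
  have hθcb : IsCoboundedUnder (· ≤ ·) atTop θ :=
    isCoboundedUnder_le_of_le atTop (fun k => (hθ k).1)
  have hθt0 : 0 ≤ θt := le_limsup_of_frequently_le
    (Frequently.of_forall fun k => (hθ k).1) hθbd
  have hθtlam : θt ≤ lam^2/2 := limsup_le_of_le hθcb (Eventually.of_forall fun k => (hθ k).2)
  have hsqrt1 : Real.sqrt (2*θt) ≤ 1 := by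
    rw [show (1:ℝ) = Real.sqrt 1 by rw [Real.sqrt_one]]
    apply Real.sqrt_le_sqrt
    nlinarith [hlam.1, hlam.2]
  have hγ : ∀ k, 0 ≤ (f' ‖x k - xs‖ + 1) / (-(f' ‖x k - xs‖)) := by
    intro k
    have htk0 : 0 ≤ ‖x k - xs‖ := norm_nonneg _
    have htkν : ‖x k - xs‖ < ν := (mem_ball_iff_norm.1 (hinv k).1).trans_le hrν
    have h1 : f' ‖x k - xs‖ < 0 := hf'neg _ htk0 htkν
    have h2 : -1 ≤ f' ‖x k - xs‖ := by
      rcases eq_or_lt_of_le htk0 with h0 | h0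
      · rw [← h0, hf'0]
      · rw [← hf'0]
        exact (hmono ⟨le_refl _, hR⟩ ⟨htk0, htkν.trans_le hνR⟩ h0).le
    exact div_nonneg (by linarith) (by linarith)
  have hrat : ∀ k, ‖x (k+1) - xs‖ / ‖x k - xs‖ ≤
      (f' ‖x k - xs‖ + 1) / (-(f' ‖x k - xs‖))
        + Real.sqrt (θ k) * (1 + (f' ‖x k - xs‖ + 1) / (-(f' ‖x k - xs‖))) := by
    intro k
    rcases eq_or_lt_of_le (norm_nonneg (x k - xs)) with h0 | h0
    · rw [← h0]
      simp only [div_zero, hf'0]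
      have : (-1 + 1 : ℝ) / (-(-1)) = 0 := by norm_num
      rw [this]
      positivity
    · rw [div_le_iff₀ h0]
      exact (hmain k (hinv k).1).1
  have hγtend : Tendsto (fun k => (f' ‖x k - xs‖ + 1) / (-(f' ‖x k - xs‖))) atTop (𝓝 0) := by
    have hcw : ContinuousWithinAt (fun s => (f' s + 1) / (-(f' s))) (Ico 0 R) 0 := by
      apply ContinuousWithinAt.div
      · exact (hcont.continuousWithinAt ⟨le_refl _, hR⟩).add continuousWithinAt_const
      · exact (hcont.continuousWithinAt ⟨le_refl _, hR⟩).neg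
      · rw [hf'0]; norm_num
    have hmm : Tendsto (fun k => ‖x k - xs‖) atTop (𝓝[Ico 0 R] 0) := by
      rw [tendsto_nhdsWithin_iff]
      exact ⟨htend0, Eventually.of_forall (fun k =>
        ⟨norm_nonneg _, (mem_ball_iff_norm.1 (hinv k).1).trans_le hrR⟩)⟩
    have := hcw.tendsto.comp hmm
    have h0eq : (f' 0 + 1) / (-(f' 0)) = 0 := by rw [hf'0]; norm_num
    rw [h0eq] at this
    exact this
  have hratcb : IsCoboundedUnder (· ≤ ·) atTop (fun k => ‖x (k+1) - xs‖ / ‖x k - xs‖) :=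
    isCoboundedUnder_le_of_le atTop (fun k => div_nonneg (norm_nonneg _) (norm_nonneg _))
  have hfin : ∀ ε : ℝ, 0 < ε → ε ≤ 1 →
      limsup (fun k => ‖x (k + 1) - xs‖ / ‖x k - xs‖) atTop ≤ Real.sqrt (2 * θt) + ε := by
    intro ε hε0 hε1
    have hev1 : ∀ᶠ k in atTop,
        (f' ‖x k - xs‖ + 1) / (-(f' ‖x k - xs‖)) < ε/4 :=
      hγtend.eventually_lt_const (by linarith)
    have hev2 : ∀ᶠ k in atTop, θ k < θt + ε^2/16 :=
      eventually_lt_of_limsup_lt (by nlinarith) hθbd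
    apply limsup_le_of_le hratcb
    filter_upwards [hev1, hev2] with k h1 h2
    have hS0 := Real.sqrt_nonneg (2*θt)
    have hsθ : Real.sqrt (θ k) ≤ Real.sqrt (2*θt) + ε/4 := by
      have ha : Real.sqrt (θ k) ≤ Real.sqrt (θt + ε^2/16) := Real.sqrt_le_sqrt h2.le
      have hb : Real.sqrt (θt + ε^2/16) ≤ Real.sqrt (2*θt) + ε/4 := by
        apply Real.sqrt_le_iff.2
        constructor
        · linarith
        · have := Real.sq_sqrt (by linarith : (0:ℝ) ≤ 2*θt)
          nlinarith
      linarith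
    have hγk := hγ k
    have hsk0 := Real.sqrt_nonneg (θ k)
    have hsγ : Real.sqrt (θ k) * ((f' ‖x k - xs‖ + 1) / (-(f' ‖x k - xs‖)))
        ≤ (Real.sqrt (2*θt) + ε/4) * (ε/4) :=
      mul_le_mul hsθ h1.le hγk (by linarith)
    calc ‖x (k+1) - xs‖ / ‖x k - xs‖
        ≤ (f' ‖x k - xs‖ + 1) / (-(f' ‖x k - xs‖))
          + Real.sqrt (θ k) * (1 + (f' ‖x k - xs‖ + 1) / (-(f' ‖x k - xs‖))) := hrat k
      _ ≤ Real.sqrt (2*θt) + ε := by nlinarith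
  by_contra hcon
  push_neg at hcon
  set M := limsup (fun k => ‖x (k + 1) - xs‖ / ‖x k - xs‖) atTop with hM
  have hd : 0 < M - Real.sqrt (2*θt) := by linarith
  have hfe := hfin (min 1 ((M - Real.sqrt (2*θt))/2))
    (lt_min one_pos (by linarith)) (min_le_left _ _)
  have h2 := min_le_right 1 ((M - Real.sqrt (2*θt))/2)
  linarith
end

section
/- Assume additionally to the main convergence theorem that for some p ∈ [0,1] the map t ↦ |n_f(t)|/t^{p+1} is strictly increasing on (0,ν). Then for all k ≥ 0: ‖x_{k+1}-x*‖ ≤ (1+λ)(|n_f(t₀)|/t₀^{p+1})‖x_k-x*‖^{p+1} + λ‖x_k-x*‖, and ‖x_k - x*‖ ≤ t_k, where t₀ = ‖x₀-x*‖ and t_{k+1} = (1+√(2θ_k))|n_f(t_k)| + √(2θ_k)t_k. -/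
open Set Metric Filter

set_option maxHeartbeats 1000000 in
theorem stmt14 {n : ℕ} {Ω : Set (EuclideanSpace ℝ (Fin n))} (hΩ : IsOpen Ω)
    (F : EuclideanSpace ℝ (Fin n) → EuclideanSpace ℝ (Fin n))
    (F' : EuclideanSpace ℝ (Fin n) → EuclideanSpace ℝ (Fin n) →L[ℝ] EuclideanSpace ℝ (Fin n))
    (hF' : ∀ x ∈ Ω, HasFDerivAt F (F' x) x)
    (hF'cont : ContinuousOn F' Ω)
    (xs : EuclideanSpace ℝ (Fin n)) (hxs : xs ∈ Ω) (hFxs : F xs = 0)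
    (A : EuclideanSpace ℝ (Fin n) →L[ℝ] EuclideanSpace ℝ (Fin n))
    (hA1 : A.comp (F' xs) = ContinuousLinearMap.id ℝ _)
    (hA2 : (F' xs).comp A = ContinuousLinearMap.id ℝ _)
    {R : ℝ} (hR : 0 < R) (f f' : ℝ → ℝ)
    (hderiv : ∀ t ∈ Ico (0:ℝ) R, HasDerivWithinAt f (f' t) (Ico 0 R) t)
    (hcont : ContinuousOn f' (Ico 0 R))
    (hf0 : f 0 = 0) (hf'0 : f' 0 = -1)
    (hmono : StrictMonoOn f' (Ico 0 R))
    (κ ν : ℝ)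
    (hκ : κ = sSup {t | t ∈ Ico 0 R ∧ ball xs t ⊆ Ω})
    (hν : ν = sSup {t | t ∈ Ico 0 R ∧ f' t < 0})
    (hmaj : ∀ τ ∈ Icc (0:ℝ) 1, ∀ x ∈ ball xs κ,
      ‖A.comp (F' x - F' (xs + τ • (x - xs)))‖ ≤ f' ‖x - xs‖ - f' (τ * ‖x - xs‖))
    (C : Set (EuclideanSpace ℝ (Fin n))) (hCne : C.Nonempty) (hCconv : Convex ℝ C)
    (hCcomp : IsCompact C) (hCΩ : C ⊆ Ω) (hxsC : xs ∈ C)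
    (lam : ℝ) (hlam : lam ∈ Ico (0:ℝ) 1)
    (ρ : ℝ)
    (hρ : ρ = sSup {δ | δ ∈ Ioo 0 ν ∧
      ∀ t ∈ Ioo 0 δ, (1 + lam) * |t - f t / f' t| / t + lam < 1})
    (r : ℝ) (hr : r = min ρ κ)
    (θ : ℕ → ℝ) (hθ : ∀ k, θ k ∈ Icc 0 (lam ^ 2 / 2))
    (G : EuclideanSpace ℝ (Fin n) → EuclideanSpace ℝ (Fin n) →L[ℝ] EuclideanSpace ℝ (Fin n))
    (hG : ∀ y ∈ ball xs r, (G y).comp (F' y) = ContinuousLinearMap.id ℝ _ ∧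
      (F' y).comp (G y) = ContinuousLinearMap.id ℝ _)
    (x : ℕ → EuclideanSpace ℝ (Fin n))
    (hx0 : x 0 ∈ C ∩ ball xs r ∧ x 0 ≠ xs)
    (hstep : ∀ k, x (k + 1) ∈ C ∧ ∀ u ∈ C,
      (inner ℝ (x (k + 1) - (x k - G (x k) (F (x k)))) (u - x (k + 1)) : ℝ) ≥
        -(θ k * ‖G (x k) (F (x k))‖ ^ 2))
    (p : ℝ) (hp : p ∈ Icc (0:ℝ) 1)
    (h3 : StrictMonoOn (fun t => |t - f t / f' t| / t ^ (p + 1)) (Ioo 0 ν))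
    (t : ℕ → ℝ) (ht0 : t 0 = ‖x 0 - xs‖)
    (hrec : ∀ k, t (k + 1) =
      (1 + Real.sqrt (2 * θ k)) * |t k - f (t k) / f' (t k)| + Real.sqrt (2 * θ k) * t k) :
    (∀ k, ‖x (k + 1) - xs‖ ≤
        (1 + lam) * (|t 0 - f (t 0) / f' (t 0)| / t 0 ^ (p + 1)) * ‖x k - xs‖ ^ (p + 1) +
          lam * ‖x k - xs‖) ∧
      ∀ k, ‖x k - xs‖ ≤ t k := by
  obtain ⟨⟨hx0C, hx0ball⟩, hx0ne⟩ := hx0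
  have hlam0 : 0 ≤ lam := hlam.1
  have hlam1 : lam < 1 := hlam.2
  have ht0pos : 0 < ‖x 0 - xs‖ := by
    rw [norm_pos_iff]; exact sub_ne_zero_of_ne hx0ne
  have hx0lt : ‖x 0 - xs‖ < r := mem_ball_iff_norm.mp hx0ball
  have hrpos : 0 < r := ht0pos.trans hx0lt
  have hrρ : r ≤ ρ := hr ▸ min_le_left _ _
  have hrκ : r ≤ κ := hr ▸ min_le_right _ _
  -- ν facts
  have hνmem : (0:ℝ) ∈ {s : ℝ | s ∈ Ico (0:ℝ) R ∧ f' s < 0} :=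
    ⟨⟨le_refl 0, hR⟩, by rw [hf'0]; norm_num⟩
  have hνbdd : BddAbove {s : ℝ | s ∈ Ico (0:ℝ) R ∧ f' s < 0} := ⟨R, fun z hz => hz.1.2.le⟩
  have hν0 : 0 ≤ ν := hν ▸ le_csSup hνbdd hνmem
  have hνR : ν ≤ R := by rw [hν]; exact Real.sSup_le (fun z hz => hz.1.2.le) hR.le
  have hf'neg : ∀ s, 0 ≤ s → s < ν → f' s < 0 := by
    intro s hs0 hsν
    obtain ⟨b, hb, hsb⟩ := exists_lt_of_lt_csSup ⟨0, hνmem⟩ (by rw [← hν]; exact hsν)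
    exact lt_trans (hmono ⟨hs0, lt_trans hsb hb.1.2⟩ hb.1 hsb) hb.2
  have hρν : ρ ≤ ν := by rw [hρ]; exact Real.sSup_le (fun z hz => hz.1.2.le) hν0
  have hrν : r ≤ ν := le_trans hrρ hρν
  -- ρ property
  have hρprop : ∀ s, 0 < s → s < ρ → (1 + lam) * |s - f s / f' s| / s + lam < 1 := by
    intro s hs0 hsρ
    have hne : {δ : ℝ | δ ∈ Ioo 0 ν ∧
        ∀ u ∈ Ioo 0 δ, (1 + lam) * |u - f u / f' u| / u + lam < 1}.Nonempty := by
      rcases eq_empty_or_nonempty {δ : ℝ | δ ∈ Ioo 0 ν ∧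
        ∀ u ∈ Ioo 0 δ, (1 + lam) * |u - f u / f' u| / u + lam < 1} with h | h
      · exfalso
        rw [hρ, h, Real.sSup_empty] at hsρ
        exact absurd (hs0.trans hsρ) (lt_irrefl 0)
      · exact h
    obtain ⟨δ, hδ, hsδ⟩ := exists_lt_of_lt_csSup hne (by rw [← hρ]; exact hsρ)
    exact hδ.2 s ⟨hs0, hsδ⟩
  -- κ property
  have hκΩ : ball xs κ ⊆ Ω := by
    intro y hy
    have hyκ : dist y xs < κ := mem_ball.mp hy
    have hne : {s : ℝ | s ∈ Ico (0:ℝ) R ∧ ball xs s ⊆ Ω}.Nonempty :=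
      ⟨0, ⟨le_refl 0, hR⟩, by rw [Metric.ball_eq_empty.mpr le_rfl]; exact empty_subset _⟩
    obtain ⟨b, hb, hyb⟩ := exists_lt_of_lt_csSup hne (by rw [← hκ]; exact hyκ)
    exact hb.2 (mem_ball.mpr hyb)
  -- Newton step error bound
  have hNewton : ∀ y, y ∈ ball xs r →
      ‖y - G y (F y) - xs‖ ≤ |‖y - xs‖ - f ‖y - xs‖ / f' ‖y - xs‖| := by
    intro y hyr
    have hs0 : 0 ≤ ‖y - xs‖ := norm_nonneg _
    have hsr : ‖y - xs‖ < r := mem_ball_iff_norm.mp hyr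
    have hsν : ‖y - xs‖ < ν := hsr.trans_le hrν
    have hsκ : ‖y - xs‖ < κ := hsr.trans_le hrκ
    have hsR : ‖y - xs‖ < R := hsν.trans_le hνR
    have hf's : f' ‖y - xs‖ < 0 := hf'neg _ hs0 hsν
    have hfspos : 0 < -(f' ‖y - xs‖) := neg_pos.mpr hf's
    have hyκ : y ∈ ball xs κ := mem_ball_iff_norm.mpr hsκ
    -- segment inside Ω
    have hseg : ∀ τ : ℝ, 0 ≤ τ → τ ≤ 1 → xs + τ • (y - xs) ∈ Ω := by
      intro τ h0 h1
      apply hκΩ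
      rw [mem_ball_iff_norm]
      have he : xs + τ • (y - xs) - xs = τ • (y - xs) := by abel
      rw [he, norm_smul, Real.norm_eq_abs, abs_of_nonneg h0]
      calc τ * ‖y - xs‖ ≤ 1 * ‖y - xs‖ := mul_le_mul_of_nonneg_right h1 hs0
        _ = ‖y - xs‖ := one_mul _
        _ < κ := hsκ
    obtain ⟨hG1, hG2⟩ := hG y hyr
    -- inverse bound
    have hBinv : ((G y).comp (F' xs)).comp (A.comp (F' y)) = ContinuousLinearMap.id ℝ _ := by
      rw [ContinuousLinearMap.comp_assoc, ← ContinuousLinearMap.comp_assoc (F' xs) A (F' y),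
        hA2, ContinuousLinearMap.id_comp, hG1]
    have hEbound : ‖ContinuousLinearMap.id ℝ (EuclideanSpace ℝ (Fin n)) - A.comp (F' y)‖
        ≤ f' ‖y - xs‖ + 1 := by
      have h0 := hmaj 0 ⟨le_refl 0, zero_le_one⟩ y hyκ
      simp only [zero_smul, add_zero, zero_mul] at h0
      rw [hf'0] at h0
      have he : ContinuousLinearMap.id ℝ (EuclideanSpace ℝ (Fin n)) - A.comp (F' y)
          = -(A.comp (F' y - F' xs)) := by
        rw [ContinuousLinearMap.comp_sub, hA1]; abel
      rw [he, norm_neg]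
      linarith
    have hBnorm : ‖(G y).comp (F' xs)‖ * (-(f' ‖y - xs‖)) ≤ 1 := by
      have hEq : (G y).comp (F' xs) = ContinuousLinearMap.id ℝ _ +
          ((G y).comp (F' xs)).comp
            (ContinuousLinearMap.id ℝ (EuclideanSpace ℝ (Fin n)) - A.comp (F' y)) := by
        rw [ContinuousLinearMap.comp_sub, hBinv, ContinuousLinearMap.comp_id]; abel
      have h1 : ‖(G y).comp (F' xs)‖ ≤ 1 + ‖(G y).comp (F' xs)‖ * (f' ‖y - xs‖ + 1) := by
        conv_lhs => rw [hEq]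
        refine le_trans (norm_add_le _ _) ?_
        have h2 : ‖((G y).comp (F' xs)).comp
              (ContinuousLinearMap.id ℝ (EuclideanSpace ℝ (Fin n)) - A.comp (F' y))‖
            ≤ ‖(G y).comp (F' xs)‖ * (f' ‖y - xs‖ + 1) :=
          le_trans (ContinuousLinearMap.opNorm_comp_le _ _)
            (mul_le_mul_of_nonneg_left hEbound (norm_nonneg _))
        have h3' := ContinuousLinearMap.norm_id_le
          (𝕜 := ℝ) (E := EuclideanSpace ℝ (Fin n))
        linarith
      nlinarith [norm_nonneg ((G y).comp (F' xs))]
    have hBople : ‖(G y).comp (F' xs)‖ ≤ (-(f' ‖y - xs‖))⁻¹ := by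
      rw [inv_eq_one_div, le_div_iff₀ hfspos]; exact hBnorm
    -- Taylor remainder bound via MVT fencing
    have hgd : ∀ τ ∈ Icc (0:ℝ) 1,
        HasDerivAt (fun τ : ℝ => A (τ • ((F' y) (y - xs)) - F (xs + τ • (y - xs))))
          (A ((F' y) (y - xs) - (F' (xs + τ • (y - xs))) (y - xs))) τ := by
      intro τ hτ
      have hcd : HasDerivAt (fun τ : ℝ => xs + τ • (y - xs)) (y - xs) τ := by
        have h1 : HasDerivAt (fun τ : ℝ => τ • (y - xs)) ((1:ℝ) • (y - xs)) τ :=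
          (hasDerivAt_id τ).smul_const (y - xs)
        simpa using h1.const_add xs
      have hFd : HasDerivAt (fun τ : ℝ => F (xs + τ • (y - xs)))
          ((F' (xs + τ • (y - xs))) (y - xs)) τ :=
        (hF' _ (hseg τ hτ.1 hτ.2)).comp_hasDerivAt τ hcd
      have hwd : HasDerivAt (fun τ : ℝ => τ • ((F' y) (y - xs))) ((F' y) (y - xs)) τ := by
        simpa using (hasDerivAt_id τ).smul_const ((F' y) (y - xs))
      exact A.hasFDerivAt.comp_hasDerivAt τ (hwd.sub hFd)
    have hmaps : MapsTo (fun τ : ℝ => τ * ‖y - xs‖) (Icc 0 1) (Ico 0 R) := by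
      intro τ hτ
      constructor
      · exact mul_nonneg hτ.1 hs0
      · calc τ * ‖y - xs‖ ≤ 1 * ‖y - xs‖ := mul_le_mul_of_nonneg_right hτ.2 hs0
          _ = ‖y - xs‖ := one_mul _
          _ < R := hsR
    have hBdIcc : ∀ τ ∈ Icc (0:ℝ) 1,
        HasDerivWithinAt (fun τ : ℝ => f' ‖y - xs‖ * ‖y - xs‖ * τ - f (τ * ‖y - xs‖))
          (f' ‖y - xs‖ * ‖y - xs‖ - f' (τ * ‖y - xs‖) * ‖y - xs‖) (Icc 0 1) τ := by
      intro τ hτ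
      have hlin : HasDerivWithinAt (fun τ : ℝ => τ * ‖y - xs‖) ‖y - xs‖ (Icc 0 1) τ := by
        simpa using ((hasDerivAt_id τ).mul_const ‖y - xs‖).hasDerivWithinAt
          (s := Icc (0:ℝ) 1)
      have hcomp : HasDerivWithinAt (fun τ : ℝ => f (τ * ‖y - xs‖))
          (f' (τ * ‖y - xs‖) * ‖y - xs‖) (Icc 0 1) τ :=
        HasDerivWithinAt.comp τ (hderiv _ (hmaps hτ)) hlin hmaps
      have hl2 : HasDerivWithinAt (fun τ : ℝ => f' ‖y - xs‖ * ‖y - xs‖ * τ)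
          (f' ‖y - xs‖ * ‖y - xs‖) (Icc 0 1) τ := by
        simpa using ((hasDerivAt_id τ).const_mul (f' ‖y - xs‖ * ‖y - xs‖)).hasDerivWithinAt
          (s := Icc (0:ℝ) 1)
      exact hl2.sub hcomp
    have hg0 : ‖A ((0:ℝ) • ((F' y) (y - xs)) - F (xs + (0:ℝ) • (y - xs)))‖
        ≤ f' ‖y - xs‖ * ‖y - xs‖ * 0 - f (0 * ‖y - xs‖) := by
      simp [hFxs, hf0]
    have hbound : ∀ τ ∈ Ico (0:ℝ) 1,
        ‖A ((F' y) (y - xs) - (F' (xs + τ • (y - xs))) (y - xs))‖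
          ≤ f' ‖y - xs‖ * ‖y - xs‖ - f' (τ * ‖y - xs‖) * ‖y - xs‖ := by
      intro τ hτ
      have hmaj' := hmaj τ ⟨hτ.1, hτ.2.le⟩ y hyκ
      have heq : A ((F' y) (y - xs) - (F' (xs + τ • (y - xs))) (y - xs))
          = (A.comp (F' y - F' (xs + τ • (y - xs)))) (y - xs) := by
        simp
      rw [heq]
      calc ‖(A.comp (F' y - F' (xs + τ • (y - xs)))) (y - xs)‖
          ≤ ‖A.comp (F' y - F' (xs + τ • (y - xs)))‖ * ‖y - xs‖ :=
            ContinuousLinearMap.le_opNorm _ _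
        _ ≤ (f' ‖y - xs‖ - f' (τ * ‖y - xs‖)) * ‖y - xs‖ :=
            mul_le_mul_of_nonneg_right hmaj' hs0
        _ = f' ‖y - xs‖ * ‖y - xs‖ - f' (τ * ‖y - xs‖) * ‖y - xs‖ := by ring
    have hmain := image_norm_le_of_norm_deriv_right_le_deriv_boundary'
      (f := fun τ : ℝ => A (τ • ((F' y) (y - xs)) - F (xs + τ • (y - xs))))
      (a := 0) (b := 1)
      (f' := fun τ : ℝ => A ((F' y) (y - xs) - (F' (xs + τ • (y - xs))) (y - xs)))
      (fun τ hτ => (hgd τ hτ).continuousAt.continuousWithinAt)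
      (fun τ hτ => ((hgd τ ⟨hτ.1, hτ.2.le⟩).hasDerivWithinAt).mono_of_mem_nhdsWithin
        (Icc_mem_nhdsGE_of_mem hτ))
      (B := fun τ : ℝ => f' ‖y - xs‖ * ‖y - xs‖ * τ - f (τ * ‖y - xs‖))
      (B' := fun τ : ℝ => f' ‖y - xs‖ * ‖y - xs‖ - f' (τ * ‖y - xs‖) * ‖y - xs‖)
      hg0
      (fun τ hτ => (hBdIcc τ hτ).continuousWithinAt)
      (fun τ hτ => ((hBdIcc τ ⟨hτ.1, hτ.2.le⟩).mono_of_mem_nhdsWithin (Icc_mem_nhdsGE_of_mem hτ)))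
      hbound (right_mem_Icc.mpr zero_le_one)
    -- evaluate at 1
    have hg1 : ‖A ((F' y) (y - xs) - F y)‖ ≤ f' ‖y - xs‖ * ‖y - xs‖ - f ‖y - xs‖ := by
      have h1 : xs + (y - xs) = y := by abel
      simpa [h1] using hmain
    have hnum : 0 ≤ f' ‖y - xs‖ * ‖y - xs‖ - f ‖y - xs‖ := le_trans (norm_nonneg _) hg1
    -- Newton identity
    have hA2' : ∀ v, (F' xs) (A v) = v := by
      intro v
      have h := congrArg (fun T : EuclideanSpace ℝ (Fin n) →L[ℝ] EuclideanSpace ℝ (Fin n)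
        => T v) hA2
      simpa using h
    have hG1' : (G y) ((F' y) (y - xs)) = y - xs := by
      have h := congrArg (fun T : EuclideanSpace ℝ (Fin n) →L[ℝ] EuclideanSpace ℝ (Fin n)
        => T (y - xs)) hG1
      simpa using h
    have hid : y - G y (F y) - xs
        = ((G y).comp (F' xs)) (A ((F' y) (y - xs) - F y)) := by
      have h1 : ((G y).comp (F' xs)) (A ((F' y) (y - xs) - F y))
          = (G y) ((F' y) (y - xs) - F y) := by
        show (G y) ((F' xs) (A ((F' y) (y - xs) - F y))) = _
        rw [hA2']
      rw [h1, map_sub, hG1']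
      abel
    have habs : |‖y - xs‖ - f ‖y - xs‖ / f' ‖y - xs‖|
        = (f' ‖y - xs‖ * ‖y - xs‖ - f ‖y - xs‖) / (-(f' ‖y - xs‖)) := by
      have hne : f' ‖y - xs‖ ≠ 0 := ne_of_lt hf's
      have h1 : ‖y - xs‖ - f ‖y - xs‖ / f' ‖y - xs‖
          = (f' ‖y - xs‖ * ‖y - xs‖ - f ‖y - xs‖) / f' ‖y - xs‖ := by
        field_simp
      rw [h1, abs_div, abs_of_nonneg hnum, abs_of_neg hf's]
    calc ‖y - G y (F y) - xs‖
        = ‖((G y).comp (F' xs)) (A ((F' y) (y - xs) - F y))‖ := by rw [hid]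
      _ ≤ ‖(G y).comp (F' xs)‖ * ‖A ((F' y) (y - xs) - F y)‖ :=
          ContinuousLinearMap.le_opNorm _ _
      _ ≤ (-(f' ‖y - xs‖))⁻¹ * (f' ‖y - xs‖ * ‖y - xs‖ - f ‖y - xs‖) :=
          mul_le_mul hBople hg1 (norm_nonneg _) (by positivity)
      _ = |‖y - xs‖ - f ‖y - xs‖ / f' ‖y - xs‖| := by
          rw [habs, div_eq_inv_mul]
  -- conditional gradient step bound
  have hVI : ∀ k, ‖x (k+1) - xs‖ ≤
      (1 + Real.sqrt (2 * θ k)) * ‖x k - G (x k) (F (x k)) - xs‖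
        + Real.sqrt (2 * θ k) * ‖x k - xs‖ := by
    intro k
    have hθ0 : 0 ≤ θ k := (hθ k).1
    have hVIineq := (hstep k).2 xs hxsC
    set S : EuclideanSpace ℝ (Fin n) := G (x k) (F (x k)) with hS
    set N : EuclideanSpace ℝ (Fin n) := x k - S with hN
    set q : EuclideanSpace ℝ (Fin n) := x (k+1) with hq
    have hsq : ‖q - xs‖ ^ 2 ≤ ‖N - xs‖ ^ 2 + 2 * θ k * ‖S‖ ^ 2 := by
      have hdecomp : q - xs = (q - N) + (N - xs) := by abel
      have hexp : ‖q - xs‖^2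
          = ‖q - N‖^2 + 2 * (inner ℝ (q - N) (N - xs) : ℝ) + ‖N - xs‖^2 := by
        rw [hdecomp]; exact norm_add_sq_real _ _
      have hinner : (inner ℝ (q - N) (xs - q) : ℝ)
          = - ‖q - N‖^2 - (inner ℝ (q - N) (N - xs) : ℝ) := by
        have h1 : xs - q = -((q - N) + (N - xs)) := by abel
        rw [h1, inner_neg_right, inner_add_right, real_inner_self_eq_norm_sq]
        ring
      have hnn : (0:ℝ) ≤ ‖q - N‖^2 := sq_nonneg _
      have hVI2 : (inner ℝ (q - N) (xs - q) : ℝ) ≥ -(θ k * ‖S‖ ^ 2) := hVIineq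
      rw [hinner] at hVI2
      linarith
    have hS_le : ‖S‖ ≤ ‖x k - xs‖ + ‖N - xs‖ := by
      have he : S = (x k - xs) - (N - xs) := by rw [hN]; abel
      rw [he]; exact norm_sub_le _ _
    have hsqrt2 : Real.sqrt (2 * θ k) ^ 2 = 2 * θ k := Real.sq_sqrt (by linarith)
    have hσ0 : 0 ≤ Real.sqrt (2 * θ k) := Real.sqrt_nonneg _
    have h2 : ‖q - xs‖ ^ 2 ≤ (‖N - xs‖ + Real.sqrt (2 * θ k) * ‖S‖)^2 := by
      have hσS : Real.sqrt (2 * θ k) ^ 2 * ‖S‖ ^ 2 = 2 * θ k * ‖S‖ ^ 2 := by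
        rw [hsqrt2]
      nlinarith [hσS, mul_nonneg (mul_nonneg hσ0 (norm_nonneg (N - xs))) (norm_nonneg S)]
    have h3' : ‖q - xs‖ ≤ ‖N - xs‖ + Real.sqrt (2 * θ k) * ‖S‖ := by
      have hrhs : 0 ≤ ‖N - xs‖ + Real.sqrt (2 * θ k) * ‖S‖ := by positivity
      nlinarith [norm_nonneg (q - xs)]
    have h4 : Real.sqrt (2 * θ k) * ‖S‖
        ≤ Real.sqrt (2 * θ k) * (‖x k - xs‖ + ‖N - xs‖) :=
      mul_le_mul_of_nonneg_left hS_le hσ0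
    nlinarith
  -- square roots bounded by lam
  have hσlam : ∀ k, Real.sqrt (2 * θ k) ≤ lam := by
    intro k
    have h1 : 2 * θ k ≤ lam ^ 2 := by have := (hθ k).2; linarith
    calc Real.sqrt (2 * θ k) ≤ Real.sqrt (lam ^ 2) := Real.sqrt_le_sqrt h1
      _ = lam := Real.sqrt_sq hlam0
  -- |n_f| monotone
  have hnf00 : |(0:ℝ) - f 0 / f' 0| = 0 := by rw [hf0, zero_div, sub_zero, abs_zero]
  have hp1pos : (0:ℝ) < p + 1 := by linarith [hp.1]
  have hnf_mono : ∀ a b : ℝ, 0 ≤ a → a ≤ b → 0 < b → b < ν →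
      |a - f a / f' a| ≤ |b - f b / f' b| := by
    intro a b ha hab hb hbν
    rcases eq_or_lt_of_le ha with h0 | h0
    · rw [← h0, hnf00]; exact abs_nonneg _
    · have haν : a < ν := lt_of_le_of_lt hab hbν
      have hmono' := h3.monotoneOn ⟨h0, haν⟩ ⟨hb, hbν⟩ hab
      have hap : (0:ℝ) < a ^ (p+1) := Real.rpow_pos_of_pos h0 _
      have hbp : (0:ℝ) < b ^ (p+1) := Real.rpow_pos_of_pos hb _
      have hpow : a ^ (p+1) ≤ b ^ (p+1) := Real.rpow_le_rpow ha hab hp1pos.le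
      calc |a - f a / f' a| = (|a - f a / f' a| / a^(p+1)) * a^(p+1) :=
            (div_mul_cancel₀ _ (ne_of_gt hap)).symm
        _ ≤ (|b - f b / f' b| / b^(p+1)) * b^(p+1) :=
            mul_le_mul hmono' hpow hap.le (div_nonneg (abs_nonneg _) hbp.le)
        _ = |b - f b / f' b| := div_mul_cancel₀ _ (ne_of_gt hbp)
  -- contraction
  have hcontr : ∀ s, 0 < s → s < ρ → (1 + lam) * |s - f s / f' s| + lam * s < s := by
    intro s hs hsρ
    have h1 := hρprop s hs hsρ
    have h2 : ((1 + lam) * |s - f s / f' s| / s + lam) * s < s := by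
      have := mul_lt_mul_of_pos_right h1 hs
      simpa using this
    have h3' : (1 + lam) * |s - f s / f' s| / s * s = (1 + lam) * |s - f s / f' s| :=
      div_mul_cancel₀ _ (ne_of_gt hs)
    nlinarith
  -- combined per-step bound
  have hkey : ∀ k, ‖x k - xs‖ < r → ‖x (k+1) - xs‖ ≤
      (1 + Real.sqrt (2 * θ k)) * |‖x k - xs‖ - f ‖x k - xs‖ / f' ‖x k - xs‖|
        + Real.sqrt (2 * θ k) * ‖x k - xs‖ := by
    intro k hk
    have h1 := hVI k
    have h2 := hNewton (x k) (mem_ball_iff_norm.mpr hk)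
    have hfac : (0:ℝ) ≤ 1 + Real.sqrt (2 * θ k) := by positivity
    have h3' := mul_le_mul_of_nonneg_left h2 hfac
    linarith
  have ht0r : t 0 < r := ht0 ▸ hx0lt
  have ht00 : 0 ≤ t 0 := ht0 ▸ (norm_nonneg _)
  -- main induction invariant
  have hInv : ∀ k, x k ∈ C ∧ ‖x k - xs‖ ≤ t k ∧ t k ≤ t 0 := by
    intro k
    induction k with
    | zero => exact ⟨hx0C, le_of_eq ht0.symm, le_refl _⟩
    | succ k ih =>
      obtain ⟨hC', hle, hle0⟩ := ih
      have htk0 : 0 ≤ t k := le_trans (norm_nonneg _) hle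
      have htkr : t k < r := lt_of_le_of_lt hle0 ht0r
      have hxkr : ‖x k - xs‖ < r := lt_of_le_of_lt hle htkr
      have htkν : t k < ν := lt_of_lt_of_le htkr hrν
      have hσk : Real.sqrt (2 * θ k) ≤ lam := hσlam k
      have hσ0 : 0 ≤ Real.sqrt (2 * θ k) := Real.sqrt_nonneg _
      have hnfxk := hkey k hxkr
      rcases eq_or_lt_of_le htk0 with h0 | h0
      · -- t k = 0
        have htke : t k = 0 := h0.symm
        have hxk0 : ‖x k - xs‖ = 0 := le_antisymm (htke ▸ hle) (norm_nonneg _)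
        have ht1 : t (k+1) = 0 := by
          rw [hrec k, htke, hnf00]; ring
        have hxb : ‖x (k+1) - xs‖ ≤ 0 := by
          rw [hxk0, hnf00] at hnfxk
          simpa using hnfxk
        exact ⟨(hstep k).1, by rw [ht1]; exact hxb, by rw [ht1]; exact ht00⟩
      · have htkρ : t k < ρ := lt_of_lt_of_le htkr hrρ
        have hmono1 := hnf_mono ‖x k - xs‖ (t k) (norm_nonneg _) hle h0 htkν
        have hstep1 : ‖x (k+1) - xs‖ ≤ t (k+1) := by
          rw [hrec k]
          have e1 := mul_le_mul_of_nonneg_left hmono1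
            (by positivity : (0:ℝ) ≤ 1 + Real.sqrt (2 * θ k))
          have e2 := mul_le_mul_of_nonneg_left hle hσ0
          linarith
        have hstep2 : t (k+1) ≤ t k := by
          have hc := hcontr (t k) h0 htkρ
          have e1 : (1 + Real.sqrt (2 * θ k)) * |t k - f (t k) / f' (t k)|
              ≤ (1 + lam) * |t k - f (t k) / f' (t k)| :=
            mul_le_mul_of_nonneg_right (by linarith) (abs_nonneg _)
          have e2 : Real.sqrt (2 * θ k) * t k ≤ lam * t k :=
            mul_le_mul_of_nonneg_right hσk htk0
          rw [hrec k]; linarith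
        exact ⟨(hstep k).1, hstep1, le_trans hstep2 hle0⟩
  refine ⟨?_, fun k => (hInv k).2.1⟩
  intro k
  obtain ⟨hCk, hle, hle0⟩ := hInv k
  have hs0 : 0 ≤ ‖x k - xs‖ := norm_nonneg _
  have hsr : ‖x k - xs‖ < r := lt_of_le_of_lt (le_trans hle hle0) ht0r
  have hkey' := hkey k hsr
  have hσk := hσlam k
  have hσ0 : 0 ≤ Real.sqrt (2 * θ k) := Real.sqrt_nonneg _
  have h1 : ‖x (k+1) - xs‖ ≤ (1 + lam) * |‖x k - xs‖ - f ‖x k - xs‖ / f' ‖x k - xs‖|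
      + lam * ‖x k - xs‖ := by
    have e1 : (1 + Real.sqrt (2 * θ k)) * |‖x k - xs‖ - f ‖x k - xs‖ / f' ‖x k - xs‖|
        ≤ (1 + lam) * |‖x k - xs‖ - f ‖x k - xs‖ / f' ‖x k - xs‖| :=
      mul_le_mul_of_nonneg_right (by linarith) (abs_nonneg _)
    have e2 : Real.sqrt (2 * θ k) * ‖x k - xs‖ ≤ lam * ‖x k - xs‖ :=
      mul_le_mul_of_nonneg_right hσk hs0
    linarith
  have ht0pos' : 0 < t 0 := ht0 ▸ ht0pos
  have ht0ν : t 0 < ν := lt_of_lt_of_le ht0r hrν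
  have ht0p : (0:ℝ) < t 0 ^ (p+1) := Real.rpow_pos_of_pos ht0pos' _
  have hcoef : 0 ≤ (1 + lam) * (|t 0 - f (t 0) / f' (t 0)| / t 0 ^ (p + 1)) := by
    apply mul_nonneg (by linarith)
    exact div_nonneg (abs_nonneg _) ht0p.le
  rcases eq_or_lt_of_le hs0 with h0 | h0
  · -- ‖x k - xs‖ = 0
    have hxk0 : ‖x k - xs‖ = 0 := h0.symm
    rw [hxk0] at h1 ⊢
    rw [hnf00] at h1
    rw [Real.zero_rpow (ne_of_gt hp1pos)]
    have : ‖x (k+1) - xs‖ ≤ 0 := by linarith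
    nlinarith
  · have hsν : ‖x k - xs‖ < ν := lt_of_lt_of_le hsr hrν
    have hst0 : ‖x k - xs‖ ≤ t 0 := le_trans hle hle0
    have hg := h3.monotoneOn ⟨h0, hsν⟩ ⟨ht0pos', ht0ν⟩ hst0
    have hsp : (0:ℝ) < ‖x k - xs‖ ^ (p+1) := Real.rpow_pos_of_pos h0 _
    have h2 : |‖x k - xs‖ - f ‖x k - xs‖ / f' ‖x k - xs‖|
        ≤ (|t 0 - f (t 0) / f' (t 0)| / t 0 ^ (p + 1)) * ‖x k - xs‖ ^ (p+1) := by
      calc |‖x k - xs‖ - f ‖x k - xs‖ / f' ‖x k - xs‖|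
          = (|‖x k - xs‖ - f ‖x k - xs‖ / f' ‖x k - xs‖| / ‖x k - xs‖ ^ (p+1))
            * ‖x k - xs‖ ^ (p+1) := (div_mul_cancel₀ _ (ne_of_gt hsp)).symm
        _ ≤ _ := mul_le_mul_of_nonneg_right hg hsp.le
    have e3 := mul_le_mul_of_nonneg_left h2 (by linarith : (0:ℝ) ≤ 1 + lam)
    nlinarith
end

section
/- Let K > 0 and 0 < p ≤ 1. The function f:[0,∞)→ℝ given by f(t) = (K/(p+1)) t^{p+1} - t satisfies f(0)=0, f'(0)=-1, f' strictly increasing, and the map t ↦ |n_f(t)|/t^{p+1} is strictly increasing on (0,ν), where n_f(t) = t - f(t)/f'(t) and ν = sup{t : f'(t)<0} = (1/K)^{1/p}. -/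
open Set

theorem stmt15 (K p : ℝ) (hK : 0 < K) (hp : p ∈ Ioc (0:ℝ) 1)
    (f f' : ℝ → ℝ)
    (hf : ∀ t, f t = K / (p + 1) * t ^ (p + 1) - t)
    (hf' : ∀ t, f' t = K * t ^ p - 1)
    (ν : ℝ) (hν : ν = sSup {t | 0 ≤ t ∧ f' t < 0}) :
    f 0 = 0 ∧ f' 0 = -1 ∧
    (∀ t ∈ Ici (0:ℝ), HasDerivWithinAt f (f' t) (Ici 0) t) ∧
    StrictMonoOn f' (Ici 0) ∧
    ν = (1 / K) ^ (1 / p) ∧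
    StrictMonoOn (fun t => |t - f t / f' t| / t ^ (p + 1)) (Ioo 0 ν) := by
  obtain ⟨hp0, hp1⟩ := hp
  have hp1pos : (0:ℝ) < p + 1 := by linarith
  set c : ℝ := (1 / K) ^ (1 / p) with hc
  have hcpos : 0 < c := Real.rpow_pos_of_pos (by positivity) _
  have hcp : c ^ p = 1 / K := by
    rw [hc, ← Real.rpow_mul (by positivity), one_div_mul_cancel hp0.ne', Real.rpow_one]
  -- the set is Ico 0 c
  have hset : {t | 0 ≤ t ∧ f' t < 0} = Ico 0 c := by
    ext t
    simp only [mem_setOf_eq, mem_Ico, hf']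
    constructor
    · rintro ⟨ht, hlt⟩
      refine ⟨ht, ?_⟩
      have : t ^ p < c ^ p := by
        rw [hcp]
        rw [lt_div_iff₀ hK]
        linarith [hlt]
      exact (Real.rpow_lt_rpow_iff ht hcpos.le hp0).mp this
    · rintro ⟨ht, hlt⟩
      refine ⟨ht, ?_⟩
      have : t ^ p < c ^ p := Real.rpow_lt_rpow ht hlt hp0
      rw [hcp, lt_div_iff₀ hK] at this
      linarith
  have hνc : ν = c := by rw [hν, hset, csSup_Ico hcpos]
  -- key: for t ∈ Ioo 0 ν, K * t ^ p < 1
  have hkey : ∀ t ∈ Ioo (0:ℝ) ν, K * t ^ p < 1 := by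
    rintro t ⟨ht0, htν⟩
    have : t ^ p < c ^ p := Real.rpow_lt_rpow ht0.le (hνc ▸ htν) hp0
    rw [hcp, lt_div_iff₀ hK] at this
    linarith
  -- the value formula
  have hval : ∀ t ∈ Ioo (0:ℝ) ν,
      |t - f t / f' t| / t ^ (p + 1) = (K * p / (p + 1)) / (1 - K * t ^ p) := by
    rintro t ⟨ht0, htν⟩
    have ha : 0 < t ^ p := Real.rpow_pos_of_pos ht0 _
    have hK1 : K * t ^ p < 1 := hkey t ⟨ht0, htν⟩
    have hd : f' t < 0 := by rw [hf']; linarith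
    have hsplit : t ^ (p + 1) = t ^ p * t := by
      rw [Real.rpow_add ht0, Real.rpow_one]
    have hdne : K * t ^ p - 1 ≠ 0 := by nlinarith
    have h1ne : 1 - K * t ^ p ≠ 0 := by nlinarith
    have htne : t ≠ 0 := ht0.ne'
    have hane : t ^ p ≠ 0 := ha.ne'
    have hexpr : t - f t / f' t = (K * p / (p + 1)) * (t ^ p * t) / (K * t ^ p - 1) := by
      rw [hf, hf', hsplit]
      field_simp
      ring
    rw [hexpr]
    rw [abs_of_nonpos, hsplit]
    · field_simp
      ring
    · apply div_nonpos_of_nonneg_of_nonpos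
      · positivity
      · linarith
  refine ⟨?_, ?_, ?_, ?_, hνc, ?_⟩
  · rw [hf, Real.zero_rpow (by positivity)]; ring
  · rw [hf', Real.zero_rpow hp0.ne']; ring
  · intro t ht
    have h1 : HasDerivAt (fun x : ℝ => x ^ (p + 1)) ((p + 1) * t ^ (p + 1 - 1)) t := by
      apply Real.hasDerivAt_rpow_const
      right; linarith
    have h2 : HasDerivAt f (K / (p + 1) * ((p + 1) * t ^ (p + 1 - 1)) - 1) t := by
      have := ((h1.const_mul (K / (p + 1))).sub (hasDerivAt_id t))
      apply HasDerivAt.congr_deriv (this.congr_of_eventuallyEq ?_)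
      · rfl
      · filter_upwards with x
        rw [hf]; simp
    have : K / (p + 1) * ((p + 1) * t ^ (p + 1 - 1)) - 1 = f' t := by
      rw [hf']
      rw [show p + 1 - 1 = p by ring]
      field_simp
    rw [← this]
    exact h2.hasDerivWithinAt
  · intro x hx y hy hxy
    rw [hf', hf']
    have : x ^ p < y ^ p := Real.rpow_lt_rpow hx hxy hp0
    nlinarith
  · intro x hx y hy hxy
    show |x - f x / f' x| / x ^ (p + 1) < |y - f y / f' y| / y ^ (p + 1)
    rw [hval x hx, hval y hy]
    have h1 := hkey x hx
    have h2 := hkey y hy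
    apply div_lt_div_of_pos_left
    · positivity
    · linarith
    · have : x ^ p < y ^ p := Real.rpow_lt_rpow hx.1.le hxy hp0
      nlinarith
end

section
/- Let K > 0, 0 < p ≤ 1, λ ∈ [0,1), and f(t) = (K/(p+1))t^{p+1} - t. Then the constants ν and ρ defined via the Newton map n_f satisfy ρ = [(1-λ)(p+1)/(K(2p+1-λ))]^{1/p} < ν = (1/K)^{1/p}. -/
open Set

theorem stmt16 (K p lam : ℝ) (hK : 0 < K) (hp : p ∈ Ioc (0:ℝ) 1)
    (hlam : lam ∈ Ico (0:ℝ) 1)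
    (f f' : ℝ → ℝ)
    (hf : ∀ t, f t = K / (p + 1) * t ^ (p + 1) - t)
    (hf' : ∀ t, f' t = K * t ^ p - 1)
    (ν : ℝ) (hν : ν = sSup {t | 0 ≤ t ∧ f' t < 0})
    (ρ : ℝ)
    (hρ : ρ = sSup {δ | δ ∈ Ioo 0 ν ∧
      ∀ t ∈ Ioo 0 δ, (1 + lam) * |t - f t / f' t| / t + lam < 1}) :
    ρ = ((1 - lam) * (p + 1) / (K * (2 * p + 1 - lam))) ^ (1 / p) ∧
    ρ < ν ∧ ν = (1 / K) ^ (1 / p) := by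
  obtain ⟨hp0, hp1⟩ := hp
  obtain ⟨hl0, hl1⟩ := hlam
  have hp1' : (0:ℝ) < p + 1 := by linarith
  have h2p : (0:ℝ) < 2 * p + 1 - lam := by linarith
  set ν₀ : ℝ := (1 / K) ^ (1 / p) with hν₀
  set A : ℝ := (1 - lam) * (p + 1) / (K * (2 * p + 1 - lam)) with hA
  set ρ₀ : ℝ := A ^ (1 / p) with hρ₀
  have hApos : 0 < A := by
    apply div_pos (by nlinarith) (by positivity)
  have hν₀pos : 0 < ν₀ := Real.rpow_pos_of_pos (by positivity) _
  have hρ₀pos : 0 < ρ₀ := Real.rpow_pos_of_pos hApos _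
  have hAlt : A < 1 / K := by
    rw [div_lt_div_iff₀ (by positivity) hK]
    nlinarith [mul_pos hK hp0, mul_nonneg (mul_pos hK hp0).le hl0]
  have hρν : ρ₀ < ν₀ := by
    rw [hρ₀, hν₀]
    exact Real.rpow_lt_rpow hApos.le hAlt (by positivity)
  -- key rpow equivalence
  have key : ∀ t c : ℝ, 0 ≤ t → 0 ≤ c → (t < c ^ (1 / p) ↔ t ^ p < c) := by
    intro t c ht hc
    rw [one_div]
    exact Real.lt_rpow_inv_iff_of_pos ht hc hp0
  -- ν = ν₀
  have hset1 : {t | 0 ≤ t ∧ f' t < 0} = Ico 0 ν₀ := by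
    ext t
    simp only [mem_setOf_eq, mem_Ico, hf']
    constructor
    · rintro ⟨ht, hlt⟩
      refine ⟨ht, (key t (1/K) ht (by positivity)).mpr ?_⟩
      rw [lt_div_iff₀ hK]; linarith
    · rintro ⟨ht, hlt⟩
      refine ⟨ht, ?_⟩
      have := (key t (1/K) ht (by positivity)).mp hlt
      rw [lt_div_iff₀ hK] at this
      linarith
  have hνval : ν = ν₀ := by rw [hν, hset1, csSup_Ico hν₀pos]
  -- the condition rewritten
  have cond_iff : ∀ t : ℝ, 0 < t → t < ν₀ →
      ((1 + lam) * |t - f t / f' t| / t + lam < 1 ↔ t ^ p < A) := by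
    intro t ht htν
    have hs : 0 < t ^ p := Real.rpow_pos_of_pos ht p
    have hs1 : K * t ^ p < 1 := by
      have := (key t (1/K) ht.le (by positivity)).mp htν
      rw [lt_div_iff₀ hK] at this; linarith
    set s := t ^ p with hsdef
    have htp1 : t ^ (p + 1) = s * t := by
      rw [Real.rpow_add_one ht.ne' p]
    have hd : (0:ℝ) < 1 - K * s := by linarith
    have hq : t - f t / f' t = -(K * p * s * t / ((p + 1) * (1 - K * s))) := by
      have h1 : K * s - 1 ≠ 0 := by linarith
      have h2 : (p + 1) ≠ 0 := hp1'.ne'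
      rw [hf, hf', htp1, ← hsdef]
      field_simp
      ring
    have hqpos : 0 < K * p * s * t / ((p + 1) * (1 - K * s)) := by positivity
    rw [hq, abs_neg, abs_of_pos hqpos]
    rw [div_add' _ _ _ ht.ne', div_lt_one ht]
    rw [mul_div_assoc', div_add' _ _ _ (by positivity : ((p+1)*(1-K*s)) ≠ 0).symm.symm,
      div_lt_iff₀ (by positivity : (0:ℝ) < (p + 1) * (1 - K * s))]
    rw [hA, lt_div_iff₀ (by positivity)]
    constructor
    · intro h
      by_contra hc
      push_neg at hc
      nlinarith [mul_le_mul_of_nonneg_left hc ht.le]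
    · intro h
      nlinarith [mul_lt_mul_of_pos_left h ht]
  -- the ρ set
  have hset2 : {δ | δ ∈ Ioo 0 ν ∧
      ∀ t ∈ Ioo 0 δ, (1 + lam) * |t - f t / f' t| / t + lam < 1} = Ioc 0 ρ₀ := by
    rw [hνval]
    ext δ
    simp only [mem_setOf_eq, mem_Ioo, mem_Ioc]
    constructor
    · rintro ⟨⟨hδ0, hδν⟩, hall⟩
      refine ⟨hδ0, ?_⟩
      by_contra hcon
      push_neg at hcon
      set t := (ρ₀ + δ) / 2 with htdef
      have ht0 : 0 < t := by positivity
      have htδ : t < δ := by rw [htdef]; linarith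
      have htρ : ρ₀ < t := by rw [htdef]; linarith
      have := (cond_iff t ht0 (htδ.trans hδν)).mp (hall t ⟨ht0, htδ⟩)
      have := (key t A ht0.le hApos.le).mpr this
      rw [← hρ₀] at this
      linarith
    · rintro ⟨hδ0, hδρ⟩
      refine ⟨⟨hδ0, lt_of_le_of_lt hδρ hρν⟩, ?_⟩
      intro t ⟨ht0, htδ⟩
      have htρ : t < ρ₀ := lt_of_lt_of_le htδ hδρ
      exact (cond_iff t ht0 (htρ.trans hρν)).mpr
        ((key t A ht0.le hApos.le).mp htρ)
  have hρval : ρ = ρ₀ := by rw [hρ, hset2, csSup_Ioc hρ₀pos]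
  exact ⟨hρval, by rw [hρval, hνval]; exact hρν, hνval⟩
end

section
/- Let γ > 0 and define f:[0,1/γ)→ℝ by f(t) = t/(1-γt) - 2t. Then f(0)=0, f'(0)=-1, f' is strictly increasing (indeed convex), and the constants ν and ρ (for λ ∈ [0,1)) satisfy ν = (√2 - 1)/(√2 γ) and ρ = [5 - 3λ - √((5-3λ)² - 8(1-λ)²)]/(4(1-λ)γ), with ρ < ν < 1/γ. -/
open Set

set_option maxHeartbeats 2000000 in
theorem stmt17 (γ lam : ℝ) (hγ : 0 < γ) (hlam : lam ∈ Ico (0:ℝ) 1)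
    (f f' : ℝ → ℝ)
    (hf : ∀ t, f t = t / (1 - γ * t) - 2 * t)
    (hf' : ∀ t, f' t = 1 / (1 - γ * t) ^ 2 - 2)
    (ν : ℝ) (hν : ν = sSup {t | t ∈ Ico 0 (1 / γ) ∧ f' t < 0})
    (ρ : ℝ)
    (hρ : ρ = sSup {δ | δ ∈ Ioo 0 ν ∧
      ∀ t ∈ Ioo 0 δ, (1 + lam) * |t - f t / f' t| / t + lam < 1}) :
    f 0 = 0 ∧ f' 0 = -1 ∧
    (∀ t ∈ Ico (0:ℝ) (1 / γ), HasDerivWithinAt f (f' t) (Ico 0 (1 / γ)) t) ∧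
    StrictMonoOn f' (Ico 0 (1 / γ)) ∧
    ConvexOn ℝ (Ico 0 (1 / γ)) f' ∧
    ν = (Real.sqrt 2 - 1) / (Real.sqrt 2 * γ) ∧
    ρ = (5 - 3 * lam - Real.sqrt ((5 - 3 * lam) ^ 2 - 8 * (1 - lam) ^ 2)) /
        (4 * (1 - lam) * γ) ∧
    ρ < ν ∧ ν < 1 / γ := by
  obtain ⟨hlam0, hlam1⟩ := hlam
  have hγ' : (0:ℝ) < 1/γ := by positivity
  -- basic square root facts
  set w := Real.sqrt 2 with hw
  have hw2 : w^2 = 2 := Real.sq_sqrt (by norm_num)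
  have hw0 : 0 < w := Real.sqrt_pos.mpr (by norm_num)
  have hw1 : 1 < w := by nlinarith
  set v : ℝ := 1 - 1/w with hv
  have hv0 : 0 < v := by
    have : 1/w < 1 := by rw [div_lt_one hw0]; exact hw1
    rw [hv]; linarith
  have hv1 : v < 1 := by
    have : 0 < 1/w := by positivity
    rw [hv]; linarith
  have hDv : 2*v^2 - 4*v + 1 = 0 := by
    have hwne : w ≠ 0 := ne_of_gt hw0
    rw [hv]
    field_simp
    nlinarith
  have hwhalf : (1/w)^2 = 1/2 := by rw [div_pow, hw2, one_pow]
  -- the quadratic data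
  have hapos : (0:ℝ) < 1 - lam := by linarith
  have hbpos : (0:ℝ) < 5 - 3*lam := by linarith
  have hΔpos : (0:ℝ) < (5 - 3*lam)^2 - 8*(1-lam)^2 := by nlinarith
  set r : ℝ := Real.sqrt ((5 - 3 * lam) ^ 2 - 8 * (1 - lam) ^ 2) with hr
  have hr2 : r^2 = (5 - 3*lam)^2 - 8*(1-lam)^2 := Real.sq_sqrt (le_of_lt hΔpos)
  have hr0 : 0 < r := Real.sqrt_pos.mpr hΔpos
  have hrb : r < 5 - 3*lam := by nlinarith
  set um : ℝ := (5 - 3*lam - r) / (4*(1-lam)) with hum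
  set up : ℝ := (5 - 3*lam + r) / (4*(1-lam)) with hup
  clear_value w v r um up
  have hum0 : 0 < um := by
    rw [hum]
    exact div_pos (by linarith) (by linarith)
  have humup : um < up := by
    rw [hum, hup, div_lt_div_iff₀ (by linarith) (by linarith)]
    nlinarith
  have hane : (1:ℝ) - lam ≠ 0 := ne_of_gt hapos
  have hsum' : 2*(1-lam)*(um+up) = 5-3*lam := by
    rw [hum, hup]
    field_simp
    ring
  have hprod' : 2*(1-lam)*(um*up) = (1-lam) := by
    rw [hum, hup]
    field_simp
    linear_combination (-2)*hr2
  have key : ∀ u : ℝ, 2*(1-lam)*u^2 - (5-3*lam)*u + (1-lam)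
      = 2*(1-lam)*(u-um)*(u-up) := by
    intro u
    linear_combination u*hsum' - hprod'
  have hqv : 2*(1-lam)*v^2 - (5-3*lam)*v + (1-lam) = -(1+lam)*v := by
    linear_combination (1-lam) * hDv
  have humv : um < v := by
    by_contra h
    push_neg at h
    have h1 := key v
    rw [hqv] at h1
    have hnn : 0 ≤ (v-um)*(v-up) := by
      have he : (v-um)*(v-up) = (um-v)*(up-v) := by ring
      rw [he]
      exact mul_nonneg (by linarith) (by linarith)
    have h2 : 0 ≤ 2*(1-lam)*(v-um)*(v-up) := by
      rw [mul_assoc]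
      exact mul_nonneg (by linarith) hnn
    have h3 : 0 < (1+lam)*v := mul_pos (by linarith) hv0
    linarith
  have hvup : v < up := by
    by_contra h
    push_neg at h
    have h1 := key v
    rw [hqv] at h1
    have hnn : 0 ≤ (v-um)*(v-up) :=
      mul_nonneg (by linarith) (by linarith)
    have h2 : 0 ≤ 2*(1-lam)*(v-um)*(v-up) := by
      rw [mul_assoc]
      exact mul_nonneg (by linarith) hnn
    have h3 : 0 < (1+lam)*v := mul_pos (by linarith) hv0
    linarith
  -- helper: membership bound
  have hlt1γ : ∀ t : ℝ, t < 1/γ → 0 < 1 - γ*t := by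
    intro t ht
    have : γ * t < 1 := by
      calc γ * t < γ * (1/γ) := mul_lt_mul_of_pos_left ht hγ
        _ = 1 := by field_simp
    linarith
  -- 1: values at 0
  have hf0 : f 0 = 0 := by rw [hf]; norm_num
  have hf'0 : f' 0 = -1 := by rw [hf']; norm_num
  -- 2: derivative
  have hderiv : ∀ t ∈ Ico (0:ℝ) (1 / γ), HasDerivWithinAt f (f' t) (Ico 0 (1 / γ)) t := by
    intro t ht
    have hne : 1 - γ*t ≠ 0 := ne_of_gt (hlt1γ t ht.2)
    have h1 : HasDerivAt (fun t : ℝ => t/(1-γ*t)) (1/(1-γ*t)^2) t := by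
      have := (hasDerivAt_id t).div
        ((hasDerivAt_const t (1:ℝ)).sub ((hasDerivAt_id t).const_mul γ)) hne
      refine this.congr_deriv ?_
      simp only [Pi.sub_apply, id]
      field_simp
      ring
    have h2 := h1.sub ((hasDerivAt_id t).const_mul (2:ℝ))
    have hfe : f = fun t => t/(1-γ*t) - 2*t := funext hf
    rw [hfe, hf']
    have h3 : HasDerivAt (fun t => t/(1-γ*t) - 2*t) (1/(1-γ*t)^2 - 2) t := by
      exact h2.congr_deriv (by ring)
    exact h3.hasDerivWithinAt
  -- 3: strict monotonicity of f'
  have hmono : StrictMonoOn f' (Ico (0:ℝ) (1 / γ)) := by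
    intro x hx y hy hxy
    rw [hf', hf']
    have hx1 : 0 < 1 - γ*y := hlt1γ y hy.2
    have hxy1 : 1 - γ*y < 1 - γ*x := by
      have := mul_lt_mul_of_pos_left hxy hγ
      linarith
    have h1 : (1-γ*y)^2 < (1-γ*x)^2 := pow_lt_pow_left₀ hxy1 (le_of_lt hx1) (by norm_num)
    have h2 : (0:ℝ) < (1-γ*y)^2 := by positivity
    have h3 : (0:ℝ) < (1-γ*x)^2 := by
      have := hlt1γ x hx.2
      positivity
    have := one_div_lt_one_div_of_lt h2 h1
    linarith
  -- 4: convexity of f'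
  have hconv : ConvexOn ℝ (Ico (0:ℝ) (1 / γ)) f' := by
    have h1 := (convexOn_zpow (𝕜 := ℝ) (-2)).comp_affineMap (AffineMap.lineMap (1:ℝ) (1-γ))
    have hsub : Ico (0:ℝ) (1/γ) ⊆ (AffineMap.lineMap (1:ℝ) (1-γ)) ⁻¹' (Ioi 0) := by
      intro t ht
      simp only [mem_preimage, AffineMap.lineMap_apply, mem_Ioi, smul_eq_mul, vsub_eq_sub,
        vadd_eq_add]
      linarith [hlt1γ t ht.2]
    have h2 := (h1.subset hsub (convex_Ico _ _)).add (convexOn_const (-2:ℝ) (convex_Ico _ _))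
    have hfe : f' = (fun t => ((fun x : ℝ => x ^ (-2:ℤ)) ∘
        (AffineMap.lineMap (1:ℝ) (1-γ))) t + (fun _ : ℝ => (-2:ℝ)) t) := by
      funext t
      rw [hf']
      simp only [Function.comp_apply, AffineMap.lineMap_apply, smul_eq_mul, vsub_eq_sub,
        vadd_eq_add, zpow_neg]
      rw [show (1:ℝ) - γ*t = t * (1 - γ - 1) + 1 by ring]
      norm_num [zpow_two]
      ring_nf
    rw [hfe]
    exact h2
  -- 5: the set for ν is Ico 0 (v/γ)
  have hνset : {t | t ∈ Ico 0 (1 / γ) ∧ f' t < 0} = Ico 0 (v/γ) := by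
    ext t
    simp only [mem_setOf_eq, mem_Ico]
    constructor
    · rintro ⟨⟨ht0, htγ⟩, hneg⟩
      refine ⟨ht0, ?_⟩
      rw [hf'] at hneg
      have hs0 : 0 < 1 - γ*t := hlt1γ t htγ
      have hsq : (0:ℝ) < (1-γ*t)^2 := by positivity
      have h1 : 1 < 2*(1-γ*t)^2 := by
        have h5 : 1/(1-γ*t)^2 < 2 := by linarith
        rw [div_lt_iff₀ hsq] at h5
        linarith
      have h3 : (1/w)^2 < (1-γ*t)^2 := by rw [hwhalf]; linarith
      have h4 : 1/w < 1-γ*t := lt_of_pow_lt_pow_left₀ 2 (le_of_lt hs0) h3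
      rw [lt_div_iff₀ hγ, hv]
      linarith
    · rintro ⟨ht0, htv⟩
      have hvγ : v/γ < 1/γ := by
        rw [div_lt_div_iff₀ hγ hγ]
        have := mul_lt_mul_of_pos_right hv1 hγ
        linarith
      have htγ : t < 1/γ := lt_trans htv hvγ
      refine ⟨⟨ht0, htγ⟩, ?_⟩
      rw [hf']
      have hs0 : 0 < 1-γ*t := hlt1γ t htγ
      have hut : γ*t < v := by
        rw [lt_div_iff₀ hγ] at htv
        linarith
      have h4 : 1/w < 1-γ*t := by rw [hv] at hut; linarith
      have h3 : (1/w)^2 < (1-γ*t)^2 := pow_lt_pow_left₀ h4 (by positivity) (by norm_num)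
      rw [hwhalf] at h3
      have hsq : (0:ℝ) < (1-γ*t)^2 := by positivity
      have h5 : 1/(1-γ*t)^2 < 2 := by
        rw [div_lt_iff₀ hsq]
        linarith
      linarith
  have hvγ0 : 0 < v/γ := div_pos hv0 hγ
  have hνval : ν = v/γ := by
    rw [hν, hνset, csSup_Ico hvγ0]
  -- 6: the key equivalence for the Newton condition
  have hPiff : ∀ t : ℝ, 0 < t → t < v/γ →
      ((1 + lam) * |t - f t / f' t| / t + lam < 1 ↔ t < um/γ) := by
    intro t ht0 htv
    have hu0 : 0 < γ*t := by positivity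
    have huv : γ*t < v := by
      rw [lt_div_iff₀ hγ] at htv
      linarith
    have hs0 : 0 < 1 - γ*t := by linarith
    have hD : 0 < 1 - 4*(γ*t) + 2*(γ*t)^2 := by
      have hexp : 1 - 4*(γ*t) + 2*(γ*t)^2
          = 2*((v-γ*t)*(2-γ*t-v)) + (2*v^2-4*v+1) := by ring
      rw [hexp, hDv, add_zero]
      exact mul_pos (by norm_num) (mul_pos (by linarith) (by linarith))
    have hf'val : f' t = -(1 - 4*(γ*t) + 2*(γ*t)^2)/(1-γ*t)^2 := by
      rw [hf']
      have hne1 : (1:ℝ) - γ*t ≠ 0 := ne_of_gt hs0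
      field_simp
      ring
    have hf'neg : f' t < 0 := by
      rw [hf'val]
      apply div_neg_of_neg_of_pos (by linarith) (pow_pos hs0 2)
    have hval : t - f t / f' t = -(t*(γ*t)/(1 - 4*(γ*t) + 2*(γ*t)^2)) := by
      have hne1 : (1:ℝ) - γ*t ≠ 0 := ne_of_gt hs0
      have hne2 : (1:ℝ) - 4*(γ*t) + 2*(γ*t)^2 ≠ 0 := ne_of_gt hD
      have hne' : f' t ≠ 0 := ne_of_lt hf'neg
      have e1 : f t / f' t = t + t*(γ*t)/(1 - 4*(γ*t) + 2*(γ*t)^2) := by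
        rw [div_eq_iff hne', hf, hf'val]
        field_simp [hne1, hne2, show (1:ℝ) - t*γ ≠ 0 by rwa [mul_comm], show (1:ℝ) - t*γ*4 + t^2*γ^2*2 ≠ 0 by convert hne2 using 1; ring]
        ring
      rw [e1]
      ring
    have habs : |t - f t / f' t| = t*(γ*t)/(1 - 4*(γ*t) + 2*(γ*t)^2) := by
      rw [hval, abs_neg, abs_of_nonneg (div_nonneg (by positivity) (le_of_lt hD))]
    rw [habs]
    have hrw : (1 + lam) * (t*(γ*t)/(1 - 4*(γ*t) + 2*(γ*t)^2)) / t
        = ((1 + lam) * (γ*t))/(1 - 4*(γ*t) + 2*(γ*t)^2) := by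
      have hne2 : (1:ℝ) - 4*(γ*t) + 2*(γ*t)^2 ≠ 0 := ne_of_gt hD
      have htne : t ≠ 0 := ne_of_gt ht0
      field_simp
    rw [hrw, div_add' _ _ _ (ne_of_gt hD), div_lt_one hD]
    constructor
    · intro h
      have hq : 0 < 2*(1-lam)*(γ*t)^2 - (5-3*lam)*(γ*t) + (1-lam) := by linarith
      rw [key] at hq
      rw [lt_div_iff₀ hγ]
      by_contra hc
      push_neg at hc
      have hle : 2*(1-lam)*(γ*t-um)*(γ*t-up) ≤ 0 := by
        apply mul_nonpos_of_nonneg_of_nonpos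
        · exact mul_nonneg (by linarith) (by linarith)
        · linarith [lt_trans huv hvup]
      linarith
    · intro h
      rw [lt_div_iff₀ hγ] at h
      have h1 : γ*t < um := by linarith
      have h2 : γ*t < up := lt_trans huv hvup
      have hq : 0 < 2*(1-lam)*(γ*t)^2 - (5-3*lam)*(γ*t) + (1-lam) := by
        rw [key]
        have hpp : 0 < (um-γ*t)*(up-γ*t) := mul_pos (by linarith) (by linarith)
        have he : 2*(1-lam)*(γ*t-um)*(γ*t-up) = 2*(1-lam)*((um-γ*t)*(up-γ*t)) := by ring
        rw [he]
        exact mul_pos (by linarith) hpp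
      linarith
  -- 7: the set for ρ is Ioc 0 (um/γ)
  have humγ0 : 0 < um/γ := div_pos hum0 hγ
  have humvγ : um/γ < v/γ := by
    rw [div_lt_div_iff₀ hγ hγ]
    have := mul_lt_mul_of_pos_right humv hγ
    linarith
  have hρset : {δ | δ ∈ Ioo 0 ν ∧
      ∀ t ∈ Ioo 0 δ, (1 + lam) * |t - f t / f' t| / t + lam < 1} = Ioc 0 (um/γ) := by
    rw [hνval]
    ext δ
    simp only [mem_setOf_eq, mem_Ioo, mem_Ioc]
    constructor
    · rintro ⟨⟨hδ0, hδν⟩, hall⟩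
      refine ⟨hδ0, ?_⟩
      by_contra hc
      push_neg at hc
      have hin : um/γ ∈ Ioo (0:ℝ) δ := ⟨humγ0, hc⟩
      have := (hPiff (um/γ) humγ0 humvγ).mp (hall _ hin)
      exact lt_irrefl _ this
    · rintro ⟨hδ0, hδum⟩
      refine ⟨⟨hδ0, lt_of_le_of_lt hδum humvγ⟩, ?_⟩
      rintro t ⟨ht0, htδ⟩
      have htum : t < um/γ := lt_of_lt_of_le htδ hδum
      exact (hPiff t ht0 (lt_trans htum humvγ)).mpr htum
  have hρval : ρ = um/γ := by
    rw [hρ, hρset, csSup_Ioc humγ0]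
  -- assemble
  refine ⟨hf0, hf'0, hderiv, hmono, hconv, ?_, ?_, ?_, ?_⟩
  · rw [hνval, hv, div_eq_div_iff (ne_of_gt hγ) (ne_of_gt (mul_pos hw0 hγ))]
    field_simp
  · rw [hρval, hum, div_div]
  · rw [hρval, hνval]; exact humvγ
  · rw [hνval, div_lt_div_iff₀ hγ hγ]
    have := mul_lt_mul_of_pos_right hv1 hγ
    linarith
end
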